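/- arXiv:1505.02155 — 15 statements merged into one kernel-verified Lean document; each statement's English description precedes it below -/
import Mathlib

section
/- Let k ≥ 2 be an integer, let t_1,…,t_k be reals with 0 < t_1 ≤ t_2 ≤ ⋯ ≤ t_k, let C_k > 0, and let α > 0, β > 0. For each i = 1,…,k−1 let α_i, β_i, U_i be reals with 0 < α_i ≤ α, 0 < β_i ≤ β, and 0 < U_i ≤ 1. If C_k/t_k ≤ (α/β + 1)/(∏_{j=1}^{k−1} (β·U_j + 1)) − α/β, then there exists an index j ∈ {1,…,k} such that C_k + Σ_{i=1}^{k−1} α_i·t_i·U_i + Σ_{i=1}^{j−1} β_i·t_i·U_i ≤ t_j. -/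
/-- k²U framework, hyperbolic-bound lemma (Lemma 1). -/
theorem k2u_hyperbolic_bound (k : ℕ) (hk : 2 ≤ k)
    (t : ℕ → ℝ) (ht1 : 0 < t 1)
    (htmono : ∀ i j : ℕ, 1 ≤ i → i ≤ j → j ≤ k → t i ≤ t j)
    (Ck : ℝ) (hCk : 0 < Ck)
    (a b : ℝ) (ha : 0 < a) (hb : 0 < b)
    (α β U : ℕ → ℝ)
    (hα : ∀ i ∈ Finset.Icc 1 (k - 1), 0 < α i ∧ α i ≤ a)
    (hβ : ∀ i ∈ Finset.Icc 1 (k - 1), 0 < β i ∧ β i ≤ b)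
    (hU : ∀ i ∈ Finset.Icc 1 (k - 1), 0 < U i ∧ U i ≤ 1)
    (hcond : Ck / t k ≤
      (a / b + 1) / (∏ j ∈ Finset.Icc 1 (k - 1), (b * U j + 1)) - a / b) :
    ∃ j ∈ Finset.Icc 1 k,
      Ck + (∑ i ∈ Finset.Icc 1 (k - 1), α i * t i * U i)
        + (∑ i ∈ Finset.Icc 1 (j - 1), β i * t i * U i) ≤ t j := by
  by_contra hcon
  push_neg at hcon
  have htpos : ∀ i ∈ Finset.Icc 1 k, 0 < t i := by
    intro i hi
    simp only [Finset.mem_Icc] at hi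
    exact lt_of_lt_of_le ht1 (htmono 1 i le_rfl hi.1 hi.2)
  have hsub : Finset.Icc 1 (k-1) ⊆ Finset.Icc 1 k :=
    Finset.Icc_subset_Icc le_rfl (by omega)
  have htU : ∀ i ∈ Finset.Icc 1 (k-1), 0 < t i * U i := fun i hi =>
    mul_pos (htpos i (hsub hi)) (hU i hi).1
  set S := ∑ i ∈ Finset.Icc 1 (k - 1), t i * U i with hSdef
  have hS0 : 0 ≤ S := Finset.sum_nonneg fun i hi => (htU i hi).le
  set P : ℕ → ℝ := fun j : ℕ => ∏ i ∈ Finset.Icc 1 (j - 1), (b * U i + 1) with hPdef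
  set D : ℕ → ℝ := fun j : ℕ =>
    Ck + a * S + b * ∑ i ∈ Finset.Icc 1 (j - 1), t i * U i with hDdef
  have hD : ∀ j ∈ Finset.Icc 1 k, t j < D j := by
    intro j hj
    have hmem := Finset.mem_Icc.mp hj
    have hsub2 : Finset.Icc 1 (j-1) ⊆ Finset.Icc 1 (k-1) :=
      Finset.Icc_subset_Icc le_rfl (by omega)
    have h1 : ∑ i ∈ Finset.Icc 1 (k - 1), α i * t i * U i ≤ a * S := by
      rw [hSdef, Finset.mul_sum]
      refine Finset.sum_le_sum fun i hi => ?_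
      nlinarith [(htU i hi).le, (hα i hi).2]
    have h2 : ∑ i ∈ Finset.Icc 1 (j - 1), β i * t i * U i ≤
        b * ∑ i ∈ Finset.Icc 1 (j - 1), t i * U i := by
      rw [Finset.mul_sum]
      refine Finset.sum_le_sum fun i hi => ?_
      nlinarith [(htU i (hsub2 hi)).le, (hβ i (hsub2 hi)).2]
    have := hcon j hj
    simp only [hDdef]
    linarith
  have hPpos : ∀ j ≤ k, 0 < P j := by
    intro j hjk
    refine Finset.prod_pos fun i hi => ?_
    have hi' : i ∈ Finset.Icc 1 (k-1) :=
      Finset.Icc_subset_Icc le_rfl (by omega) hi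
    nlinarith [(hU i hi').1]
  have hCS : 0 < Ck + a * S := by positivity
  have hind : ∀ j, 1 ≤ j → j ≤ k → D j ≤ (Ck + a * S) * P j := by
    intro j
    induction j with
    | zero => omega
    | succ n ih =>
      intro _ hjk
      rcases Nat.eq_zero_or_pos n with hn | hn
      · subst hn
        simp [hDdef, hPdef]
      · obtain ⟨m, rfl⟩ : ∃ m, n = m + 1 := ⟨n - 1, by omega⟩
        have ihn := ih (by omega) (by omega)
        have hsum : ∑ i ∈ Finset.Icc 1 (m + 1), t i * U i
            = (∑ i ∈ Finset.Icc 1 m, t i * U i) + t (m+1) * U (m+1) :=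
          Finset.sum_Icc_succ_top (by omega) _
        have hprod : ∏ i ∈ Finset.Icc 1 (m + 1), (b * U i + 1)
            = (∏ i ∈ Finset.Icc 1 m, (b * U i + 1)) * (b * U (m+1) + 1) :=
          Finset.prod_Icc_succ_top (by omega) _
        have hDstep : D (m + 2) = D (m + 1) + b * (t (m+1) * U (m+1)) := by
          simp only [hDdef]
          norm_num [hsum]
          ring
        have hPstep : P (m + 2) = P (m + 1) * (b * U (m+1) + 1) := by
          simp only [hPdef]
          norm_num [hprod]
        have hm1k : m + 1 ∈ Finset.Icc 1 k := Finset.mem_Icc.mpr ⟨by omega, by omega⟩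
        have hm1k1 : m + 1 ∈ Finset.Icc 1 (k-1) := Finset.mem_Icc.mpr ⟨by omega, by omega⟩
        have htD := hD (m+1) hm1k
        have hUpos := (hU (m+1) hm1k1).1
        have hPp : 0 < P (m+1) := hPpos (m+1) (by omega)
        rw [hDstep, hPstep]
        nlinarith [mul_pos hb hUpos, mul_le_mul_of_nonneg_right ihn
            (le_of_lt (by positivity : (0:ℝ) < b * U (m+1) + 1)),
          mul_lt_mul_of_pos_right htD (mul_pos hb hUpos),
          mul_le_mul_of_nonneg_right ihn (mul_pos hb hUpos).le]
  -- Key quantities at j = k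
  have hkk : k ∈ Finset.Icc 1 k := Finset.mem_Icc.mpr ⟨by omega, le_rfl⟩
  have htkpos : 0 < t k := htpos k hkk
  have hA : t k < Ck + (a + b) * S := by
    have := hD k hkk
    simp only [hDdef] at this
    rw [← hSdef] at this
    linarith
  have hB : Ck + (a + b) * S ≤ (Ck + a * S) * P k := by
    have h1 := hind k (by omega) le_rfl
    simp only [hDdef] at h1
    rw [← hSdef] at h1
    linarith
  have hPk : 0 < P k := hPpos k le_rfl
  -- hcond rewritten
  have hkey : b * P k * Ck ≤ t k * (a + b - a * P k) := by
    have hPkeq : (∏ j ∈ Finset.Icc 1 (k - 1), (b * U j + 1)) = P k := rfl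
    rw [hPkeq] at hcond
    have hbne : b ≠ 0 := ne_of_gt hb
    have htne : t k ≠ 0 := ne_of_gt htkpos
    have hPne : P k ≠ 0 := ne_of_gt hPk
    rw [div_le_iff₀ htkpos] at hcond
    have h3 := mul_le_mul_of_nonneg_left hcond (mul_pos hb hPk).le
    have h4 : b * P k * (((a / b + 1) / P k - a / b) * t k)
        = t k * (a + b - a * P k) := by
      field_simp
    rw [h4] at h3
    linarith
  rcases le_or_gt (a + b - a * P k) 0 with hE | hE
  · nlinarith [mul_pos (mul_pos hb hPk) hCk, mul_nonpos_of_nonneg_of_nonpos htkpos.le hE]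
  · -- S * E ≤ Ck * (P k - 1), then contradiction
    have hSE : S * (a + b - a * P k) ≤ Ck * (P k - 1) := by nlinarith [hB]
    nlinarith [mul_lt_mul_of_pos_right hA hE, hSE, hkey,
      mul_le_mul_of_nonneg_left hSE (by linarith : (0:ℝ) ≤ a + b)]
end

section
/- Let k ≥ 2 be an integer, let t_1,…,t_k be reals with 0 < t_1 ≤ t_2 ≤ ⋯ ≤ t_k, let C_k > 0, and let α > 0, β > 0. For each i = 1,…,k−1 let α_i, β_i, U_i be reals with 0 < α_i ≤ α, 0 < β_i ≤ β, and 0 < U_i ≤ 1. If β·Σ_{i=1}^{k−1} U_i ≤ ln((α/β + 1)/(C_k/t_k + α/β)), then there exists an index j ∈ {1,…,k} such that C_k + Σ_{i=1}^{k−1} α_i·t_i·U_i + Σ_{i=1}^{j−1} β_i·t_i·U_i ≤ t_j. -/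
/-- k²U framework, logarithmic utilization-bound lemma (Lemma 3). -/
theorem k2u_log_utilization_bound (k : ℕ) (hk : 2 ≤ k)
    (t : ℕ → ℝ) (ht1 : 0 < t 1)
    (htmono : ∀ i j : ℕ, 1 ≤ i → i ≤ j → j ≤ k → t i ≤ t j)
    (Ck : ℝ) (hCk : 0 < Ck)
    (a b : ℝ) (ha : 0 < a) (hb : 0 < b)
    (α β U : ℕ → ℝ)
    (hα : ∀ i ∈ Finset.Icc 1 (k - 1), 0 < α i ∧ α i ≤ a)
    (hβ : ∀ i ∈ Finset.Icc 1 (k - 1), 0 < β i ∧ β i ≤ b)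
    (hU : ∀ i ∈ Finset.Icc 1 (k - 1), 0 < U i ∧ U i ≤ 1)
    (hcond : b * (∑ i ∈ Finset.Icc 1 (k - 1), U i) ≤
      Real.log ((a / b + 1) / (Ck / t k + a / b))) :
    ∃ j ∈ Finset.Icc 1 k,
      Ck + (∑ i ∈ Finset.Icc 1 (k - 1), α i * t i * U i)
        + (∑ i ∈ Finset.Icc 1 (j - 1), β i * t i * U i) ≤ t j := by
  by_contra hcon
  push_neg at hcon
  have htk : 0 < t k := lt_of_lt_of_le ht1 (htmono 1 k le_rfl (by omega) le_rfl)
  have htpos : ∀ i ∈ Finset.Icc 1 (k - 1), 0 < t i := by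
    intro i hi
    rw [Finset.mem_Icc] at hi
    exact lt_of_lt_of_le ht1 (htmono 1 i le_rfl hi.1 (le_trans hi.2 (Nat.sub_le k 1)))
  set P := ∑ i ∈ Finset.Icc 1 (k - 1), t i * U i with hP
  set Q := ∑ i ∈ Finset.Icc 1 (k - 1), U i with hQ
  have hPpos : 0 ≤ P := Finset.sum_nonneg fun i hi =>
    le_of_lt (mul_pos (htpos i hi) (hU i hi).1)
  -- Step A: each t j is dominated by the relaxed (a,b) expression
  have htj : ∀ j, 1 ≤ j → j ≤ k →
      t j < Ck + a * P + b * ∑ i ∈ Finset.Icc 1 (j - 1), t i * U i := by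
    intro j hj1 hjk
    have hsub : Finset.Icc 1 (j - 1) ⊆ Finset.Icc 1 (k - 1) :=
      Finset.Icc_subset_Icc le_rfl (Nat.sub_le_sub_right hjk 1)
    have h1 : ∑ i ∈ Finset.Icc 1 (k - 1), α i * t i * U i ≤ a * P := by
      rw [hP, Finset.mul_sum]
      refine Finset.sum_le_sum fun i hi => ?_
      have hai := hα i hi
      have ht := htpos i hi
      have hu := (hU i hi).1
      nlinarith [hai.2, mul_pos ht hu]
    have h2 : ∑ i ∈ Finset.Icc 1 (j - 1), β i * t i * U i ≤
        b * ∑ i ∈ Finset.Icc 1 (j - 1), t i * U i := by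
      rw [Finset.mul_sum]
      refine Finset.sum_le_sum fun i hi => ?_
      have hi' := hsub hi
      have hbi := hβ i hi'
      have ht := htpos i hi'
      have hu := (hU i hi').1
      nlinarith [hbi.2, mul_pos ht hu]
    have := hcon j (Finset.mem_Icc.mpr ⟨hj1, hjk⟩)
    linarith
  -- Step B: multiplicative bound by induction
  have key : ∀ j, 1 ≤ j → j ≤ k →
      Ck + a * P + b * ∑ i ∈ Finset.Icc 1 (j - 1), t i * U i ≤
        (Ck + a * P) * ∏ i ∈ Finset.Icc 1 (j - 1), (1 + b * U i) := by
    intro j hj1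
    induction j, hj1 using Nat.le_induction with
    | base => intro _; simp
    | succ n hn ih =>
      intro hnk
      obtain ⟨m, rfl⟩ : ∃ m, n = m + 1 := ⟨n - 1, (Nat.succ_pred_eq_of_pos hn).symm⟩
      have hnk' : m + 1 ≤ k := by omega
      have hmem : m + 1 ∈ Finset.Icc 1 (k - 1) := Finset.mem_Icc.mpr ⟨by omega, by omega⟩
      have htn := htj (m + 1) hn hnk'
      have ihn := ih hnk'
      have hUn := (hU (m + 1) hmem).1
      simp only [Nat.add_sub_cancel] at ihn htn ⊢
      rw [Finset.sum_Icc_succ_top (by omega : 1 ≤ m + 1),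
          Finset.prod_Icc_succ_top (by omega : 1 ≤ m + 1)]
      nlinarith [mul_pos hb hUn,
        mul_le_mul_of_nonneg_right ihn
          (by nlinarith [mul_pos hb hUn] : (0:ℝ) ≤ 1 + b * U (m + 1)),
        mul_lt_mul_of_pos_right htn (mul_pos hb hUn)]
  -- Step C: product ≤ exp
  have hprod : ∏ i ∈ Finset.Icc 1 (k - 1), (1 + b * U i) ≤ Real.exp (b * Q) := by
    calc ∏ i ∈ Finset.Icc 1 (k - 1), (1 + b * U i)
        ≤ ∏ i ∈ Finset.Icc 1 (k - 1), Real.exp (b * U i) := by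
          refine Finset.prod_le_prod (fun i hi => ?_) (fun i hi => ?_)
          · nlinarith [mul_pos hb (hU i hi).1]
          · have := Real.add_one_le_exp (b * U i)
            linarith
      _ = Real.exp (∑ i ∈ Finset.Icc 1 (k - 1), b * U i) := (Real.exp_sum _ _).symm
      _ = Real.exp (b * Q) := by rw [hQ, Finset.mul_sum]
  -- Step D: turn the log condition into a usable inequality
  have hD : 0 < Ck / t k + a / b := add_pos (div_pos hCk htk) (div_pos ha hb)
  have hN : (0:ℝ) < a / b + 1 := by positivity
  have hER : Real.exp (b * Q) ≤ (a / b + 1) / (Ck / t k + a / b) := by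
    calc Real.exp (b * Q)
        ≤ Real.exp (Real.log ((a / b + 1) / (Ck / t k + a / b))) :=
          Real.exp_le_exp.mpr hcond
      _ = (a / b + 1) / (Ck / t k + a / b) := Real.exp_log (div_pos hN hD)
  have hE' : Real.exp (b * Q) * (b * Ck + a * t k) ≤ (a + b) * t k := by
    have h1 : Real.exp (b * Q) * (Ck / t k + a / b) ≤ a / b + 1 :=
      (le_div_iff₀ hD).mp hER
    have h2 := mul_le_mul_of_nonneg_right h1 (le_of_lt (mul_pos hb htk))
    have e1 : Real.exp (b * Q) * (Ck / t k + a / b) * (b * t k)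
        = Real.exp (b * Q) * (b * Ck + a * t k) := by
      field_simp
    have e2 : (a / b + 1) * (b * t k) = (a + b) * t k := by
      field_simp
    rw [e1, e2] at h2
    exact h2
  -- Step E: combine everything
  have h1 : t k < Ck + a * P + b * P := by
    have h := htj k (by omega) le_rfl
    rwa [← hP] at h
  have h2 : Ck + a * P + b * P ≤ (Ck + a * P) * Real.exp (b * Q) := by
    have hk1 := key k (by omega) le_rfl
    rw [← hP] at hk1
    have hS1 : (0:ℝ) ≤ Ck + a * P := by nlinarith
    calc Ck + a * P + b * P
        ≤ (Ck + a * P) * ∏ i ∈ Finset.Icc 1 (k - 1), (1 + b * U i) := hk1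
      _ ≤ (Ck + a * P) * Real.exp (b * Q) := mul_le_mul_of_nonneg_left hprod hS1
  have h4 : (Ck + a * P + b * P) * (b * Ck + a * t k)
      ≤ (Ck + a * P) * ((a + b) * t k) := by
    have hnn : (0:ℝ) ≤ b * Ck + a * t k := by positivity
    calc (Ck + a * P + b * P) * (b * Ck + a * t k)
        ≤ ((Ck + a * P) * Real.exp (b * Q)) * (b * Ck + a * t k) :=
          mul_le_mul_of_nonneg_right h2 hnn
      _ = (Ck + a * P) * (Real.exp (b * Q) * (b * Ck + a * t k)) := by ring
      _ ≤ (Ck + a * P) * ((a + b) * t k) :=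
          mul_le_mul_of_nonneg_left hE' (by nlinarith)
  nlinarith [h4, mul_pos (mul_pos hb hCk) (sub_pos.mpr h1), hPpos]
end

section
/- Let k ≥ 2 be an integer, let t_1,…,t_k be reals with 0 < t_1 ≤ t_2 ≤ ⋯ ≤ t_k, and let C_k > 0. For each i = 1,…,k−1 let α_i, β_i, U_i be reals with α_i > 0, β_i > 0, and 0 < U_i ≤ 1. If 0 < C_k/t_k ≤ 1 − Σ_{i=1}^{k−1} ( U_i·(α_i + β_i) / ∏_{j=i}^{k−1} (β_j·U_j + 1) ), then there exists an index j ∈ {1,…,k} such that C_k + Σ_{i=1}^{k−1} α_i·t_i·U_i + Σ_{i=1}^{j−1} β_i·t_i·U_i ≤ t_j. -/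
open Finset

lemma k2u_Icc_bot_insert (m nn : ℕ) (h : m ≤ nn) :
    Finset.Icc m nn = insert m (Finset.Icc (m+1) nn) := by
  ext x; simp [Finset.mem_Icc]; omega

lemma k2u_sum_Icc_bot (f : ℕ → ℝ) {m nn : ℕ} (h : m ≤ nn) :
    ∑ i ∈ Finset.Icc m nn, f i = f m + ∑ i ∈ Finset.Icc (m+1) nn, f i := by
  rw [k2u_Icc_bot_insert m nn h, Finset.sum_insert (by simp)]

lemma k2u_prod_Icc_bot (f : ℕ → ℝ) {m nn : ℕ} (h : m ≤ nn) :
    ∏ i ∈ Finset.Icc m nn, f i = f m * ∏ i ∈ Finset.Icc (m+1) nn, f i := by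
  rw [k2u_Icc_bot_insert m nn h, Finset.prod_insert (by simp)]

lemma k2u_tele (c : ℕ → ℝ) :
    ∀ nn : ℕ, (∀ j, 1 ≤ j → j ≤ nn → 0 < c j) → ∀ m, 1 ≤ m →
    ∑ i ∈ Finset.Icc m nn, c i / ∏ j ∈ Finset.Icc i nn, (c j + 1)
      = 1 - 1 / ∏ j ∈ Finset.Icc m nn, (c j + 1) := by
  intro nn
  induction nn with
  | zero =>
      intro _ m hm
      rw [Finset.Icc_eq_empty (by omega)]
      simp
  | succ nn ih =>
      intro hpos m hm
      by_cases hmn : m ≤ nn + 1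
      · have hc : 0 < c (nn+1) + 1 := by
          have := hpos (nn+1) (by omega) le_rfl; linarith
        have hP : 0 < ∏ j ∈ Finset.Icc m nn, (c j + 1) := by
          apply Finset.prod_pos
          intro j hj
          have hj' := Finset.mem_Icc.mp hj
          have := hpos j (by omega) (by omega); linarith
        rw [Finset.sum_Icc_succ_top hmn, Finset.prod_Icc_succ_top hmn]
        have hterm : ∀ i ∈ Finset.Icc m nn,
            c i / ∏ j ∈ Finset.Icc i (nn+1), (c j + 1)
              = (c i / ∏ j ∈ Finset.Icc i nn, (c j + 1)) / (c (nn+1) + 1) := by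
          intro i hi
          have hi' := Finset.mem_Icc.mp hi
          rw [Finset.prod_Icc_succ_top (by omega : i ≤ nn + 1), ← div_div]
        rw [Finset.sum_congr rfl hterm, ← Finset.sum_div,
          ih (fun j h1 h2 => hpos j h1 (by omega)) m hm]
        rw [Finset.Icc_self (nn+1), Finset.prod_singleton]
        field_simp
        ring
      · rw [Finset.Icc_eq_empty (by omega)]
        simp

/-- k²U framework, general per-coefficient extreme-point lemma (Lemma 4). -/
theorem k2u_general_extreme_point (k : ℕ) (hk : 2 ≤ k)
    (t : ℕ → ℝ) (ht1 : 0 < t 1)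
    (htmono : ∀ i j : ℕ, 1 ≤ i → i ≤ j → j ≤ k → t i ≤ t j)
    (Ck : ℝ) (hCk : 0 < Ck)
    (α β U : ℕ → ℝ)
    (hα : ∀ i ∈ Finset.Icc 1 (k - 1), 0 < α i)
    (hβ : ∀ i ∈ Finset.Icc 1 (k - 1), 0 < β i)
    (hU : ∀ i ∈ Finset.Icc 1 (k - 1), 0 < U i ∧ U i ≤ 1)
    (hpos : 0 < Ck / t k)
    (hcond : Ck / t k ≤ 1 - ∑ i ∈ Finset.Icc 1 (k - 1),
      U i * (α i + β i) / ∏ j ∈ Finset.Icc i (k - 1), (β j * U j + 1)) :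
    ∃ j ∈ Finset.Icc 1 k,
      Ck + (∑ i ∈ Finset.Icc 1 (k - 1), α i * t i * U i)
        + (∑ i ∈ Finset.Icc 1 (j - 1), β i * t i * U i) ≤ t j := by
  obtain ⟨n, rfl⟩ : ∃ n, k = n + 1 := ⟨k - 1, by omega⟩
  have hn : 1 ≤ n := by omega
  simp only [Nat.add_sub_cancel] at hα hβ hU hcond ⊢
  -- basic positivity facts
  have htk : 0 < t (n + 1) := by
    rcases div_pos_iff.mp hpos with ⟨_, h⟩ | ⟨h, _⟩
    · exact h
    · linarith
  have hQpos : ∀ m, 1 ≤ m → 0 < ∏ j ∈ Finset.Icc m n, (β j * U j + 1) := by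
    intro m h1
    apply Finset.prod_pos
    intro j hj
    have hj' := Finset.mem_Icc.mp hj
    have hβj := hβ j (Finset.mem_Icc.mpr ⟨by omega, hj'.2⟩)
    have hUj := (hU j (Finset.mem_Icc.mpr ⟨by omega, hj'.2⟩)).1
    nlinarith
  set vk : ℝ := 1 - ∑ i ∈ Finset.Icc 1 n,
      U i * (α i + β i) / ∏ j ∈ Finset.Icc i n, (β j * U j + 1) with hvkdef
  have hvkpos : 0 < vk := lt_of_lt_of_le hpos hcond
  have hCkle : Ck ≤ vk * t (n + 1) := (div_le_iff₀ htk).mp hcond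
  set W : ℕ → ℝ := fun m => (∏ j ∈ Finset.Icc m n, (β j * U j + 1)) *
      (vk + ∑ j ∈ Finset.Icc m n,
        U j * α j / ∏ l ∈ Finset.Icc j n, (β l * U l + 1)) with hWdef
  set v : ℕ → ℝ := fun m => U m * (α m + β m * W (m + 1)) with hvdef
  have hWnn : ∀ m, 1 ≤ m → 0 ≤ W m := by
    intro m h1
    have hs : 0 ≤ ∑ j ∈ Finset.Icc m n,
        U j * α j / ∏ l ∈ Finset.Icc j n, (β l * U l + 1) := by
      apply Finset.sum_nonneg
      intro j hj
      have hj' := Finset.mem_Icc.mp hj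
      have hαj := hα j (Finset.mem_Icc.mpr ⟨by omega, hj'.2⟩)
      have hUj := (hU j (Finset.mem_Icc.mpr ⟨by omega, hj'.2⟩)).1
      exact div_nonneg (by nlinarith) (hQpos j (by omega)).le
    have := hQpos m h1
    simp only [hWdef]
    nlinarith
  have hvnn : ∀ m, 1 ≤ m → m ≤ n → 0 ≤ v m := by
    intro m h1 h2
    have hαm := hα m (Finset.mem_Icc.mpr ⟨h1, h2⟩)
    have hβm := hβ m (Finset.mem_Icc.mpr ⟨h1, h2⟩)
    have hUm := (hU m (Finset.mem_Icc.mpr ⟨h1, h2⟩)).1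
    have hw := hWnn (m + 1) (by omega)
    simp only [hvdef]
    exact mul_nonneg hUm.le (add_nonneg hαm.le (mul_nonneg hβm.le hw))
  have hWk : W (n + 1) = vk := by
    simp [hWdef, Finset.Icc_eq_empty (by omega : ¬ (n + 1 : ℕ) ≤ n)]
  have hWrec : ∀ m, 1 ≤ m → m ≤ n → W m = v m + W (m + 1) := by
    intro m h1 h2
    have hQm1 : (0:ℝ) < ∏ j ∈ Finset.Icc (m+1) n, (β j * U j + 1) := hQpos (m+1) (by omega)
    have hβm := hβ m (Finset.mem_Icc.mpr ⟨h1, h2⟩)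
    have hUm := (hU m (Finset.mem_Icc.mpr ⟨h1, h2⟩)).1
    have hfac : 0 < β m * U m + 1 := by nlinarith
    simp only [hWdef, hvdef]
    rw [k2u_sum_Icc_bot (fun j => U j * α j / ∏ l ∈ Finset.Icc j n, (β l * U l + 1)) h2]
    rw [k2u_prod_Icc_bot (fun j => β j * U j + 1) h2]
    field_simp
    ring
  have hW1 : W 1 = 1 := by
    have hB : ∑ i ∈ Finset.Icc 1 n, β i * U i / ∏ j ∈ Finset.Icc i n, (β j * U j + 1)
        = 1 - 1 / ∏ j ∈ Finset.Icc 1 n, (β j * U j + 1) := by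
      have := k2u_tele (fun j => β j * U j) n (fun j h1 h2 => by
        have hβj := hβ j (Finset.mem_Icc.mpr ⟨h1, h2⟩)
        have hUj := (hU j (Finset.mem_Icc.mpr ⟨h1, h2⟩)).1
        exact mul_pos hβj hUj) 1 le_rfl
      simpa using this
    have hsplit : ∑ i ∈ Finset.Icc 1 n, U i * (α i + β i) / ∏ j ∈ Finset.Icc i n, (β j * U j + 1)
        = (∑ i ∈ Finset.Icc 1 n, U i * α i / ∏ j ∈ Finset.Icc i n, (β j * U j + 1))
          + ∑ i ∈ Finset.Icc 1 n, β i * U i / ∏ j ∈ Finset.Icc i n, (β j * U j + 1) := by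
      rw [← Finset.sum_add_distrib]
      apply Finset.sum_congr rfl
      intro i hi
      rw [mul_add, add_div, mul_comm (U i) (β i)]
    have hQ1 : (0:ℝ) < ∏ j ∈ Finset.Icc 1 n, (β j * U j + 1) := hQpos 1 le_rfl
    have hkey : vk + ∑ j ∈ Finset.Icc 1 n, U j * α j / ∏ l ∈ Finset.Icc j n, (β l * U l + 1)
        = 1 / ∏ j ∈ Finset.Icc 1 n, (β j * U j + 1) := by
      rw [hvkdef, hsplit, hB]; ring
    simp only [hWdef]
    rw [hkey]
    field_simp
  by_contra hno
  push_neg at hno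
  set A := ∑ i ∈ Finset.Icc 1 n, α i * t i * U i with hAdef
  have key : ∀ d, d ≤ n → vk * t (n+1) + ∑ j ∈ Finset.Icc (n-d+1) n, v j * t j
      < W (n-d+1) * (Ck + A + ∑ i ∈ Finset.Icc 1 (n-d), β i * t i * U i)
        + ∑ i ∈ Finset.Icc (n-d+1) n, β i * U i * t i * W (i+1) := by
    intro d
    induction d with
    | zero =>
        intro _
        have h4 := hno (n+1) (Finset.mem_Icc.mpr ⟨by omega, le_rfl⟩)
        simp only [Nat.add_sub_cancel] at h4
        rw [Nat.sub_zero, Finset.Icc_eq_empty (by omega : ¬ (n+1 : ℕ) ≤ n)]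
        simp only [Finset.sum_empty, add_zero]
        rw [hWk]
        have := mul_pos hvkpos (sub_pos.mpr h4)
        nlinarith [this]
    | succ d ihd =>
        intro hd
        have ihd' := ihd (by omega)
        set m := n - (d+1) with hmdef
        have hmn : m + 1 ≤ n := by omega
        have hnd : n - d = m + 1 := by omega
        rw [hnd] at ihd'
        have h1 : ∑ i ∈ Finset.Icc 1 (m+1), β i * t i * U i
            = (∑ i ∈ Finset.Icc 1 m, β i * t i * U i) + β (m+1) * t (m+1) * U (m+1) :=
          Finset.sum_Icc_succ_top (by omega) _
        have h2 : ∑ j ∈ Finset.Icc (m+1) n, v j * t j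
            = v (m+1) * t (m+1) + ∑ j ∈ Finset.Icc (m+1+1) n, v j * t j :=
          k2u_sum_Icc_bot (fun j => v j * t j) hmn
        have h3 : ∑ i ∈ Finset.Icc (m+1) n, β i * U i * t i * W (i+1)
            = β (m+1) * U (m+1) * t (m+1) * W (m+1+1)
              + ∑ i ∈ Finset.Icc (m+1+1) n, β i * U i * t i * W (i+1) :=
          k2u_sum_Icc_bot (fun i => β i * U i * t i * W (i+1)) hmn
        have h4 : t (m+1) < Ck + A + ∑ i ∈ Finset.Icc 1 m, β i * t i * U i := by
          have := hno (m+1) (Finset.mem_Icc.mpr ⟨by omega, by omega⟩)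
          simpa using this
        have h5 : W (m+1) = v (m+1) + W (m+1+1) := hWrec (m+1) (by omega) hmn
        have h6 : 0 ≤ v (m+1) := hvnn (m+1) (by omega) hmn
        have h7 : 0 ≤ W (m+1+1) := hWnn (m+1+1) (by omega)
        have h8 : v (m+1) * t (m+1)
            ≤ v (m+1) * (Ck + A + ∑ i ∈ Finset.Icc 1 m, β i * t i * U i) :=
          mul_le_mul_of_nonneg_left h4.le h6
        rw [h1] at ihd'
        rw [h2, h3, h5]
        nlinarith [ihd', h8]
  have final := key n le_rfl
  rw [Nat.sub_self] at final
  have e0 : Finset.Icc 1 0 = (∅ : Finset ℕ) := Finset.Icc_eq_empty (by omega)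
  simp only [zero_add, e0, Finset.sum_empty, add_zero] at final
  rw [hW1, one_mul] at final
  have hexp : ∑ j ∈ Finset.Icc 1 n, v j * t j
      = A + ∑ i ∈ Finset.Icc 1 n, β i * U i * t i * W (i+1) := by
    rw [hAdef, ← Finset.sum_add_distrib]
    apply Finset.sum_congr rfl
    intro i hi
    simp only [hvdef]
    ring
  rw [hexp] at final
  linarith [hCkle, final]
end

section
/- Let k ≥ 2 be an integer, let t_1,…,t_k be reals with 0 ≤ t_1 ≤ t_2 ≤ ⋯ ≤ t_{k−1} ≤ t_k and t_k > 0, and let C_k > 0. For each i = 1,…,k−1 let α_i > 0, β_i > 0, U_i > 0, and C_i ≥ 0 be reals, and assume Σ_{i=1}^{k−1} α_i·U_i ≤ 1 and Σ_{i=1}^{k−1} β_i·C_i ≤ t_k. If C_k/t_k ≤ 1 − Σ_{i=1}^{k−1} α_i·U_i − (Σ_{i=1}^{k−1} ( β_i·C_i − α_i·U_i·(Σ_{ℓ=i}^{k−1} β_ℓ·C_ℓ) ))/t_k, then there exists an index j ∈ {1,…,k} such that C_k + Σ_{i=1}^{k−1} α_i·t_i·U_i + Σ_{i=1}^{j−1}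 β_i·C_i ≤ t_j. -/
/-!
Clearing the denominator `t k` in the hypothesis and rewriting each suffix sum
`∑_{ℓ ≥ i} β ℓ C ℓ` as the total minus a prefix sum turns it into the statement that a
convex combination of the slacks `t j - (C_k + ∑ α i t i U i + ∑_{i < j} β i C i)`, with weight
`α j U j` for `j < k` and `1 - ∑ α i U i` for `j = k`, is nonnegative. Hence some slack is
nonnegative.
-/

open Finset

theorem exists_nonneg_of_sum_mul_nonneg {𝕜 ι : Type*} [Field 𝕜] [LinearOrder 𝕜]
    [IsStrictOrderedRing 𝕜] {s : Finset ι} {w p : ι → 𝕜} (hw₀ : ∀ i ∈ s, 0 ≤ w i)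
    (hw₁ : 0 < ∑ i ∈ s, w i) (h : 0 ≤ ∑ i ∈ s, w i * p i) : ∃ i ∈ s, 0 ≤ p i := by
  obtain ⟨i, hi, hle⟩ := (convexOn_id convex_univ).exists_ge_of_centerMass hw₀ hw₁
    (p := p) fun _ _ ↦ Set.mem_univ _
  exact ⟨i, hi, le_trans (mul_nonneg (inv_nonneg.2 hw₁.le) h) hle⟩

theorem sum_Icc_one_pred_add_sum_Icc {M : Type*} [AddCommMonoid M] (f : ℕ → M) {i n : ℕ}
    (hi : 1 ≤ i) (hin : i ≤ n + 1) :
    ∑ ℓ ∈ Icc 1 (i - 1), f ℓ + ∑ ℓ ∈ Icc i n, f ℓ = ∑ ℓ ∈ Icc 1 n, f ℓ := by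
  rw [← Ico_add_one_right_eq_Icc, ← Ico_add_one_right_eq_Icc, ← Ico_add_one_right_eq_Icc,
    Nat.sub_add_cancel hi]
  exact sum_Ico_consecutive f hi hin

theorem sum_mul_sum_Icc_suffix {R : Type*} [CommRing R] (w b : ℕ → R) (n : ℕ) :
    ∑ i ∈ Icc 1 n, w i * ∑ ℓ ∈ Icc i n, b ℓ =
      (∑ i ∈ Icc 1 n, w i) * ∑ ℓ ∈ Icc 1 n, b ℓ
        - ∑ i ∈ Icc 1 n, w i * ∑ ℓ ∈ Icc 1 (i - 1), b ℓ := by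
  rw [eq_sub_iff_add_eq, ← sum_add_distrib, sum_mul]
  refine sum_congr rfl fun i hi ↦ ?_
  rw [mem_Icc] at hi
  rw [← mul_add, add_comm, sum_Icc_one_pred_add_sum_Icc b hi.1 (by omega)]

theorem exists_mem_Icc_nonneg_of_weighted_sum_nonneg {𝕜 : Type*} [Field 𝕜] [LinearOrder 𝕜]
    [IsStrictOrderedRing 𝕜] {n : ℕ} {w f : ℕ → 𝕜} (hw₀ : ∀ j ∈ Icc 1 n, 0 ≤ w j)
    (hw₁ : ∑ j ∈ Icc 1 n, w j ≤ 1)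
    (h : 0 ≤ ∑ j ∈ Icc 1 n, w j * f j + (1 - ∑ j ∈ Icc 1 n, w j) * f (n + 1)) :
    ∃ j ∈ Icc 1 (n + 1), 0 ≤ f j := by
  set ω : ℕ → 𝕜 := fun j ↦ if j = n + 1 then 1 - ∑ j ∈ Icc 1 n, w j else w j
  have hω (g : ℕ → 𝕜) :
      ∑ j ∈ Icc 1 (n + 1), ω j * g j = ∑ j ∈ Icc 1 n, w j * g j + ω (n + 1) * g (n + 1) := by
    rw [sum_Icc_succ_top (by omega)]
    congr 1
    refine sum_congr rfl fun j hj ↦ ?_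
    rw [mem_Icc] at hj
    simp only [ω, if_neg (by omega : j ≠ n + 1)]
  refine exists_nonneg_of_sum_mul_nonneg (w := ω) (fun j hj ↦ ?_) ?_ ?_
  · by_cases hjn : j = n + 1
    · simp only [ω, if_pos hjn, sub_nonneg, hw₁]
    · simp only [ω, if_neg hjn]
      exact hw₀ j (by rw [mem_Icc] at hj ⊢; omega)
  · have hsum := hω fun _ ↦ 1
    simp only [mul_one] at hsum
    rw [hsum]
    simp only [ω, if_pos rfl, add_sub_cancel, zero_lt_one]
  · rw [hω f]
    simpa only [ω, if_pos rfl] using h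

theorem k2q_general_schedulability_general (k : ℕ) (hk : 2 ≤ k)
    (t : ℕ → ℝ) (htk : 0 < t k)
    (Ck : ℝ)
    (α β U C : ℕ → ℝ)
    (hα : ∀ i ∈ Finset.Icc 1 (k - 1), 0 < α i)
    (hU : ∀ i ∈ Finset.Icc 1 (k - 1), 0 < U i)
    (hsumαU : ∑ i ∈ Finset.Icc 1 (k - 1), α i * U i ≤ 1)
    (hcond : Ck / t k ≤ 1 - (∑ i ∈ Finset.Icc 1 (k - 1), α i * U i)
      - (∑ i ∈ Finset.Icc 1 (k - 1),
          (β i * C i - α i * U i * ∑ ℓ ∈ Finset.Icc i (k - 1), β ℓ * C ℓ)) / t k) :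
    ∃ j ∈ Finset.Icc 1 k,
      Ck + (∑ i ∈ Finset.Icc 1 (k - 1), α i * t i * U i)
        + (∑ i ∈ Finset.Icc 1 (j - 1), β i * C i) ≤ t j := by
  obtain ⟨n, rfl⟩ : ∃ n, k = n + 1 := ⟨k - 1, by omega⟩
  simp only [Nat.add_sub_cancel] at *
  set W := ∑ i ∈ Icc 1 n, α i * U i
  set B := ∑ i ∈ Icc 1 n, β i * C i
  set S := ∑ i ∈ Icc 1 n, α i * t i * U i
  set P := ∑ i ∈ Icc 1 n, α i * U i * ∑ ℓ ∈ Icc 1 (i - 1), β ℓ * C ℓ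
  have hCk_le : Ck ≤ (1 - W) * (t (n + 1) - B) - P := by
    rw [sum_sub_distrib, sum_mul_sum_Icc_suffix (fun i ↦ α i * U i) (fun i ↦ β i * C i),
      div_le_iff₀ htk, sub_mul, div_mul_cancel₀ _ htk.ne'] at hcond
    linarith
  obtain ⟨j, hj, hslack⟩ := exists_mem_Icc_nonneg_of_weighted_sum_nonneg
    (w := fun i ↦ α i * U i)
    (f := fun j ↦ t j - (Ck + S + ∑ ℓ ∈ Icc 1 (j - 1), β ℓ * C ℓ))
    (fun i hi ↦ (mul_pos (hα i hi) (hU i hi)).le) hsumαU (by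
      simp only [Nat.add_sub_cancel, mul_sub, mul_add, sum_sub_distrib, sum_add_distrib,
        ← sum_mul]
      rw [show ∑ j ∈ Icc 1 n, α j * U j * t j = S from sum_congr rfl fun _ _ ↦ by ring]
      linarith)
  exact ⟨j, hj, sub_nonneg.1 hslack⟩

/-- k²Q framework, general schedulability lemma (Lemma 5). -/
theorem k2q_general_schedulability (k : ℕ) (hk : 2 ≤ k)
    (t : ℕ → ℝ) (ht1 : 0 ≤ t 1) (htk : 0 < t k)
    (htmono : ∀ i j : ℕ, 1 ≤ i → i ≤ j → j ≤ k → t i ≤ t j)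
    (Ck : ℝ) (hCk : 0 < Ck)
    (α β U C : ℕ → ℝ)
    (hα : ∀ i ∈ Finset.Icc 1 (k - 1), 0 < α i)
    (hβ : ∀ i ∈ Finset.Icc 1 (k - 1), 0 < β i)
    (hU : ∀ i ∈ Finset.Icc 1 (k - 1), 0 < U i)
    (hC : ∀ i ∈ Finset.Icc 1 (k - 1), 0 ≤ C i)
    (hsumαU : ∑ i ∈ Finset.Icc 1 (k - 1), α i * U i ≤ 1)
    (hsumβC : ∑ i ∈ Finset.Icc 1 (k - 1), β i * C i ≤ t k)
    (hcond : Ck / t k ≤ 1 - (∑ i ∈ Finset.Icc 1 (k - 1), α i * U i)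
      - (∑ i ∈ Finset.Icc 1 (k - 1),
          (β i * C i - α i * U i * ∑ ℓ ∈ Finset.Icc i (k - 1), β ℓ * C ℓ)) / t k) :
    ∃ j ∈ Finset.Icc 1 k,
      Ck + (∑ i ∈ Finset.Icc 1 (k - 1), α i * t i * U i)
        + (∑ i ∈ Finset.Icc 1 (j - 1), β i * C i) ≤ t j :=
  k2q_general_schedulability_general k hk t htk Ck α β U C hα hU hsumαU hcond
end

section
/- Let n ≥ 1 be an integer, let a_1,…,a_n be positive reals and b_1,…,b_n be nonnegative reals with b_1/a_1 ≥ b_2/a_2 ≥ ⋯ ≥ b_n/a_n. Then for every permutation σ of {1,…,n}: Σ_{i=1}^{n} a_i·(Σ_{ℓ=i}^{n} b_ℓ) ≤ Σ_{i=1}^{n} a_{σ(i)}·(Σ_{ℓ=i}^{n} b_{σ(ℓ)}). -/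
/-!
Expanding the inner sums, an ordering contributes `a j * b k` for every pair in which `j` comes
no later than `k`. Each unordered pair `{j, k}` with `j ≠ k` thus contributes either `a j * b k`
or `a k * b j`, and ordering by non-increasing `b / a` always picks the smaller of the two.
-/

open Finset

section

variable {ι : Type*} [Fintype ι] [LinearOrder ι] [LocallyFiniteOrderTop ι]

theorem sum_mul_sum_Ici_eq_sum_sum_ite (a b : ι → ℝ) :
    ∑ i, a i * ∑ ℓ ∈ Ici i, b ℓ = ∑ i, ∑ j, if i ≤ j then a i * b j else 0 := by
  refine sum_congr rfl fun i _ => ?_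
  rw [mul_sum, ← sum_filter]
  exact sum_congr (by ext; simp) fun _ _ => rfl

theorem sum_perm_mul_sum_Ici_eq_sum_sum_ite (a b : ι → ℝ) (σ : Equiv.Perm ι) :
    ∑ i, a (σ i) * ∑ ℓ ∈ Ici i, b (σ ℓ) =
      ∑ i, ∑ j, if σ.symm i ≤ σ.symm j then a i * b j else 0 := by
  rw [sum_mul_sum_Ici_eq_sum_sum_ite]
  exact Fintype.sum_equiv σ _ _ fun i => Fintype.sum_equiv σ _ _ fun j => by simp

end

theorem Finset.sum_sum_le_sum_sum_of_add_swap_le {ι M : Type*} [AddCommMonoid M] [LinearOrder M]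
    [IsOrderedCancelAddMonoid M] (s : Finset ι) {f g : ι → ι → M}
    (h : ∀ i ∈ s, ∀ j ∈ s, f i j + f j i ≤ g i j + g j i) :
    ∑ i ∈ s, ∑ j ∈ s, f i j ≤ ∑ i ∈ s, ∑ j ∈ s, g i j := by
  have hsum : ∑ i ∈ s, ∑ j ∈ s, f i j + ∑ i ∈ s, ∑ j ∈ s, f i j ≤
      ∑ i ∈ s, ∑ j ∈ s, g i j + ∑ i ∈ s, ∑ j ∈ s, g i j := by
    nth_rewrite 2 [sum_comm]
    nth_rewrite 4 [sum_comm]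
    simp only [← sum_add_distrib]
    exact sum_le_sum fun i hi => sum_le_sum fun j hj => h i hi j hj
  by_contra! hlt
  exact (add_lt_add hlt hlt).not_ge hsum

theorem ite_add_ite_le_ite_add_ite {ι κ : Type*} [LinearOrder ι] [LinearOrder κ]
    {a b : ι → ℝ} (hab : ∀ i j, i ≤ j → a i * b j ≤ a j * b i)
    {τ : ι → κ} (hτ : Function.Injective τ) (i j : ι) :
    ((if i ≤ j then a i * b j else 0) + if j ≤ i then a j * b i else 0) ≤
      (if τ i ≤ τ j then a i * b j else 0) + if τ j ≤ τ i then a j * b i else 0 := by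
  rcases lt_trichotomy i j with hij | rfl | hij
  · rcases (hτ.ne hij.ne).lt_or_gt with hτij | hτij <;>
      simp [hij.le, hij.not_ge, hτij.le, hτij.not_ge, hab i j hij.le]
  · simp
  · rcases (hτ.ne hij.ne).lt_or_gt with hτij | hτij <;>
      simp [hij.le, hij.not_ge, hτij.le, hτij.not_ge, hab j i hij.le]

theorem k2q_worst_case_ordering_general (n : ℕ)
    (a b : Fin n → ℝ)
    (ha : ∀ i, 0 < a i)
    (hmono : ∀ i j : Fin n, i ≤ j → b j / a j ≤ b i / a i)
    (σ : Equiv.Perm (Fin n)) :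
    ∑ i : Fin n, a i * (∑ ℓ ∈ Finset.Ici i, b ℓ) ≤
      ∑ i : Fin n, a (σ i) * (∑ ℓ ∈ Finset.Ici i, b (σ ℓ)) := by
  have hab : ∀ i j, i ≤ j → a i * b j ≤ a j * b i := fun i j hij => by
    have := (div_le_div_iff₀ (ha j) (ha i)).mp (hmono i j hij)
    linarith
  rw [sum_mul_sum_Ici_eq_sum_sum_ite, sum_perm_mul_sum_Ici_eq_sum_sum_ite]
  exact sum_sum_le_sum_sum_of_add_swap_le _ fun i _ j _ =>
    ite_add_ite_le_ite_add_ite hab σ.symm.injective i j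

/-- k²Q framework, worst-case ordering lemma (mathematical core of Lemma 6/11). -/
theorem k2q_worst_case_ordering (n : ℕ) (hn : 1 ≤ n)
    (a b : Fin n → ℝ)
    (ha : ∀ i, 0 < a i) (hb : ∀ i, 0 ≤ b i)
    (hmono : ∀ i j : Fin n, i ≤ j → b j / a j ≤ b i / a i)
    (σ : Equiv.Perm (Fin n)) :
    ∑ i : Fin n, a i * (∑ ℓ ∈ Finset.Ici i, b ℓ) ≤
      ∑ i : Fin n, a (σ i) * (∑ ℓ ∈ Finset.Ici i, b (σ ℓ)) :=
  k2q_worst_case_ordering_general n a b ha hmono σ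
end

section
/- Let k ≥ 2 be an integer, let t_1,…,t_k be reals with 0 ≤ t_1 ≤ t_2 ≤ ⋯ ≤ t_{k−1} ≤ t_k and t_k > 0, let C_k > 0, and let α > 0, β > 0. For each i = 1,…,k−1 let α_i, β_i, U_i, C_i be reals with 0 < α_i ≤ α, U_i > 0, and 0 < β_i·C_i ≤ β·U_i·t_k, and assume α·Σ_{i=1}^{k−1} U_i ≤ 1 and β·Σ_{i=1}^{k−1} U_i ≤ 1. If C_k/t_k ≤ 1 − (α+β)·Σ_{i=1}^{k−1} U_i + 0.5·α·β·( (Σ_{i=1}^{k−1} U_i)² + Σ_{i=1}^{k−1} U_i² ), then there exists an index j ∈ {1,…,k} such that C_k + Σ_{i=1}^{k−1} α_i·t_i·U_i + Σ_{i=1}^{j−1} β_i·C_i ≤ t_j. -/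
lemma k2q_sq_sum_aux (f : ℕ → ℝ) (m : ℕ) :
    (∑ i ∈ Finset.Icc 1 m, f i) ^ 2 = (∑ i ∈ Finset.Icc 1 m, f i ^ 2)
      + 2 * ∑ i ∈ Finset.Icc 1 m, f i * ∑ l ∈ Finset.Icc 1 (i - 1), f l := by
  induction m with
  | zero => simp
  | succ n ih =>
    rw [Finset.sum_Icc_succ_top (by omega : 1 ≤ n + 1),
        Finset.sum_Icc_succ_top (by omega : 1 ≤ n + 1),
        Finset.sum_Icc_succ_top (by omega : 1 ≤ n + 1)]
    simp only [Nat.add_sub_cancel]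
    linear_combination ih

/-- k²Q framework, quadratic-bound lemma (Lemma 7). -/
theorem k2q_quadratic_bound (k : ℕ) (hk : 2 ≤ k)
    (t : ℕ → ℝ) (ht1 : 0 ≤ t 1) (htk : 0 < t k)
    (htmono : ∀ i j : ℕ, 1 ≤ i → i ≤ j → j ≤ k → t i ≤ t j)
    (Ck : ℝ) (hCk : 0 < Ck)
    (a b : ℝ) (ha : 0 < a) (hb : 0 < b)
    (α β U C : ℕ → ℝ)
    (hα : ∀ i ∈ Finset.Icc 1 (k - 1), 0 < α i ∧ α i ≤ a)
    (hU : ∀ i ∈ Finset.Icc 1 (k - 1), 0 < U i)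
    (hβC : ∀ i ∈ Finset.Icc 1 (k - 1), 0 < β i * C i ∧ β i * C i ≤ b * U i * t k)
    (hsuma : a * (∑ i ∈ Finset.Icc 1 (k - 1), U i) ≤ 1)
    (hsumb : b * (∑ i ∈ Finset.Icc 1 (k - 1), U i) ≤ 1)
    (hcond : Ck / t k ≤ 1 - (a + b) * (∑ i ∈ Finset.Icc 1 (k - 1), U i)
      + 0.5 * a * b * ((∑ i ∈ Finset.Icc 1 (k - 1), U i) ^ 2
        + (∑ i ∈ Finset.Icc 1 (k - 1), U i ^ 2))) :
    ∃ j ∈ Finset.Icc 1 k,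
      Ck + (∑ i ∈ Finset.Icc 1 (k - 1), α i * t i * U i)
        + (∑ i ∈ Finset.Icc 1 (j - 1), β i * C i) ≤ t j := by
  by_contra hcon
  push_neg at hcon
  set m := k - 1 with hm
  set S := ∑ i ∈ Finset.Icc 1 m, U i with hS
  set s2 := ∑ i ∈ Finset.Icc 1 m, U i ^ 2 with hs2
  set A := ∑ i ∈ Finset.Icc 1 m, α i * t i * U i with hA
  set T := ∑ i ∈ Finset.Icc 1 m, U i * ∑ l ∈ Finset.Icc 1 (i - 1), U l with hT
  have hne : (Finset.Icc 1 m).Nonempty := ⟨1, by simp [Finset.mem_Icc]; omega⟩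
  have hSpos : 0 < S := Finset.sum_pos hU hne
  have ht0 : ∀ i ∈ Finset.Icc 1 m, 0 ≤ t i := by
    intro i hi
    simp only [Finset.mem_Icc] at hi
    exact le_trans ht1 (htmono 1 i le_rfl hi.1 (by omega))
  have hB : ∀ i ∈ Finset.Icc 1 m, (∑ l ∈ Finset.Icc 1 (i - 1), β l * C l)
      ≤ b * t k * ∑ l ∈ Finset.Icc 1 (i - 1), U l := by
    intro i hi
    simp only [Finset.mem_Icc] at hi
    rw [Finset.mul_sum]
    refine Finset.sum_le_sum fun l hl => ?_
    simp only [Finset.mem_Icc] at hl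
    have hl' : l ∈ Finset.Icc 1 m := by simp only [Finset.mem_Icc]; omega
    calc β l * C l ≤ b * U l * t k := (hβC l hl').2
      _ = b * t k * U l := by ring
  have hAlt : A < a * S * (Ck + A) + a * b * t k * T := by
    have hstep : A < ∑ i ∈ Finset.Icc 1 m,
        (a * U i * (Ck + A) + a * b * t k * (U i * ∑ l ∈ Finset.Icc 1 (i - 1), U l)) := by
      refine Finset.sum_lt_sum_of_nonempty hne fun i hi => ?_
      have hUi := hU i hi
      have hti := ht0 i hi
      have hαi := hα i hi
      have hik : i ∈ Finset.Icc 1 k := by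
        simp only [Finset.mem_Icc] at hi ⊢; omega
      have hlt := hcon i hik
      have hBi := hB i hi
      calc α i * t i * U i ≤ a * U i * t i := by nlinarith [mul_nonneg (mul_nonneg (sub_nonneg.2 hαi.2) hti) hUi.le]
        _ < a * U i * (Ck + A + ∑ l ∈ Finset.Icc 1 (i - 1), β l * C l) := by
            exact mul_lt_mul_of_pos_left hlt (by positivity)
        _ ≤ a * U i * (Ck + A) + a * b * t k * (U i * ∑ l ∈ Finset.Icc 1 (i - 1), U l) := by
            nlinarith [mul_pos ha hUi]
    calc A < _ := hstep
      _ = a * S * (Ck + A) + a * b * t k * T := by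
        rw [Finset.sum_add_distrib]
        congr 1
        · rw [hS, Finset.mul_sum, Finset.sum_mul]
        · rw [hT, Finset.mul_sum]
  have hBk : (∑ l ∈ Finset.Icc 1 m, β l * C l) ≤ b * S * t k := by
    rw [hS, Finset.mul_sum, Finset.sum_mul]
    refine Finset.sum_le_sum fun l hl => ?_
    calc β l * C l ≤ b * U l * t k := (hβC l hl).2
      _ = b * U l * t k := by ring
  have htklt : t k < Ck + A + b * S * t k := by
    have hkk : k ∈ Finset.Icc 1 k := by simp only [Finset.mem_Icc]; omega
    have h := hcon k hkk
    linarith [hBk]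
  have hsq : S ^ 2 = s2 + 2 * T := k2q_sq_sum_aux U m
  have hsq' : a * b * t k * S ^ 2 = a * b * t k * s2 + 2 * (a * b * t k * T) := by
    rw [hsq]; ring
  have hcond' : Ck ≤ (1 - (a + b) * S + 0.5 * a * b * (S ^ 2 + s2)) * t k := by
    rw [div_le_iff₀ htk] at hcond
    exact hcond
  have h1 : 0 ≤ 1 - a * S := by linarith
  have h2 : 0 ≤ Ck + A - (1 - b * S) * t k := by nlinarith [htklt]
  nlinarith [mul_nonneg h1 h2, hAlt, hsq', hcond', htk, hSpos]
end

section
/- Let k ≥ 2 be an integer, let t_1,…,t_k be reals with 0 ≤ t_1 ≤ t_2 ≤ ⋯ ≤ t_{k−1} ≤ t_k and t_k > 0, let C_k > 0, and let α > 0, β > 0. For each i = 1,…,k−1 let α_i, β_i, U_i, C_i be reals with 0 < α_i ≤ α, U_i > 0, and 0 < β_i·C_i ≤ β·U_i·t_k, and assume α·Σ_{i=1}^{k−1} U_i ≤ 1 and β·Σ_{i=1}^{k−1} U_i ≤ 1. If Σ_{i=1}^{k−1} U_i ≤ ((k−1)/k)·( α + β − √( (α+β)² − 2·α·β·(1 −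 C_k/t_k)·k/(k−1) ) )/(α·β), then there exists an index j ∈ {1,…,k} such that C_k + Σ_{i=1}^{k−1} α_i·t_i·U_i + Σ_{i=1}^{j−1} β_i·C_i ≤ t_j. -/
lemma k2q_aux_sq_sum (f : ℕ → ℝ) (n : ℕ) :
    (∑ i ∈ Finset.Icc 1 n, f i) ^ 2 =
      (∑ i ∈ Finset.Icc 1 n, (f i) ^ 2)
      + 2 * ∑ j ∈ Finset.Icc 1 n, f j * ∑ i ∈ Finset.Icc 1 (j - 1), f i := by
  induction n with
  | zero => simp
  | succ n ih =>
    rw [Finset.sum_Icc_succ_top (by omega : 1 ≤ n + 1),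
        Finset.sum_Icc_succ_top (by omega : 1 ≤ n + 1) (fun i => (f i) ^ 2),
        Finset.sum_Icc_succ_top (by omega : 1 ≤ n + 1)
          (fun j => f j * ∑ i ∈ Finset.Icc 1 (j - 1), f i)]
    simp only [Nat.add_sub_cancel]
    linear_combination ih

set_option maxHeartbeats 1600000 in
/-- k²Q framework, utilization-bound lemma (Lemma 8). -/
theorem k2q_utilization_bound (k : ℕ) (hk : 2 ≤ k)
    (t : ℕ → ℝ) (ht1 : 0 ≤ t 1) (htk : 0 < t k)
    (htmono : ∀ i j : ℕ, 1 ≤ i → i ≤ j → j ≤ k → t i ≤ t j)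
    (Ck : ℝ) (hCk : 0 < Ck)
    (a b : ℝ) (ha : 0 < a) (hb : 0 < b)
    (α β U C : ℕ → ℝ)
    (hα : ∀ i ∈ Finset.Icc 1 (k - 1), 0 < α i ∧ α i ≤ a)
    (hU : ∀ i ∈ Finset.Icc 1 (k - 1), 0 < U i)
    (hβC : ∀ i ∈ Finset.Icc 1 (k - 1), 0 < β i * C i ∧ β i * C i ≤ b * U i * t k)
    (hsuma : a * (∑ i ∈ Finset.Icc 1 (k - 1), U i) ≤ 1)
    (hsumb : b * (∑ i ∈ Finset.Icc 1 (k - 1), U i) ≤ 1)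
    (hcond : ∑ i ∈ Finset.Icc 1 (k - 1), U i ≤
      (((k : ℝ) - 1) / (k : ℝ)) *
        ((a + b - Real.sqrt ((a + b) ^ 2
          - 2 * a * b * (1 - Ck / t k) * ((k : ℝ) / ((k : ℝ) - 1)))) / (a * b))) :
    ∃ j ∈ Finset.Icc 1 k,
      Ck + (∑ i ∈ Finset.Icc 1 (k - 1), α i * t i * U i)
        + (∑ i ∈ Finset.Icc 1 (j - 1), β i * C i) ≤ t j := by
  by_contra hcon
  push_neg at hcon
  -- basic facts
  have hkR : (2 : ℝ) ≤ (k : ℝ) := by exact_mod_cast hk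
  have hk1 : (0 : ℝ) < (k : ℝ) - 1 := by linarith
  have hkpos : (0 : ℝ) < (k : ℝ) := by linarith
  set I : Finset ℕ := Finset.Icc 1 (k - 1) with hI
  have hIne : I.Nonempty := ⟨1, by simp [hI, Finset.mem_Icc]; omega⟩
  have hIsub : I ⊆ Finset.Icc 1 k := Finset.Icc_subset_Icc le_rfl (by omega)
  set S : ℝ := ∑ i ∈ I, U i with hSdef
  set G : ℝ := ∑ i ∈ I, α i * t i * U i with hGdef
  have hSpos : 0 < S := Finset.sum_pos (fun i hi => hU i hi) hIne
  have htnn : ∀ i ∈ I, 0 ≤ t i := by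
    intro i hi
    rw [hI, Finset.mem_Icc] at hi
    exact le_trans ht1 (htmono 1 i le_rfl hi.1 (by omega))
  -- bound on the β·C sums
  have hBsub : ∀ j ∈ Finset.Icc 1 k, Finset.Icc 1 (j - 1) ⊆ I := by
    intro j hj
    rw [Finset.mem_Icc] at hj
    exact Finset.Icc_subset_Icc le_rfl (by omega)
  have hB : ∀ j ∈ Finset.Icc 1 k,
      (∑ i ∈ Finset.Icc 1 (j - 1), β i * C i)
        ≤ b * t k * ∑ i ∈ Finset.Icc 1 (j - 1), U i := by
    intro j hj
    rw [Finset.mul_sum]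
    refine Finset.sum_le_sum (fun i hi => ?_)
    have h1 := (hβC i (hBsub j hj hi)).2
    linarith [h1]
  -- main strict summed inequality
  set T : ℝ := ∑ j ∈ I, U j * ∑ i ∈ Finset.Icc 1 (j - 1), U i with hTdef
  have hTnn : 0 ≤ T := by
    refine Finset.sum_nonneg (fun j hj => ?_)
    have hUj := (hU j hj).le
    have : 0 ≤ ∑ i ∈ Finset.Icc 1 (j - 1), U i :=
      Finset.sum_nonneg (fun i hi => (hU i (hBsub j (hIsub hj) hi)).le)
    positivity
  have hGW : G ≤ ∑ j ∈ I, a * U j * t j := by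
    rw [hGdef]
    refine Finset.sum_le_sum (fun i hi => ?_)
    have h1 := (hα i hi).1
    have h2 := (hα i hi).2
    have h3 := hU i hi
    have h4 := htnn i hi
    nlinarith [mul_le_mul_of_nonneg_right h2 (mul_nonneg h4 h3.le)]
  have hmain : ∑ j ∈ I, a * U j * t j
      < ∑ j ∈ I, a * U j * (Ck + G + ∑ i ∈ Finset.Icc 1 (j - 1), β i * C i) := by
    refine Finset.sum_lt_sum_of_nonempty hIne (fun j hj => ?_)
    have hUj := hU j hj
    have := hcon j (hIsub hj)
    have hpos : 0 < a * U j := by positivity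
    nlinarith
  have hRHS : ∑ j ∈ I, a * U j * (Ck + G + ∑ i ∈ Finset.Icc 1 (j - 1), β i * C i)
      ≤ (Ck + G) * a * S + a * (b * t k * T) := by
    have step1 : ∑ j ∈ I, a * U j * (Ck + G + ∑ i ∈ Finset.Icc 1 (j - 1), β i * C i)
        ≤ ∑ j ∈ I, a * U j * (Ck + G + b * t k * ∑ i ∈ Finset.Icc 1 (j - 1), U i) := by
      refine Finset.sum_le_sum (fun j hj => ?_)
      have hUj := (hU j hj).le
      have hBj := hB j (hIsub hj)
      have hpos : 0 ≤ a * U j := by positivity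
      nlinarith
    refine le_trans step1 (le_of_eq ?_)
    rw [hSdef, hTdef, Finset.mul_sum, Finset.mul_sum, Finset.mul_sum, ← Finset.sum_add_distrib]
    refine Finset.sum_congr rfl (fun j hj => ?_)
    ring
  -- key1 : G < (Ck+G)*a*S + a*b*t k*T
  have key1 : G < (Ck + G) * a * S + a * (b * t k * T) :=
    lt_of_le_of_lt hGW (lt_of_lt_of_le hmain hRHS)
  -- key2 from j = k
  have hkmem : k ∈ Finset.Icc 1 k := by simp [Finset.mem_Icc]; omega
  have key2 : t k < Ck + G + b * t k * S := by
    have h1 := hcon k hkmem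
    have h2 := hB k hkmem
    have hSS : (∑ i ∈ Finset.Icc 1 (k - 1), U i) = S := rfl
    rw [hSS] at h2
    linarith
  -- Cauchy-Schwarz cross-term bound
  have hcard : (I.card : ℝ) = (k : ℝ) - 1 := by
    rw [hI, Nat.card_Icc]
    have : k - 1 + 1 - 1 = k - 1 := by omega
    rw [this]
    push_cast [Nat.cast_sub (by omega : 1 ≤ k)]
    ring
  have hCS : S ^ 2 ≤ ((k : ℝ) - 1) * ∑ i ∈ I, (U i) ^ 2 := by
    have := sq_sum_le_card_mul_sum_sq (s := I) (f := U)
    rw [hcard] at this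
    exact this
  have hident : S ^ 2 = (∑ i ∈ I, (U i) ^ 2) + 2 * T :=
    k2q_aux_sq_sum U (k - 1)
  have hT : ((k : ℝ) - 1) * (2 * T) ≤ ((k : ℝ) - 2) * S ^ 2 := by nlinarith
  clear_value I S G T
  clear hcon hα hU hβC hB hBsub htnn hIsub hIne hGW hmain hRHS hident hCS hcard
  -- combine: the quadratic inequality
  have haS : a * S ≤ 1 := hsuma
  have key3 : (t k - Ck - b * t k * S) * (1 - a * S)
      < a * S * Ck + a * b * t k * T := by
    rcases lt_or_eq_of_le haS with h | h
    · have h1 : t k - Ck - b * t k * S < G := by linarith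
      have h2 : (t k - Ck - b * t k * S) * (1 - a * S) < G * (1 - a * S) :=
        mul_lt_mul_of_pos_right h1 (by linarith)
      nlinarith [key1]
    · have : (t k - Ck - b * t k * S) * (1 - a * S) = 0 := by rw [h]; ring
      rw [this]
      have : 0 < a * S * Ck := by positivity
      nlinarith
  have key4 : a * b * (k : ℝ) * S ^ 2 * t k
      - 2 * ((k : ℝ) - 1) * (a + b) * S * t k
      + 2 * ((k : ℝ) - 1) * (t k - Ck) < 0 := by
    have h1 := mul_lt_mul_of_pos_left key3 (by linarith : (0:ℝ) < 2 * ((k : ℝ) - 1))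
    have h2 := mul_le_mul_of_nonneg_left hT
      (by positivity : (0:ℝ) ≤ a * b * t k)
    nlinarith
  -- divide by t k
  have htkne : t k ≠ 0 := ne_of_gt htk
  have hc : Ck = (Ck / t k) * t k := by field_simp
  have key5 : a * b * (k : ℝ) * S ^ 2
      - 2 * ((k : ℝ) - 1) * (a + b) * S
      + 2 * ((k : ℝ) - 1) * (1 - Ck / t k) < 0 := by
    by_contra hge
    push_neg at hge
    have := mul_le_mul_of_nonneg_right hge htk.le
    rw [hc] at key4
    nlinarith
  -- final contradiction with hcond via the square root
  set D : ℝ := (a + b) ^ 2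
      - 2 * a * b * (1 - Ck / t k) * ((k : ℝ) / ((k : ℝ) - 1)) with hDdef
  clear_value D
  have hDeq : ((k : ℝ) - 1) ^ 2 * D
      = ((k : ℝ) - 1) ^ 2 * (a + b) ^ 2
        - 2 * a * b * (1 - Ck / t k) * (k : ℝ) * ((k : ℝ) - 1) := by
    rw [hDdef]
    field_simp
  have habk : (0 : ℝ) < a * b * (k : ℝ) := by positivity
  have hsq : (a * b * (k : ℝ) * S - ((k : ℝ) - 1) * (a + b)) ^ 2
      < ((k : ℝ) - 1) ^ 2 * D := by
    have h1 := mul_lt_mul_of_pos_left key5 habk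
    nlinarith [h1, hDeq]
  have hDpos : 0 < D := by nlinarith [sq_nonneg (a * b * (k : ℝ) * S - ((k : ℝ) - 1) * (a + b)), sq_nonneg ((k:ℝ) - 1)]
  have hsd : Real.sqrt D ^ 2 = D := Real.sq_sqrt hDpos.le
  have hsdnn : 0 ≤ Real.sqrt D := Real.sqrt_nonneg D
  have hlow : ((k : ℝ) - 1) * (a + b - Real.sqrt D) < a * b * (k : ℝ) * S := by
    have hsq' : (a * b * (k : ℝ) * S - ((k : ℝ) - 1) * (a + b)) ^ 2
        < (((k : ℝ) - 1) * Real.sqrt D) ^ 2 := by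
      rw [mul_pow, hsd]; exact hsq
    have h3 := (abs_lt_of_sq_lt_sq' hsq' (by positivity)).1
    linarith
  -- hcond rewritten
  have hcond' : a * b * (k : ℝ) * S ≤ ((k : ℝ) - 1) * (a + b - Real.sqrt D) := by
    have h1 := mul_le_mul_of_nonneg_left hcond habk.le
    have h2 : a * b * (k : ℝ) * ((((k : ℝ) - 1) / (k : ℝ)) *
        ((a + b - Real.sqrt D) / (a * b)))
        = ((k : ℝ) - 1) * (a + b - Real.sqrt D) := by
      field_simp
    calc a * b * (k : ℝ) * S ≤ _ := h1
      _ = _ := h2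
  linarith
end

section
/- Let k ≥ 2 be an integer, let t_1,…,t_k be reals with 0 ≤ t_1 ≤ t_2 ≤ ⋯ ≤ t_{k−1} ≤ t_k and t_k > 0, let C_k > 0, and let α > 0, β > 0 with α + β ≥ 1. For each i = 1,…,k−1 let α_i, β_i, U_i, C_i be reals with 0 < α_i ≤ α, U_i > 0, and 0 < β_i·C_i ≤ β·U_i·t_k, and assume α·Σ_{i=1}^{k−1} U_i ≤ 1 and β·Σ_{i=1}^{k−1} U_i ≤ 1. Define R = ((k−1)/k)·( α + β − √( (α+β)² − 2·α·β·k/(k−1) ) )/(α·β) if both α² + β² > 1 and k > ((α+β)² − 1)/(α² + β² − 1) hold, and R = 1 + (k−1)·( (α+β−1) − (α+β)²/2 + 1/2 )/(k·α·β) otherwise. If C_k/t_k + Σ_{i=1}^{k−1} U_i ≤ R, then there exists an index j ∈ {1,…,k} such that C_k + Σ_{i=1}^{k−1} α_i·t_i·U_i + Σ_{i=1}^{j−1} β_i·C_i ≤ t_j. -/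
set_option maxHeartbeats 1000000

lemma k2q_sum_lower_identity (n : ℕ) (f : ℕ → ℝ) :
    2 * (∑ i ∈ Finset.Icc 1 n, f i * (∑ l ∈ Finset.Icc 1 (i - 1), f l))
      + ∑ i ∈ Finset.Icc 1 n, (f i) ^ 2
    = (∑ i ∈ Finset.Icc 1 n, f i) ^ 2 := by
  induction n with
  | zero => simp
  | succ n ih =>
    rw [Finset.sum_Icc_succ_top (by omega : 1 ≤ n + 1),
        Finset.sum_Icc_succ_top (by omega : 1 ≤ n + 1),
        Finset.sum_Icc_succ_top (by omega : 1 ≤ n + 1)]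
    simp only [Nat.add_sub_cancel]
    linear_combination ih

lemma k2q_key_ineq (k : ℕ) (hk : 2 ≤ k) (a b S R : ℝ)
    (ha : 0 < a) (hb : 0 < b) (hab : 1 ≤ a + b) (hS : 0 < S)
    (hR : R = if 1 < a ^ 2 + b ^ 2 ∧ ((a + b) ^ 2 - 1) / (a ^ 2 + b ^ 2 - 1) < (k : ℝ)
      then (((k : ℝ) - 1) / (k : ℝ)) *
        ((a + b - Real.sqrt ((a + b) ^ 2 - 2 * a * b * ((k : ℝ) / ((k : ℝ) - 1)))) / (a * b))
      else 1 + ((k : ℝ) - 1) * ((a + b - 1) - (a + b) ^ 2 / 2 + 1 / 2) / ((k : ℝ) * a * b)) :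
    R ≤ S ∨ R ≤ 1 - (a + b - 1) * S + (a * b * (k : ℝ) / (2 * ((k : ℝ) - 1))) * S ^ 2 := by
  have hk2 : (2 : ℝ) ≤ (k : ℝ) := by exact_mod_cast hk
  have hk1 : (0 : ℝ) < (k : ℝ) - 1 := by linarith
  have hk0 : (0 : ℝ) < (k : ℝ) := by linarith
  set γ : ℝ := a * b * (k : ℝ) / (2 * ((k : ℝ) - 1)) with hγdef
  have hγ : 0 < γ := by positivity
  rw [hR]
  split_ifs with h
  · obtain ⟨h1, h2⟩ := h
    have h3 : (a + b) ^ 2 - 1 < (k : ℝ) * (a ^ 2 + b ^ 2 - 1) :=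
      (div_lt_iff₀ (by linarith)).mp h2
    set d : ℝ := (a + b) ^ 2 - 2 * a * b * ((k : ℝ) / ((k : ℝ) - 1)) with hddef
    have hdd : (k : ℝ) / ((k : ℝ) - 1) * ((k : ℝ) - 1) = (k : ℝ) :=
      div_mul_cancel₀ _ (by linarith)
    have h5 : 2 * a * b < ((k : ℝ) - 1) * (a ^ 2 + b ^ 2 - 1) := by nlinarith
    have hd1 : 1 < d := by
      have h6 : (d - 1) * ((k : ℝ) - 1)
          = ((k : ℝ) - 1) * ((a + b) ^ 2 - 1)
            - 2 * a * b * ((k : ℝ) / ((k : ℝ) - 1) * ((k : ℝ) - 1)) := by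
        rw [hddef]; ring
      rw [hdd] at h6
      nlinarith [h6]
    have hd0 : 0 ≤ d := by linarith
    set s : ℝ := Real.sqrt d with hsdef
    have hsq : s ^ 2 = d := Real.sq_sqrt hd0
    have hs1 : 1 ≤ s := by
      rw [hsdef, show (1:ℝ) = Real.sqrt 1 by simp]
      exact Real.sqrt_le_sqrt (by linarith)
    set r : ℝ := ((k : ℝ) - 1) / (k : ℝ) * ((a + b - s) / (a * b)) with hrdef
    clear_value r s d
    rcases le_or_gt r S with h' | h'
    · exact Or.inl h'
    · right
      have hr2γ : 2 * γ * r = a + b - s := by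
        rw [hγdef, hrdef]; field_simp
      have h4γ : 4 * γ = 2 * a * b * ((k : ℝ) / ((k : ℝ) - 1)) := by
        rw [hγdef]; field_simp; ring
      have hg : γ * r ^ 2 - (a + b) * r + 1 = 0 := by
        have h0 : 4 * γ * (γ * r ^ 2 - (a + b) * r + 1) = 0 := by
          linear_combination (2 * γ * r + (a + b - s) - 2 * (a + b)) * hr2γ + hsq + hddef + h4γ
        rcases mul_eq_zero.mp h0 with h0' | h0'
        · exact absurd h0' (by positivity)
        · exact h0'
      have h2γr : 2 * γ * r ≤ a + b - 1 := by rw [hr2γ]; linarith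
      have hprod : 0 ≤ (r - S) * ((a + b - 1) - γ * (S + r)) := by
        apply mul_nonneg (by linarith)
        nlinarith [mul_pos hγ (sub_pos.mpr h')]
      nlinarith [hprod, hg]
  · right
    have hm : (0:ℝ) < 2 * (k : ℝ) * a * b * ((k : ℝ) - 1) := by positivity
    have hexp : (1 - (a + b - 1) * S + γ * S ^ 2
          - (1 + ((k : ℝ) - 1) * ((a + b - 1) - (a + b) ^ 2 / 2 + 1 / 2) / ((k : ℝ) * a * b)))
        * (2 * (k : ℝ) * a * b * ((k : ℝ) - 1))
        = (a * b * (k : ℝ) * S - ((k : ℝ) - 1) * (a + b - 1)) ^ 2 := by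
      rw [hγdef]; field_simp; ring
    have h2 : 0 ≤ (1 - (a + b - 1) * S + γ * S ^ 2
          - (1 + ((k : ℝ) - 1) * ((a + b - 1) - (a + b) ^ 2 / 2 + 1 / 2) / ((k : ℝ) * a * b)))
        * (2 * (k : ℝ) * a * b * ((k : ℝ) - 1)) := by
      rw [hexp]; positivity
    nlinarith [h2, hm]



/-- k²Q framework, piecewise total-utilization-bound lemma (Lemma 9). -/
theorem k2q_piecewise_total_utilization_bound (k : ℕ) (hk : 2 ≤ k)
    (t : ℕ → ℝ) (ht1 : 0 ≤ t 1) (htk : 0 < t k)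
    (htmono : ∀ i j : ℕ, 1 ≤ i → i ≤ j → j ≤ k → t i ≤ t j)
    (Ck : ℝ) (hCk : 0 < Ck)
    (a b : ℝ) (ha : 0 < a) (hb : 0 < b) (hab : 1 ≤ a + b)
    (α β U C : ℕ → ℝ)
    (hα : ∀ i ∈ Finset.Icc 1 (k - 1), 0 < α i ∧ α i ≤ a)
    (hU : ∀ i ∈ Finset.Icc 1 (k - 1), 0 < U i)
    (hβC : ∀ i ∈ Finset.Icc 1 (k - 1), 0 < β i * C i ∧ β i * C i ≤ b * U i * t k)
    (hsuma : a * (∑ i ∈ Finset.Icc 1 (k - 1), U i) ≤ 1)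
    (hsumb : b * (∑ i ∈ Finset.Icc 1 (k - 1), U i) ≤ 1)
    (R : ℝ)
    (hR : R = if 1 < a ^ 2 + b ^ 2 ∧ ((a + b) ^ 2 - 1) / (a ^ 2 + b ^ 2 - 1) < (k : ℝ)
      then (((k : ℝ) - 1) / (k : ℝ)) *
        ((a + b - Real.sqrt ((a + b) ^ 2 - 2 * a * b * ((k : ℝ) / ((k : ℝ) - 1)))) / (a * b))
      else 1 + ((k : ℝ) - 1) * ((a + b - 1) - (a + b) ^ 2 / 2 + 1 / 2) / ((k : ℝ) * a * b))
    (hcond : Ck / t k + (∑ i ∈ Finset.Icc 1 (k - 1), U i) ≤ R) :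
    ∃ j ∈ Finset.Icc 1 k,
      Ck + (∑ i ∈ Finset.Icc 1 (k - 1), α i * t i * U i)
        + (∑ i ∈ Finset.Icc 1 (j - 1), β i * C i) ≤ t j := by
  by_contra hcon
  push_neg at hcon
  have hk2 : (2:ℝ) ≤ (k:ℝ) := by exact_mod_cast hk
  have hk1 : (0:ℝ) < (k:ℝ) - 1 := by linarith
  have hne : (Finset.Icc 1 (k-1)).Nonempty :=
    ⟨1, Finset.mem_Icc.mpr ⟨le_refl 1, by omega⟩⟩
  set S := ∑ i ∈ Finset.Icc 1 (k-1), U i with hSdef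
  have hSpos : 0 < S := Finset.sum_pos hU hne
  set P := ∑ i ∈ Finset.Icc 1 (k-1), α i * t i * U i with hPdef
  -- bound on the β·C sums
  have hQ : ∀ j, j ≤ k → (∑ i ∈ Finset.Icc 1 (j-1), β i * C i)
      ≤ b * t k * (∑ i ∈ Finset.Icc 1 (j-1), U i) := by
    intro j hj
    calc ∑ i ∈ Finset.Icc 1 (j-1), β i * C i
        ≤ ∑ i ∈ Finset.Icc 1 (j-1), b * t k * U i := by
          apply Finset.sum_le_sum
          intro i hi
          have hi' : i ∈ Finset.Icc 1 (k-1) := by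
            simp only [Finset.mem_Icc] at hi ⊢; omega
          have h1 := (hβC i hi').2
          have h2 : b * U i * t k = b * t k * U i := by ring
          linarith
      _ = b * t k * (∑ i ∈ Finset.Icc 1 (j-1), U i) := by rw [Finset.mul_sum]
  have hTj : ∀ j ∈ Finset.Icc 1 k,
      t j < Ck + P + b * t k * (∑ i ∈ Finset.Icc 1 (j-1), U i) := by
    intro j hj
    have hjk : j ≤ k := (Finset.mem_Icc.mp hj).2
    exact lt_of_lt_of_le (hcon j hj) (by linarith [hQ j hjk])
  -- t is nonnegative on the range
  have htnn : ∀ i ∈ Finset.Icc 1 (k-1), 0 ≤ t i := by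
    intro i hi
    obtain ⟨hi1, hi2⟩ := Finset.mem_Icc.mp hi
    exact le_trans ht1 (htmono 1 i le_rfl hi1 (by omega))
  have hP : P ≤ a * ∑ i ∈ Finset.Icc 1 (k-1), U i * t i := by
    rw [hPdef, Finset.mul_sum]
    apply Finset.sum_le_sum
    intro i hi
    have h1 := (hα i hi).2
    have h2 := (hU i hi)
    have h3 := htnn i hi
    nlinarith [mul_le_mul_of_nonneg_right h1 (mul_nonneg h3 h2.le)]
  have hD : (∑ i ∈ Finset.Icc 1 (k-1), U i * t i)
      < ∑ i ∈ Finset.Icc 1 (k-1),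
          U i * (Ck + P + b * t k * (∑ l ∈ Finset.Icc 1 (i-1), U l)) := by
    apply Finset.sum_lt_sum_of_nonempty hne
    intro i hi
    have hik : i ∈ Finset.Icc 1 k := by
      simp only [Finset.mem_Icc] at hi ⊢; omega
    exact mul_lt_mul_of_pos_left (hTj i hik) (hU i hi)
  set W := ∑ i ∈ Finset.Icc 1 (k-1), U i * (∑ l ∈ Finset.Icc 1 (i-1), U l) with hWdef
  have hE : (∑ i ∈ Finset.Icc 1 (k-1),
        U i * (Ck + P + b * t k * (∑ l ∈ Finset.Icc 1 (i-1), U l)))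
      = S * (Ck + P) + b * t k * W := by
    rw [hWdef, hSdef, Finset.mul_sum, Finset.sum_mul, ← Finset.sum_add_distrib]
    apply Finset.sum_congr rfl
    intro i _
    ring
  -- bound W
  have hid := k2q_sum_lower_identity (k-1) U
  have hcs : S^2 ≤ ((k:ℝ)-1) * ∑ i ∈ Finset.Icc 1 (k-1), (U i)^2 := by
    have h := sq_sum_le_card_mul_sum_sq (s := Finset.Icc 1 (k-1)) (f := U)
    have hcard : (Finset.Icc 1 (k-1)).card = k - 1 := by
      rw [Nat.card_Icc]; omega
    rw [hcard] at h
    have hcast : ((k - 1 : ℕ) : ℝ) = (k:ℝ) - 1 := by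
      have : 1 ≤ k := by omega
      push_cast [this]; ring
    rw [← hSdef] at h
    rw [← hcast]
    exact_mod_cast h
  have hW : W ≤ ((k:ℝ)-2) * S^2 / (2*((k:ℝ)-1)) := by
    rw [le_div_iff₀ (by linarith)]
    rw [← hSdef, ← hWdef] at hid
    nlinarith [hid, hcs]
  -- combine
  have hPlt : P < a * (S * (Ck + P) + b * t k * W) := by
    calc P ≤ a * ∑ i ∈ Finset.Icc 1 (k-1), U i * t i := hP
      _ < a * (S * (Ck + P) + b * t k * W) := by
          rw [← hE]; exact mul_lt_mul_of_pos_left hD ha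
  have hii : t k - Ck - b * t k * S < P := by
    have h := hTj k (Finset.mem_Icc.mpr ⟨by omega, le_rfl⟩)
    rw [← hSdef] at h
    linarith
  have h1aS : a * S ≤ 1 := hsuma
  have hchain : (1 - a*S) * (t k - Ck - b*t k*S) < a*S*Ck + a*b*t k*W := by
    have e1 : (1 - a*S) * (t k - Ck - b*t k*S) ≤ (1 - a*S) * P :=
      mul_le_mul_of_nonneg_left hii.le (by linarith)
    have e2 : (1 - a*S) * P < a*S*Ck + a*b*t k*W := by nlinarith [hPlt]
    exact lt_of_le_of_lt e1 e2
  have hWb : a*b*t k*W ≤ a*b*t k*(((k:ℝ)-2)*S^2/(2*((k:ℝ)-1))) := by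
    apply mul_le_mul_of_nonneg_left hW (by positivity)
  have hγ2 : a*b*t k*(((k:ℝ)-2)*S^2/(2*((k:ℝ)-1)))
      = a*b*t k*S^2 - (a * b * (k:ℝ) / (2 * ((k:ℝ) - 1)))*t k*S^2 := by
    field_simp; ring
  have hCkgt : t k * (1 - (a+b)*S + (a * b * (k:ℝ) / (2 * ((k:ℝ) - 1)))*S^2) < Ck := by
    nlinarith [hchain, hWb, hγ2]
  rcases k2q_key_ineq k hk a b S R ha hb hab hSpos hR with h | h
  · have hpos : 0 < Ck / t k := div_pos hCk htk
    linarith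
  · have h2 : Ck / t k ≤ 1 - (a+b)*S + (a * b * (k:ℝ) / (2 * ((k:ℝ) - 1)))*S^2 := by
      linarith
    have h3 : Ck ≤ (1 - (a+b)*S + (a * b * (k:ℝ) / (2 * ((k:ℝ) - 1)))*S^2) * t k :=
      (div_le_iff₀ htk).mp h2
    nlinarith [hCkgt, h3]
end

section
/- Let k ≥ 2 be an integer and let C_k > 0. For each i = 1,…,k−1 let α_i > 0, β_i > 0, U_i > 0, and C_i ≥ 0 be reals, and assume Σ_{i=1}^{k−1} α_i·U_i < 1. Suppose reals t_1,…,t_k satisfy 0 ≤ t_1 ≤ t_2 ≤ ⋯ ≤ t_{k−1} ≤ t_k, t_k = C_k + Σ_{i=1}^{k−1} α_i·t_i·U_i + Σ_{i=1}^{k−1} β_i·C_i, and, for each j = 1,…,k−1, C_k + Σ_{i=1}^{k−1} α_i·t_i·U_i + Σ_{i=1}^{j−1} β_i·C_i > t_j. Then t_k ≤ ( C_k + Σ_{i=1}^{k−1} β_i·C_i − Σ_{i=1}^{k−1} α_i·U_i·(Σ_{ℓ=i}^{k−1} β_ℓ·C_ℓ) ) / ( 1 − Σ_{i=1}^{k−1}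 α_i·U_i ). -/
/-- k²Q framework, response-time lemma (Lemma 10). -/
theorem k2q_response_time (k : ℕ) (hk : 2 ≤ k)
    (Ck : ℝ) (hCk : 0 < Ck)
    (α β U C : ℕ → ℝ)
    (hα : ∀ i ∈ Finset.Icc 1 (k - 1), 0 < α i)
    (hβ : ∀ i ∈ Finset.Icc 1 (k - 1), 0 < β i)
    (hU : ∀ i ∈ Finset.Icc 1 (k - 1), 0 < U i)
    (hC : ∀ i ∈ Finset.Icc 1 (k - 1), 0 ≤ C i)
    (hsumαU : ∑ i ∈ Finset.Icc 1 (k - 1), α i * U i < 1)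
    (t : ℕ → ℝ) (ht1 : 0 ≤ t 1)
    (htmono : ∀ i j : ℕ, 1 ≤ i → i ≤ j → j ≤ k → t i ≤ t j)
    (htk : t k = Ck + (∑ i ∈ Finset.Icc 1 (k - 1), α i * t i * U i)
      + (∑ i ∈ Finset.Icc 1 (k - 1), β i * C i))
    (hgt : ∀ j ∈ Finset.Icc 1 (k - 1),
      t j < Ck + (∑ i ∈ Finset.Icc 1 (k - 1), α i * t i * U i)
        + (∑ i ∈ Finset.Icc 1 (j - 1), β i * C i)) :
    t k ≤ (Ck + (∑ i ∈ Finset.Icc 1 (k - 1), β i * C i)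
      - ∑ i ∈ Finset.Icc 1 (k - 1), α i * U i * ∑ ℓ ∈ Finset.Icc i (k - 1), β ℓ * C ℓ)
      / (1 - ∑ i ∈ Finset.Icc 1 (k - 1), α i * U i) := by
  set S := ∑ i ∈ Finset.Icc 1 (k - 1), α i * U i with hS
  have h1S : 0 < 1 - S := by linarith
  rw [le_div_iff₀ h1S]
  have key : ∀ i ∈ Finset.Icc 1 (k - 1),
      α i * t i * U i ≤ α i * U i * (t k - ∑ ℓ ∈ Finset.Icc i (k - 1), β ℓ * C ℓ) := by
    intro i hi
    obtain ⟨hi1, hik⟩ := Finset.mem_Icc.mp hi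
    have hsplit : (∑ ℓ ∈ Finset.Icc 1 (i - 1), β ℓ * C ℓ)
        + ∑ ℓ ∈ Finset.Icc i (k - 1), β ℓ * C ℓ
        = ∑ ℓ ∈ Finset.Icc 1 (k - 1), β ℓ * C ℓ := by
      have e1 : Finset.Icc 1 (i - 1) = Finset.Ico 1 i := by
        rw [← Finset.Ico_add_one_right_eq_Icc]; congr 1; omega
      have e2 : Finset.Icc i (k - 1) = Finset.Ico i k := by
        rw [← Finset.Ico_add_one_right_eq_Icc]; congr 1; omega
      have e3 : Finset.Icc 1 (k - 1) = Finset.Ico 1 k := by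
        rw [← Finset.Ico_add_one_right_eq_Icc]; congr 1; omega
      rw [e1, e2, e3]
      exact Finset.sum_Ico_consecutive _ hi1 (by omega)
    have hti : t i ≤ t k - ∑ ℓ ∈ Finset.Icc i (k - 1), β ℓ * C ℓ := by
      have := hgt i hi
      rw [htk]; linarith
    have hαU : 0 ≤ α i * U i := le_of_lt (mul_pos (hα i hi) (hU i hi))
    calc α i * t i * U i = α i * U i * t i := by ring
      _ ≤ _ := mul_le_mul_of_nonneg_left hti hαU
  have hsum := Finset.sum_le_sum key
  have expand : ∑ i ∈ Finset.Icc 1 (k - 1),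
      α i * U i * (t k - ∑ ℓ ∈ Finset.Icc i (k - 1), β ℓ * C ℓ)
      = S * t k - ∑ i ∈ Finset.Icc 1 (k - 1),
        α i * U i * ∑ ℓ ∈ Finset.Icc i (k - 1), β ℓ * C ℓ := by
    rw [hS, Finset.sum_mul, ← Finset.sum_sub_distrib]
    exact Finset.sum_congr rfl fun i _ => by ring
  rw [expand] at hsum
  nlinarith [hsum, htk]
end

section
/- Let D > 0 and C > 0 be reals, and let the higher-priority tasks be indexed i = 1,…,n with periods T_i > 0, execution times C_i ≥ 0, and utilizations U_i = C_i/T_i. Let H1 = { i : T_i < D } and H2 = { i : T_i ≥ D }, and set C' = C + Σ_{i∈H2} C_i. If (C'/D + 1)·∏_{i∈H1} (U_i + 1) ≤ 2, then there exists a real t with 0 < t ≤ D such that C + Σ_{i=1}^{n} ⌈t/T_i⌉·C_i ≤ t. -/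
open Finset in
lemma lemA (s U : ℕ → ℝ) (S : Finset ℕ) :
    ∀ K : ℝ, 0 < K →
    (∀ i ∈ S, 0 ≤ s i) → (∀ i ∈ S, 0 ≤ U i) →
    (∀ j ∈ S, s j < K + (∑ i ∈ S.filter (fun i => s j ≤ s i), s i * U i)
        + 2 * ∑ i ∈ S.filter (fun i => ¬ s j ≤ s i), s i * U i) →
    (K + 2 * ∑ i ∈ S, s i * U i) * (2 - ∏ i ∈ S, (U i + 1)) ≤ K * ∏ i ∈ S, (U i + 1) := by
  induction S using Finset.strongInduction with
  | _ S IH =>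
    intro K hK h0s h0U hyp
    rcases S.eq_empty_or_nonempty with rfl | hne
    · simp
      linarith
    · obtain ⟨m, hmS, hmax⟩ := S.exists_max_image s hne
      set S' := S.erase m with hS'
      have hm' : m ∉ S' := Finset.notMem_erase m S
      have hins : insert m S' = S := Finset.insert_erase hmS
      have hsub : S' ⊂ S := Finset.erase_ssubset hmS
      have hsm0 : 0 ≤ s m := h0s m hmS
      have hum0 : 0 ≤ U m := h0U m hmS
      have hK'' : 0 < K + s m * U m := by nlinarith
      have hmem' : ∀ i ∈ S', i ∈ S := fun i hi => Finset.mem_of_mem_erase hi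
      -- reduced hypothesis
      have hyp' : ∀ j ∈ S', s j < (K + s m * U m)
          + (∑ i ∈ S'.filter (fun i => s j ≤ s i), s i * U i)
          + 2 * ∑ i ∈ S'.filter (fun i => ¬ s j ≤ s i), s i * U i := by
        intro j hj
        have hjS := hmem' j hj
        have h := hyp j hjS
        have e1 : S.filter (fun i => s j ≤ s i)
            = insert m (S'.filter (fun i => s j ≤ s i)) := by
          rw [← hins, Finset.filter_insert, if_pos (hmax j hjS)]
        have e2 : S.filter (fun i => ¬ s j ≤ s i)
            = S'.filter (fun i => ¬ s j ≤ s i) := by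
          rw [← hins, Finset.filter_insert, if_neg (not_not_intro (hmax j hjS))]
        have hmf : m ∉ S'.filter (fun i => s j ≤ s i) :=
          fun hmm => hm' (Finset.mem_of_mem_filter m hmm)
        rw [e1, Finset.sum_insert hmf, e2] at h
        linarith
      have hIH := IH S' hsub (K + s m * U m) hK''
        (fun i hi => h0s i (hmem' i hi)) (fun i hi => h0U i (hmem' i hi)) hyp'
      -- point inequality for m
      have hpt : s m < (K + s m * U m) + 2 * ∑ i ∈ S', s i * U i := by
        have h := hyp m hmS
        have e1 : S.filter (fun i => s m ≤ s i)
            = insert m (S'.filter (fun i => s m ≤ s i)) := by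
          rw [← hins, Finset.filter_insert, if_pos le_rfl]
        have e2 : S.filter (fun i => ¬ s m ≤ s i)
            = S'.filter (fun i => ¬ s m ≤ s i) := by
          rw [← hins, Finset.filter_insert, if_neg (not_not_intro le_rfl)]
        have hmf : m ∉ S'.filter (fun i => s m ≤ s i) :=
          fun hmm => hm' (Finset.mem_of_mem_filter m hmm)
        rw [e1, Finset.sum_insert hmf, e2] at h
        have hsplit := Finset.sum_filter_add_sum_filter_not S' (fun i => s m ≤ s i)
          (fun i => s i * U i)
        have h1 : (0:ℝ) ≤ ∑ i ∈ S'.filter (fun i => s m ≤ s i), s i * U i :=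
          Finset.sum_nonneg (fun i hi => mul_nonneg
            (h0s i (hmem' i (Finset.mem_of_mem_filter i hi)))
            (h0U i (hmem' i (Finset.mem_of_mem_filter i hi))))
        linarith
      -- rewrite goal over insert m S'
      rw [← hins, Finset.sum_insert hm', Finset.prod_insert hm']
      set Q := ∏ i ∈ S', (U i + 1) with hQ
      set Sg := ∑ i ∈ S', s i * U i with hSg
      have hQ1 : 1 ≤ Q := by
        rw [hQ]
        calc (1:ℝ) = ∏ _i ∈ S', 1 := by simp
          _ ≤ ∏ i ∈ S', (U i + 1) := Finset.prod_le_prod (by simp)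
              (fun i hi => by have := h0U i (hmem' i hi); linarith)
      have hSg0 : 0 ≤ Sg := Finset.sum_nonneg (fun i hi => mul_nonneg
        (h0s i (hmem' i hi)) (h0U i (hmem' i hi)))
      set t := s m
      set u := U m
      -- goal : (K + 2*(t*u + Sg)) * (2 - (u+1)*Q) ≤ K * ((u+1)*Q)
      rcases le_or_gt (2 - (u + 1) * Q) 0 with hP | hP
      · have hB : 0 ≤ K + 2 * (t * u + Sg) := by nlinarith
        have hR : 0 < K * ((u + 1) * Q) := by nlinarith
        nlinarith [mul_nonpos_of_nonneg_of_nonpos hB hP]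
      · have hQ2 : 0 < 2 - Q := by nlinarith
        have h3 : t * (2 - (u + 1) * Q) < K * Q := by
          nlinarith [mul_lt_mul_of_pos_right hpt hQ2, hIH]
        have hB2 : (K + 2 * (t * u + Sg)) * (2 - Q) ≤ K * Q + 2 * (t * u) := by
          nlinarith [hIH]
        have hmain : ((K + 2 * (t * u + Sg)) * (2 - (u + 1) * Q)) * (2 - Q)
            ≤ (K * ((u + 1) * Q)) * (2 - Q) := by
          nlinarith [mul_le_mul_of_nonneg_right hB2 hP.le, h3, hum0]
        exact le_of_mul_le_mul_right hmain hQ2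




/-- Theorem 1 (first condition): hyperbolic-bound TDA test for
constrained-deadline sporadic tasks on a uniprocessor. -/
theorem uniprocessor_hyperbolic_constrained (D C : ℝ) (hD : 0 < D) (hC : 0 < C)
    (n : ℕ) (T Ce U : ℕ → ℝ)
    (hT : ∀ i ∈ Finset.Icc 1 n, 0 < T i)
    (hCe : ∀ i ∈ Finset.Icc 1 n, 0 ≤ Ce i)
    (hU : ∀ i ∈ Finset.Icc 1 n, U i = Ce i / T i)
    (C' : ℝ)
    (hC' : C' = C + ∑ i ∈ (Finset.Icc 1 n).filter (fun i => D ≤ T i), Ce i)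
    (hcond : (C' / D + 1) *
      (∏ i ∈ (Finset.Icc 1 n).filter (fun i => T i < D), (U i + 1)) ≤ 2) :
    ∃ t : ℝ, 0 < t ∧ t ≤ D ∧
      C + (∑ i ∈ Finset.Icc 1 n, (⌈t / T i⌉ : ℝ) * Ce i) ≤ t := by
  by_contra hcon
  push_neg at hcon
  -- hcon : ∀ t, 0 < t → t ≤ D → t < C + ∑ ...
  set Ic := Finset.Icc 1 n with hIc
  set H1 := Ic.filter (fun i => T i < D) with hH1
  -- the test points
  set s : ℕ → ℝ := fun i => ((⌊D / T i⌋ : ℤ) : ℝ) * T i with hs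
  -- basic facts on H1 members
  have hH1mem : ∀ i ∈ H1, i ∈ Ic ∧ T i < D := by
    intro i hi
    exact ⟨Finset.mem_of_mem_filter i hi, (Finset.mem_filter.mp hi).2⟩
  have hfl1 : ∀ i ∈ H1, (1 : ℤ) ≤ ⌊D / T i⌋ := by
    intro i hi
    obtain ⟨hiI, hiD⟩ := hH1mem i hi
    have hTi := hT i hiI
    exact Int.le_floor.mpr (by
      rw [Int.cast_one, le_div_iff₀ hTi]
      linarith)
  have hCeU : ∀ i ∈ H1, Ce i = U i * T i := by
    intro i hi
    obtain ⟨hiI, _⟩ := hH1mem i hi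
    have hTi := hT i hiI
    rw [hU i hiI]
    field_simp
  have hU0 : ∀ i ∈ H1, 0 ≤ U i := by
    intro i hi
    obtain ⟨hiI, _⟩ := hH1mem i hi
    rw [hU i hiI]
    exact div_nonneg (hCe i hiI) (hT i hiI).le
  have hs0 : ∀ i ∈ H1, 0 < s i := by
    intro i hi
    obtain ⟨hiI, _⟩ := hH1mem i hi
    have h1 := hfl1 i hi
    have : (1 : ℝ) ≤ ((⌊D / T i⌋ : ℤ) : ℝ) := by exact_mod_cast h1
    have hTi := hT i hiI
    simp only [hs]
    nlinarith
  have hTles : ∀ i ∈ H1, T i ≤ s i := by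
    intro i hi
    obtain ⟨hiI, _⟩ := hH1mem i hi
    have : (1 : ℝ) ≤ ((⌊D / T i⌋ : ℤ) : ℝ) := by exact_mod_cast hfl1 i hi
    have hTi := hT i hiI
    simp only [hs]
    nlinarith
  have hsD : ∀ i ∈ H1, s i ≤ D := by
    intro i hi
    obtain ⟨hiI, _⟩ := hH1mem i hi
    have hTi := hT i hiI
    have h1 : ((⌊D / T i⌋ : ℤ) : ℝ) ≤ D / T i := Int.floor_le _
    have := mul_le_mul_of_nonneg_right h1 hTi.le
    rw [div_mul_cancel₀ D (ne_of_gt hTi)] at this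
    simpa [hs] using this
  -- bound (a): exact at multiples
  have hbA : ∀ i ∈ H1, ∀ x : ℝ, x ≤ s i → (⌈x / T i⌉ : ℝ) * Ce i ≤ s i * U i := by
    intro i hi x hx
    obtain ⟨hiI, _⟩ := hH1mem i hi
    have hTi := hT i hiI
    have hceil : ⌈x / T i⌉ ≤ ⌊D / T i⌋ := by
      apply Int.ceil_le.mpr
      rw [div_le_iff₀ hTi]
      simpa [hs] using hx
    have hceil' : ((⌈x / T i⌉ : ℤ) : ℝ) ≤ ((⌊D / T i⌋ : ℤ) : ℝ) := by exact_mod_cast hceil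
    have h2 : (⌈x / T i⌉ : ℝ) * Ce i ≤ ((⌊D / T i⌋ : ℤ) : ℝ) * Ce i :=
      mul_le_mul_of_nonneg_right hceil' (hCe i hiI)
    calc (⌈x / T i⌉ : ℝ) * Ce i ≤ ((⌊D / T i⌋ : ℤ) : ℝ) * Ce i := h2
      _ = s i * U i := by rw [hCeU i hi]; simp only [hs]; ring
  -- bound (b): anywhere up to D
  have hbB : ∀ i ∈ H1, ∀ x : ℝ, x ≤ D → (⌈x / T i⌉ : ℝ) * Ce i ≤ 2 * (s i * U i) := by
    intro i hi x hx
    obtain ⟨hiI, _⟩ := hH1mem i hi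
    have hTi := hT i hiI
    have hceil : ⌈x / T i⌉ ≤ ⌊D / T i⌋ + 1 := by
      apply Int.ceil_le.mpr
      push_cast
      have h1 : x / T i ≤ D / T i := (div_le_div_iff_of_pos_right hTi).mpr hx
      have h2 := Int.lt_floor_add_one (D / T i)
      linarith
    have hceil' : ((⌈x / T i⌉ : ℤ) : ℝ) ≤ ((⌊D / T i⌋ : ℤ) : ℝ) + 1 := by exact_mod_cast hceil
    have h2 : (⌈x / T i⌉ : ℝ) * Ce i ≤ (((⌊D / T i⌋ : ℤ) : ℝ) + 1) * Ce i :=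
      mul_le_mul_of_nonneg_right hceil' (hCe i hiI)
    have h3 : (((⌊D / T i⌋ : ℤ) : ℝ) + 1) * Ce i = s i * U i + T i * U i := by
      rw [hCeU i hi]; simp only [hs]; ring
    have h4 : T i * U i ≤ s i * U i :=
      mul_le_mul_of_nonneg_right (hTles i hi) (hU0 i hi)
    linarith
  -- workload inequality restricted to H1
  have hW : ∀ x : ℝ, 0 < x → x ≤ D →
      x < C' + ∑ i ∈ H1, (⌈x / T i⌉ : ℝ) * Ce i := by
    intro x hx hxD
    have h := hcon x hx hxD
    have hsplit := Finset.sum_filter_add_sum_filter_not Ic (fun i => T i < D)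
      (fun i => (⌈x / T i⌉ : ℝ) * Ce i)
    have hfe : Ic.filter (fun i => ¬ T i < D) = Ic.filter (fun i => D ≤ T i) :=
      Finset.filter_congr (fun i _ => by rw [not_lt])
    have hH2sum : ∑ i ∈ Ic.filter (fun i => D ≤ T i), (⌈x / T i⌉ : ℝ) * Ce i
        = ∑ i ∈ Ic.filter (fun i => D ≤ T i), Ce i := by
      apply Finset.sum_congr rfl
      intro i hi
      obtain ⟨hiI, hiD⟩ := Finset.mem_filter.mp hi
      have hTi := hT i hiI
      have hc1 : ⌈x / T i⌉ = 1 := by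
        have hle : ⌈x / T i⌉ ≤ 1 := Int.ceil_le.mpr (by
          rw [Int.cast_one, div_le_one hTi]; linarith)
        have hge : (1 : ℤ) ≤ ⌈x / T i⌉ := by
          have : (0 : ℤ) < ⌈x / T i⌉ := Int.ceil_pos.mpr (div_pos hx hTi)
          omega
        omega
      rw [hc1]
      norm_num
    rw [hfe, hH2sum] at hsplit
    rw [hC']
    linarith
  -- hypothesis of lemA
  have hC'pos : 0 < C' := by
    rw [hC']
    have : (0:ℝ) ≤ ∑ i ∈ Ic.filter (fun i => D ≤ T i), Ce i :=
      Finset.sum_nonneg (fun i hi => hCe i (Finset.mem_of_mem_filter i hi))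
    linarith
  have hhyp : ∀ j ∈ H1, s j < C'
      + (∑ i ∈ H1.filter (fun i => s j ≤ s i), s i * U i)
      + 2 * ∑ i ∈ H1.filter (fun i => ¬ s j ≤ s i), s i * U i := by
    intro j hj
    have h := hW (s j) (hs0 j hj) (hsD j hj)
    have hsplit := Finset.sum_filter_add_sum_filter_not H1 (fun i => s j ≤ s i)
      (fun i => (⌈s j / T i⌉ : ℝ) * Ce i)
    have hA : ∑ i ∈ H1.filter (fun i => s j ≤ s i), (⌈s j / T i⌉ : ℝ) * Ce i
        ≤ ∑ i ∈ H1.filter (fun i => s j ≤ s i), s i * U i := by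
      apply Finset.sum_le_sum
      intro i hi
      obtain ⟨hiH, hji⟩ := Finset.mem_filter.mp hi
      exact hbA i hiH (s j) hji
    have hB : ∑ i ∈ H1.filter (fun i => ¬ s j ≤ s i), (⌈s j / T i⌉ : ℝ) * Ce i
        ≤ ∑ i ∈ H1.filter (fun i => ¬ s j ≤ s i), 2 * (s i * U i) := by
      apply Finset.sum_le_sum
      intro i hi
      obtain ⟨hiH, _⟩ := Finset.mem_filter.mp hi
      exact hbB i hiH (s j) (hsD j hj)
    rw [Finset.mul_sum]
    have hB' : ∑ i ∈ H1.filter (fun i => ¬ s j ≤ s i), 2 * (s i * U i)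
        = ∑ i ∈ H1.filter (fun i => ¬ s j ≤ s i), 2 * (s i * U i) := rfl
    linarith [hsplit, hA, hB]
  have hfin := lemA s U H1 C' hC'pos (fun i hi => (hs0 i hi).le) hU0 hhyp
  -- evaluate at D
  have hDb : D < C' + 2 * ∑ i ∈ H1, s i * U i := by
    have h := hW D hD le_rfl
    have hbb : ∑ i ∈ H1, (⌈D / T i⌉ : ℝ) * Ce i ≤ ∑ i ∈ H1, 2 * (s i * U i) :=
      Finset.sum_le_sum (fun i hi => hbB i hi D le_rfl)
    rw [Finset.mul_sum]
    linarith
  -- final contradiction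
  set P := ∏ i ∈ H1, (U i + 1) with hP
  set Sg := ∑ i ∈ H1, s i * U i with hSg
  have hP1 : 1 ≤ P := by
    rw [hP]
    calc (1:ℝ) = ∏ _i ∈ H1, 1 := by simp
      _ ≤ ∏ i ∈ H1, (U i + 1) := Finset.prod_le_prod (by simp)
          (fun i hi => by have := hU0 i hi; linarith)
  have h2D : C' * P + D * P ≤ 2 * D := by
    have h := mul_le_mul_of_nonneg_right hcond hD.le
    have e : (C' / D + 1) * P * D = C' * P + D * P := by
      field_simp
    rw [e] at h
    linarith
  have hPlt2 : 0 < 2 - P := by nlinarith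
  have hlast : D * (2 - P) < (C' + 2 * Sg) * (2 - P) :=
    mul_lt_mul_of_pos_right hDb hPlt2
  nlinarith [hfin, hlast, h2D]
end

section
/- Let D > 0 and C > 0 be reals, and let the higher-priority tasks be indexed i = 1,…,n with periods T_i > 0, execution times C_i ≥ 0, and utilizations U_i = C_i/T_i. Let H1 = { i : T_i < D } and H2 = { i : T_i ≥ D }, set C' = C + Σ_{i∈H2} C_i, and let m = |H1| + 1. If C'/D + Σ_{i∈H1} U_i ≤ m·(2^{1/m} − 1), then there exists a real t with 0 < t ≤ D such that C + Σ_{i=1}^{n} ⌈t/T_i⌉·C_i ≤ t. -/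
open Finset

private lemma one_add_sum_le_prod' (F : Finset ℕ) (u : ℕ → ℝ) (hu : ∀ i ∈ F, 0 ≤ u i) :
    1 + ∑ i ∈ F, u i ≤ ∏ i ∈ F, (1 + u i) := by
  classical
  induction F using Finset.cons_induction with
  | empty => simp
  | cons a F ha ih =>
    rw [Finset.sum_cons, Finset.prod_cons]
    have h1 := ih (fun i hi => hu i (Finset.mem_cons_of_mem hi))
    have hua : 0 ≤ u a := hu a (Finset.mem_cons_self ..)
    have hs : 0 ≤ ∑ i ∈ F, u i :=
      Finset.sum_nonneg fun i hi => hu i (Finset.mem_cons_of_mem hi)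
    nlinarith

private lemma gm2 (k : ℕ) (hk : 1 ≤ k) (P : ℝ) (hP : 0 < P) :
    ((k : ℝ) + 1) * (2 : ℝ) ^ ((1 : ℝ) / ((k : ℝ) + 1)) ≤
      2 / P + (k : ℝ) * P ^ ((1 : ℝ) / (k : ℝ)) := by
  have hK : (1 : ℝ) ≤ (k : ℝ) := by exact_mod_cast hk
  have hK0 : (0 : ℝ) < (k : ℝ) := by linarith
  set K : ℝ := (k : ℝ)
  set M : ℝ := K + 1 with hM
  have hM0 : 0 < M := by positivity
  have hPK : (0:ℝ) ≤ P ^ ((1:ℝ)/K) := (Real.rpow_pos_of_pos hP _).le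
  have key := Real.geom_mean_le_arith_mean2_weighted
    (w₁ := 1/M) (w₂ := K/M) (p₁ := 2*M/P) (p₂ := M * P ^ ((1:ℝ)/K))
    (by positivity) (by positivity) (by positivity) (by positivity)
    (by field_simp; linarith)
  have hsum : (1/M) * (2*M/P) + (K/M) * (M * P ^ ((1:ℝ)/K))
      = 2/P + K * P ^ ((1:ℝ)/K) := by
    field_simp
  have hprod : (2*M/P) ^ ((1:ℝ)/M) * (M * P ^ ((1:ℝ)/K)) ^ (K/M)
      = M * 2 ^ ((1:ℝ)/M) := by
    rw [Real.div_rpow (by positivity) hP.le, Real.mul_rpow (by norm_num) hM0.le,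
      Real.mul_rpow hM0.le hPK]
    rw [← Real.rpow_mul hP.le]
    have h1 : (1:ℝ)/K * (K/M) = 1/M := by field_simp
    rw [h1]
    have h2 : M ^ ((1:ℝ)/M) * M ^ (K/M) = M := by
      rw [← Real.rpow_add hM0]
      have : (1:ℝ)/M + K/M = 1 := by field_simp; linarith
      rw [this, Real.rpow_one]
    have hPM : (0:ℝ) < P ^ ((1:ℝ)/M) := Real.rpow_pos_of_pos hP _
    have h3 : 2 ^ ((1:ℝ)/M) * M ^ ((1:ℝ)/M) / P ^ ((1:ℝ)/M) * (M ^ (K/M) * P ^ ((1:ℝ)/M))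
        = 2 ^ ((1:ℝ)/M) * (M ^ ((1:ℝ)/M) * M ^ (K/M)) * (P ^ ((1:ℝ)/M) / P ^ ((1:ℝ)/M)) := by
      ring
    rw [h3, h2, div_self hPM.ne', mul_one]
    ring
  rw [hprod, hsum] at key
  linarith
private lemma one_le_prod_one_add (F : Finset ℕ) (u : ℕ → ℝ) (hu : ∀ i ∈ F, 0 ≤ u i) :
    1 ≤ ∏ i ∈ F, (1 + u i) := by
  have h1 := one_add_sum_le_prod' F u hu
  have h2 : 0 ≤ ∑ i ∈ F, u i := Finset.sum_nonneg hu
  linarith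

private lemma sumclaim (s : Finset ℕ) (x u : ℕ → ℝ) (A : ℝ) (hA : 0 < A)
    (hu : ∀ i ∈ s, 0 ≤ u i)
    (hfail : ∀ j ∈ s, x j < A + ∑ i ∈ s.filter (fun i => x i < x j), x i * u i) :
    ∀ N : ℕ, ∀ t : ℝ, (s.filter (fun i => x i < t)).card ≤ N →
      ∑ i ∈ s.filter (fun i => x i < t), x i * u i
        ≤ A * (∏ i ∈ s.filter (fun i => x i < t), (1 + u i) - 1) := by
  classical
  intro N
  induction N with
  | zero =>
    intro t ht
    have he : s.filter (fun i => x i < t) = ∅ := Finset.card_eq_zero.mp (Nat.le_zero.mp ht)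
    simp [he]
  | succ N ih =>
    intro t ht
    by_cases hne : (s.filter (fun i => x i < t)).Nonempty
    case neg =>
      rw [Finset.not_nonempty_iff_eq_empty] at hne
      simp [hne]
    case pos =>
    obtain ⟨i₀, hi₀F, hmax⟩ := Finset.exists_max_image _ x hne
    have hi₀s : i₀ ∈ s := (Finset.mem_filter.mp hi₀F).1
    have hi₀t : x i₀ < t := (Finset.mem_filter.mp hi₀F).2
    set F := s.filter (fun i => x i < t) with hF
    set F' := s.filter (fun i => x i < x i₀) with hF'
    have hsub : F' ⊆ F := by
      intro i hi
      rw [Finset.mem_filter] at hi ⊢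
      exact ⟨hi.1, hi.2.trans hi₀t⟩
    have hsubE : F' ⊆ F.erase i₀ := by
      intro i hi
      rw [Finset.mem_erase]
      refine ⟨fun h => ?_, hsub hi⟩
      subst h
      exact lt_irrefl _ (Finset.mem_filter.mp hi).2
    have hcard' : F'.card ≤ N := by
      have := Finset.card_le_card hsubE
      rw [Finset.card_erase_of_mem hi₀F] at this
      omega
    have hIH := ih (x i₀) hcard'
    set P' := ∏ i ∈ F', (1 + u i) with hP'
    have hP'1 : 1 ≤ P' :=
      one_le_prod_one_add F' u (fun i hi => hu i (Finset.mem_filter.mp hi).1)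
    have ht' : x i₀ < A * P' := by
      have := hfail i₀ hi₀s
      calc x i₀ < A + ∑ i ∈ F', x i * u i := this
        _ ≤ A + A * (P' - 1) := by linarith
        _ = A * P' := by ring
    -- split F
    have hFsplit : F.filter (fun i => x i < x i₀) = F' := by
      ext i
      simp only [hF, hF', Finset.mem_filter]
      constructor
      · rintro ⟨⟨h1, _⟩, h3⟩; exact ⟨h1, h3⟩
      · rintro ⟨h1, h2⟩; exact ⟨⟨h1, h2.trans hi₀t⟩, h2⟩
    have hsum_split := Finset.sum_filter_add_sum_filter_not F (fun i => x i < x i₀)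
      (fun i => x i * u i)
    have hprod_split := Finset.prod_filter_mul_prod_filter_not F (fun i => x i < x i₀)
      (fun i => 1 + u i)
    rw [hFsplit] at hsum_split hprod_split
    set G := F.filter (fun i => ¬ x i < x i₀) with hG
    have hGs : ∀ i ∈ G, i ∈ s := fun i hi =>
      (Finset.mem_filter.mp (Finset.mem_filter.mp hi).1).1
    have hGx : ∀ i ∈ G, x i = x i₀ := by
      intro i hi
      rw [Finset.mem_filter] at hi
      exact le_antisymm (hmax i hi.1) (not_lt.mp hi.2)
    have hGsum : ∑ i ∈ G, x i * u i ≤ A * P' * (∏ i ∈ G, (1 + u i) - 1) := by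
      have h1 : ∑ i ∈ G, x i * u i ≤ ∑ i ∈ G, A * P' * u i := by
        apply Finset.sum_le_sum
        intro i hi
        rw [hGx i hi]
        exact mul_le_mul_of_nonneg_right ht'.le (hu i (hGs i hi))
      have h2 : 1 + ∑ i ∈ G, u i ≤ ∏ i ∈ G, (1 + u i) :=
        one_add_sum_le_prod' G u (fun i hi => hu i (hGs i hi))
      have hAP' : 0 ≤ A * P' := by positivity
      calc ∑ i ∈ G, x i * u i ≤ A * P' * ∑ i ∈ G, u i := by
            rw [← Finset.mul_sum] at h1; exact h1
        _ ≤ A * P' * (∏ i ∈ G, (1 + u i) - 1) := by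
            apply mul_le_mul_of_nonneg_left _ hAP'
            linarith
    have hPG1 : 1 ≤ ∏ i ∈ G, (1 + u i) :=
      one_le_prod_one_add G u (fun i hi => hu i (hGs i hi))
    calc ∑ i ∈ F, x i * u i = ∑ i ∈ F', x i * u i + ∑ i ∈ G, x i * u i := hsum_split.symm
      _ ≤ A * (P' - 1) + A * P' * (∏ i ∈ G, (1 + u i) - 1) := by linarith
      _ = A * (P' * ∏ i ∈ G, (1 + u i) - 1) := by ring
      _ = A * (∏ i ∈ F, (1 + u i) - 1) := by rw [hprod_split]

private lemma amgm_prod (F : Finset ℕ) (u : ℕ → ℝ) (hu : ∀ i ∈ F, 0 ≤ u i) (hF : F.Nonempty) :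
    (F.card : ℝ) * (∏ i ∈ F, (1 + u i)) ^ ((1:ℝ)/(F.card:ℝ)) ≤ (F.card:ℝ) + ∑ i ∈ F, u i := by
  have hk0 : (0:ℝ) < (F.card : ℝ) := by exact_mod_cast Finset.card_pos.mpr hF
  have key := Real.geom_mean_le_arith_mean_weighted F (fun _ => 1/(F.card:ℝ))
    (fun i => 1 + u i)
    (fun i _ => by positivity)
    (by rw [Finset.sum_const, nsmul_eq_mul]; field_simp)
    (fun i hi => by have := hu i hi; linarith)
  rw [Real.finset_prod_rpow F _ (fun i hi => by have := hu i hi; linarith)] at key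
  have hrhs : ∑ i ∈ F, (1/(F.card:ℝ)) * (1 + u i)
      = (1/(F.card:ℝ)) * ((F.card:ℝ) + ∑ i ∈ F, u i) := by
    rw [← Finset.mul_sum, Finset.sum_add_distrib, Finset.sum_const, nsmul_eq_mul, mul_one]
  rw [hrhs] at key
  have := mul_le_mul_of_nonneg_left key hk0.le
  calc (F.card : ℝ) * (∏ i ∈ F, (1 + u i)) ^ ((1:ℝ)/(F.card:ℝ))
      ≤ (F.card:ℝ) * ((1/(F.card:ℝ)) * ((F.card:ℝ) + ∑ i ∈ F, u i)) := this
    _ = (F.card:ℝ) + ∑ i ∈ F, u i := by field_simp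

set_option maxHeartbeats 1600000 in
/-- Theorem 1 (second condition): Liu-and-Layland-style utilization-bound TDA
test for constrained-deadline sporadic tasks on a uniprocessor. -/
theorem uniprocessor_utilization_constrained (D C : ℝ) (hD : 0 < D) (hC : 0 < C)
    (n : ℕ) (T Ce U : ℕ → ℝ)
    (hT : ∀ i ∈ Finset.Icc 1 n, 0 < T i)
    (hCe : ∀ i ∈ Finset.Icc 1 n, 0 ≤ Ce i)
    (hU : ∀ i ∈ Finset.Icc 1 n, U i = Ce i / T i)
    (C' : ℝ)
    (hC' : C' = C + ∑ i ∈ (Finset.Icc 1 n).filter (fun i => D ≤ T i), Ce i)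
    (m : ℕ)
    (hm : m = ((Finset.Icc 1 n).filter (fun i => T i < D)).card + 1)
    (hcond : C' / D + (∑ i ∈ (Finset.Icc 1 n).filter (fun i => T i < D), U i) ≤
      (m : ℝ) * ((2 : ℝ) ^ ((1 : ℝ) / (m : ℝ)) - 1)) :
    ∃ t : ℝ, 0 < t ∧ t ≤ D ∧
      C + (∑ i ∈ Finset.Icc 1 n, (⌈t / T i⌉ : ℝ) * Ce i) ≤ t := by
  classical
  by_contra hcon
  push_neg at hcon
  set s : Finset ℕ := (Finset.Icc 1 n).filter (fun i => T i < D) with hs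
  set x : ℕ → ℝ := fun i => ((⌊D / T i⌋ : ℤ) : ℝ) * T i with hx
  -- basic facts about members of s
  have hmem : ∀ i ∈ s, i ∈ Finset.Icc 1 n ∧ T i < D := fun i hi => Finset.mem_filter.mp hi
  have hTpos : ∀ i ∈ s, 0 < T i := fun i hi => hT i (hmem i hi).1
  have hfl : ∀ i ∈ s, (1:ℝ) ≤ ((⌊D / T i⌋ : ℤ) : ℝ) := by
    intro i hi
    have h1 : (1:ℤ) ≤ ⌊D / T i⌋ := by
      apply Int.le_floor.mpr
      push_cast
      rw [le_div_iff₀ (hTpos i hi)]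
      linarith [(hmem i hi).2]
    exact_mod_cast h1
  have hxpos : ∀ i ∈ s, 0 < x i := fun i hi =>
    mul_pos (lt_of_lt_of_le one_pos (hfl i hi)) (hTpos i hi)
  have hxleD : ∀ i ∈ s, x i ≤ D := by
    intro i hi
    have h1 : ((⌊D / T i⌋ : ℤ) : ℝ) ≤ D / T i := Int.floor_le _
    rw [hx]
    calc ((⌊D / T i⌋ : ℤ) : ℝ) * T i ≤ (D / T i) * T i :=
          mul_le_mul_of_nonneg_right h1 (hTpos i hi).le
      _ = D := by rw [div_mul_cancel₀ _ (hTpos i hi).ne']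
  have hDlt : ∀ i ∈ s, D < x i + T i := by
    intro i hi
    have h1 : D / T i < ((⌊D / T i⌋ : ℤ) : ℝ) + 1 := Int.lt_floor_add_one _
    have := mul_lt_mul_of_pos_right h1 (hTpos i hi)
    rw [div_mul_cancel₀ _ (hTpos i hi).ne'] at this
    rw [hx]; dsimp only; nlinarith
  have hUnn : ∀ i ∈ s, 0 ≤ U i := by
    intro i hi
    rw [hU i (hmem i hi).1]
    exact div_nonneg (hCe i (hmem i hi).1) (hTpos i hi).le
  have hxU : ∀ i ∈ s, x i * U i = ((⌊D / T i⌋ : ℤ) : ℝ) * Ce i := by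
    intro i hi
    rw [hU i (hmem i hi).1, hx]
    field_simp [(hTpos i hi).ne']
  have hCeTU : ∀ i ∈ s, Ce i = T i * U i := by
    intro i hi
    rw [hU i (hmem i hi).1]
    field_simp [(hTpos i hi).ne']
  set A : ℝ := C' + ∑ i ∈ s, x i * U i with hA
  have hC'pos : 0 < C' := by
    rw [hC']
    have : 0 ≤ ∑ i ∈ (Finset.Icc 1 n).filter (fun i => D ≤ T i), Ce i :=
      Finset.sum_nonneg fun i hi => hCe i (Finset.mem_filter.mp hi).1
    linarith
  have hApos : 0 < A := by
    have : 0 ≤ ∑ i ∈ s, x i * U i :=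
      Finset.sum_nonneg fun i hi => mul_nonneg (hxpos i hi).le (hUnn i hi)
    rw [hA]; linarith
  -- demand bound
  have hdem : ∀ t : ℝ, 0 < t → t ≤ D →
      C + ∑ i ∈ Finset.Icc 1 n, (⌈t / T i⌉ : ℝ) * Ce i ≤
        A + ∑ i ∈ s.filter (fun i => x i < t), x i * U i := by
    intro t ht0 htD
    have hsplit := Finset.sum_filter_add_sum_filter_not (Finset.Icc 1 n)
      (fun i => T i < D) (fun i => (⌈t / T i⌉ : ℝ) * Ce i)
    have hcomp : ∑ i ∈ (Finset.Icc 1 n).filter (fun i => ¬ T i < D),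
        (⌈t / T i⌉ : ℝ) * Ce i
        = ∑ i ∈ (Finset.Icc 1 n).filter (fun i => D ≤ T i), Ce i := by
      rw [show ((Finset.Icc 1 n).filter (fun i => ¬ T i < D))
          = ((Finset.Icc 1 n).filter (fun i => D ≤ T i)) from by
        apply Finset.filter_congr; intro i _; simp [not_lt]]
      apply Finset.sum_congr rfl
      intro i hi
      obtain ⟨hiIcc, hiD⟩ := Finset.mem_filter.mp hi
      have hTi := hT i hiIcc
      have hceil : ⌈t / T i⌉ = 1 := by
        have h1 : ⌈t / T i⌉ ≤ 1 := by
          apply Int.ceil_le.mpr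
          push_cast
          rw [div_le_one hTi]
          linarith
        have h2 : 0 < ⌈t / T i⌉ := Int.ceil_pos.mpr (div_pos ht0 hTi)
        omega
      rw [hceil]
      push_cast
      ring
    have hfb : ∑ i ∈ s, (⌈t / T i⌉ : ℝ) * Ce i
        ≤ ∑ i ∈ s, x i * U i + ∑ i ∈ s.filter (fun i => x i < t), x i * U i := by
      have hsf : ∑ i ∈ s.filter (fun i => x i < t), x i * U i
          = ∑ i ∈ s, if x i < t then x i * U i else 0 := Finset.sum_filter _ _
      rw [hsf, ← Finset.sum_add_distrib]
      apply Finset.sum_le_sum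
      intro i hi
      have hiIcc := (hmem i hi).1
      have hTi := hTpos i hi
      have hCenn := hCe i hiIcc
      by_cases hxt : x i < t
      · rw [if_pos hxt]
        have hceil : (⌈t / T i⌉ : ℝ) ≤ ((⌊D / T i⌋ : ℤ) : ℝ) + 1 := by
          have h1 : ⌈t / T i⌉ ≤ ⌊D / T i⌋ + 1 := by
            apply Int.ceil_le.mpr
            push_cast
            rw [div_le_iff₀ hTi]
            have := hDlt i hi
            rw [hx] at this
            dsimp only at this ⊢
            nlinarith
          exact_mod_cast h1
        have h2 : (⌈t / T i⌉ : ℝ) * Ce i ≤ (((⌊D / T i⌋ : ℤ) : ℝ) + 1) * Ce i :=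
          mul_le_mul_of_nonneg_right hceil hCenn
        have h3 : Ce i ≤ x i * U i := by
          rw [hCeTU i hi]
          apply mul_le_mul_of_nonneg_right _ (hUnn i hi)
          calc T i = 1 * T i := (one_mul _).symm
            _ ≤ ((⌊D / T i⌋ : ℤ) : ℝ) * T i :=
              mul_le_mul_of_nonneg_right (hfl i hi) hTi.le
        have h4 := hxU i hi
        nlinarith [h2, h3, h4]
      · rw [if_neg hxt]
        have hle : t ≤ x i := not_lt.mp hxt
        have hceil : (⌈t / T i⌉ : ℝ) ≤ ((⌊D / T i⌋ : ℤ) : ℝ) := by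
          have h1 : ⌈t / T i⌉ ≤ ⌊D / T i⌋ := by
            apply Int.ceil_le.mpr
            rw [div_le_iff₀ hTi]
            rw [hx] at hle
            exact hle
          exact_mod_cast h1
        have h2 : (⌈t / T i⌉ : ℝ) * Ce i ≤ ((⌊D / T i⌋ : ℤ) : ℝ) * Ce i :=
          mul_le_mul_of_nonneg_right hceil hCenn
        rw [← hxU i hi] at h2
        linarith
    have hCs : C' = C + ∑ i ∈ (Finset.Icc 1 n).filter (fun i => D ≤ T i), Ce i := hC'
    rw [hA]
    linarith [hsplit, hcomp, hfb]
  have hfail : ∀ j ∈ s, x j < A + ∑ i ∈ s.filter (fun i => x i < x j), x i * U i := by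
    intro j hj
    exact (hcon (x j) (hxpos j hj) (hxleD j hj)).trans_le
      (hdem (x j) (hxpos j hj) (hxleD j hj))
  have hD2 : D < A + ∑ i ∈ s.filter (fun i => x i < D), x i * U i :=
    (hcon D hD le_rfl).trans_le (hdem D hD le_rfl)
  set P : ℝ := ∏ i ∈ s, (1 + U i) with hP
  have hfilterAll : s.filter (fun i => x i < D + 1) = s :=
    Finset.filter_true_of_mem (fun i hi => lt_of_le_of_lt (hxleD i hi) (by linarith))
  have hSC := sumclaim s x U A hApos hUnn hfail
  have hSumAll : ∑ i ∈ s, x i * U i ≤ A * (P - 1) := by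
    have h := hSC s.card (D + 1) (by rw [hfilterAll])
    rw [hfilterAll] at h
    rw [hP]
    exact h
  have hDP : D < A * P := by
    have h1 := hSC s.card D (Finset.card_filter_le _ _)
    have hprodD := Finset.prod_filter_mul_prod_filter_not s (fun i => x i < D)
      (fun i => 1 + U i)
    have hQ1 : 1 ≤ ∏ i ∈ s.filter (fun i => ¬ x i < D), (1 + U i) :=
      one_le_prod_one_add _ U (fun i hi => hUnn i (Finset.mem_filter.mp hi).1)
    have hPD1 : 1 ≤ ∏ i ∈ s.filter (fun i => x i < D), (1 + U i) :=
      one_le_prod_one_add _ U (fun i hi => hUnn i (Finset.mem_filter.mp hi).1)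
    rw [hP]
    nlinarith [h1, hD2, hprodD, hQ1, hPD1, hApos]
  have hC'lb : A * (2 - P) ≤ C' := by
    have hAeq : A = C' + ∑ i ∈ s, x i * U i := hA
    nlinarith [hSumAll]
  set σ : ℝ := ∑ i ∈ s, U i with hσ
  have hσnn : 0 ≤ σ := Finset.sum_nonneg hUnn
  have hP1 : 1 ≤ P := by rw [hP]; exact one_le_prod_one_add s U hUnn
  rcases Nat.eq_zero_or_pos s.card with hk0 | hkpos
  · have hse : s = ∅ := Finset.card_eq_zero.mp hk0
    have hm1 : m = 1 := by rw [hm, hk0]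
    have hPe : P = 1 := by rw [hP, hse, Finset.prod_empty]
    have hσe : σ = 0 := by rw [hσ, hse, Finset.sum_empty]
    have hAe : A = C' := by rw [hA, hse, Finset.sum_empty, add_zero]
    rw [hm1] at hcond
    simp only [Nat.cast_one, div_one, Real.rpow_one] at hcond
    rw [hσe] at hcond
    have hCD : C' ≤ D := (div_le_one hD).mp (by linarith)
    rw [hAe, hPe, mul_one] at hDP
    linarith
  · have hk1 : 1 ≤ s.card := hkpos
    have hK0 : (0:ℝ) < (s.card : ℝ) := by exact_mod_cast hkpos
    have hsne : s.Nonempty := Finset.card_pos.mp hkpos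
    have hAM := amgm_prod s U hUnn hsne
    rw [← hP, ← hσ] at hAM
    have hGM2P := gm2 s.card hk1 P (by linarith)
    have hGM22 := gm2 s.card hk1 2 (by norm_num)
    have hmcast : (m:ℝ) = (s.card:ℝ) + 1 := by rw [hm]; push_cast; ring
    rw [hmcast] at hcond
    have hC'D : 0 < C'/D := div_pos hC'pos hD
    have hexp : ((s.card:ℝ)+1)*((2:ℝ)^((1:ℝ)/((s.card:ℝ)+1)) - 1)
        = ((s.card:ℝ)+1)*(2:ℝ)^((1:ℝ)/((s.card:ℝ)+1)) - ((s.card:ℝ)+1) := by ring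
    by_cases hP2 : P ≤ 2
    · have hP0 : (0:ℝ) < P := by linarith
      have hkey : (2 - P) * D < C' * P := by
        rcases lt_or_eq_of_le hP2 with h | h
        · have h1 : (2 - P) * D < (2 - P) * (A * P) :=
            mul_lt_mul_of_pos_left hDP (by linarith)
          have h2 : A * (2 - P) * P ≤ C' * P :=
            mul_le_mul_of_nonneg_right hC'lb hP0.le
          nlinarith
        · rw [← h]
          have : (0:ℝ) < C' * P := by positivity
          linarith
      have hc : 2/P - 1 < C'/D := by
        have h3 := (div_lt_div_iff₀ hP0 hD).mpr hkey
        rw [sub_div, div_self hP0.ne'] at h3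
        exact h3
      linarith [hcond, hGM2P, hAM, hc, hexp]
    · push_neg at hP2
      have h2k : (2:ℝ)^((1:ℝ)/(s.card:ℝ)) < P^((1:ℝ)/(s.card:ℝ)) :=
        Real.rpow_lt_rpow (by norm_num) hP2 (by positivity)
      have hmul : (s.card:ℝ) * (2:ℝ)^((1:ℝ)/(s.card:ℝ))
          < (s.card:ℝ) * P^((1:ℝ)/(s.card:ℝ)) := mul_lt_mul_of_pos_left h2k hK0
      have h22 : (2:ℝ)/2 = 1 := by norm_num
      linarith [hcond, hAM, hGM22, hC'D, hexp, hmul]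
end

section
/- Let D > 0 and C > 0 be reals. Let tasks i = 1,…,n have periods T_i with 0 < T_i < D, execution times C_i ≥ 0, and utilizations U_i = C_i/T_i, indexed so that (⌈D/T_1⌉−1)·T_1 ≤ (⌈D/T_2⌉−1)·T_2 ≤ ⋯ ≤ (⌈D/T_n⌉−1)·T_n; let further tasks j = n+1,…,N have periods T_j ≥ D and execution times C_j ≥ 0, and set C' = C + Σ_{j=n+1}^{N} C_j. If Σ_{i=1}^{n} C_i/D ≤ 1 and C'/D ≤ 1 − Σ_{i=1}^{n} U_i − (Σ_{i=1}^{n} C_i)/D + (Σ_{i=1}^{n} U_i·(Σ_{ℓ=i}^{n} C_ℓ))/D, then there exists a real t with 0 < t ≤ D such that C + Σ_{i=1}^{N} ⌈t/T_i⌉·C_i ≤ t. -/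
/-- Theorem 2: quadratic-bound TDA test for constrained-deadline sporadic
tasks on a uniprocessor, with higher-priority tasks with period smaller than
`D` indexed `1,…,n` ordered by last release times, and those with period at
least `D` indexed `n+1,…,N`. -/
theorem uniprocessor_quadratic_constrained (D C : ℝ) (hD : 0 < D) (hC : 0 < C)
    (n N : ℕ) (hnN : n ≤ N) (T Ce U : ℕ → ℝ)
    (hT1 : ∀ i ∈ Finset.Icc 1 n, 0 < T i ∧ T i < D)
    (hT2 : ∀ j ∈ Finset.Icc (n + 1) N, D ≤ T j)
    (hCe : ∀ i ∈ Finset.Icc 1 N, 0 ≤ Ce i)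
    (hU : ∀ i ∈ Finset.Icc 1 n, U i = Ce i / T i)
    (hsort : ∀ i j : ℕ, 1 ≤ i → i ≤ j → j ≤ n →
      ((⌈D / T i⌉ : ℝ) - 1) * T i ≤ ((⌈D / T j⌉ : ℝ) - 1) * T j)
    (C' : ℝ) (hC' : C' = C + ∑ j ∈ Finset.Icc (n + 1) N, Ce j)
    (hsumC : ∑ i ∈ Finset.Icc 1 n, Ce i / D ≤ 1)
    (hcond : C' / D ≤ 1 - (∑ i ∈ Finset.Icc 1 n, U i)
      - (∑ i ∈ Finset.Icc 1 n, Ce i) / D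
      + (∑ i ∈ Finset.Icc 1 n, U i * ∑ ℓ ∈ Finset.Icc i n, Ce ℓ) / D) :
    ∃ t : ℝ, 0 < t ∧ t ≤ D ∧
      C + (∑ i ∈ Finset.Icc 1 N, (⌈t / T i⌉ : ℝ) * Ce i) ≤ t := by
  classical
  set τ : ℕ → ℝ := fun i => ((⌈D / T i⌉ : ℝ) - 1) * T i with hτdef
  have hτi : ∀ i, τ i = ((⌈D / T i⌉ : ℝ) - 1) * T i := fun i => rfl
  set V : ℝ := ∑ i ∈ Finset.Icc 1 n, U i with hV
  set SC : ℝ := ∑ i ∈ Finset.Icc 1 n, Ce i with hSCdef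
  set Q : ℝ := ∑ i ∈ Finset.Icc 1 n, U i * ∑ ℓ ∈ Finset.Icc i n, Ce ℓ with hQdef
  set X : ℝ := ∑ i ∈ Finset.Icc 1 n, U i * τ i with hXdef
  -- splitting lemma
  have hsplit : ∀ (f : ℕ → ℝ) (k m : ℕ), 1 ≤ k → k ≤ m + 1 →
      (∑ i ∈ Finset.Icc 1 (k-1), f i) + (∑ i ∈ Finset.Icc k m, f i)
        = ∑ i ∈ Finset.Icc 1 m, f i := by
    intro f k m hk1 hk2
    have e1 : Finset.Icc 1 (k-1) = Finset.Ico 1 k := by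
      rw [← Finset.Ico_add_one_right_eq_Icc]; congr 1; omega
    have e2 : Finset.Icc k m = Finset.Ico k (m+1) := by rw [Finset.Ico_add_one_right_eq_Icc]
    have e3 : Finset.Icc 1 m = Finset.Ico 1 (m+1) := by rw [Finset.Ico_add_one_right_eq_Icc]
    rw [e1, e2, e3]
    exact Finset.sum_Ico_consecutive f hk1 (by omega)
  -- basic facts
  have hmemN : ∀ i ∈ Finset.Icc 1 n, i ∈ Finset.Icc 1 N := by
    intro i hi; simp only [Finset.mem_Icc] at hi ⊢; omega
  have hCe1 : ∀ i ∈ Finset.Icc 1 n, 0 ≤ Ce i := fun i hi => hCe i (hmemN i hi)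
  have hUnn : ∀ i ∈ Finset.Icc 1 n, 0 ≤ U i := by
    intro i hi
    rw [hU i hi]
    exact div_nonneg (hCe1 i hi) (hT1 i hi).1.le
  have hVnn : 0 ≤ V := Finset.sum_nonneg hUnn
  have hceil2 : ∀ i ∈ Finset.Icc 1 n, (2:ℝ) ≤ (⌈D / T i⌉ : ℝ) := by
    intro i hi
    have h1 : (1:ℝ) < D / T i := (one_lt_div (hT1 i hi).1).2 (hT1 i hi).2
    have : (1:ℤ) < ⌈D / T i⌉ := Int.lt_ceil.2 (by exact_mod_cast h1)
    exact_mod_cast this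
  have hτpos : ∀ i ∈ Finset.Icc 1 n, 0 < τ i := by
    intro i hi
    rw [hτi]
    have := hceil2 i hi
    nlinarith [(hT1 i hi).1]
  have hτleD : ∀ i ∈ Finset.Icc 1 n, τ i ≤ D := by
    intro i hi
    rw [hτi]
    have hTi := (hT1 i hi).1
    have h2 : (⌈D / T i⌉ : ℝ) < D / T i + 1 := Int.ceil_lt_add_one _
    have h3 : ((⌈D / T i⌉ : ℝ) - 1) ≤ D / T i := by linarith
    calc ((⌈D / T i⌉ : ℝ) - 1) * T i ≤ (D / T i) * T i :=
          mul_le_mul_of_nonneg_right h3 hTi.le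
      _ = D := by field_simp
  have hUt : ∀ i ∈ Finset.Icc 1 n, U i * τ i = ((⌈D / T i⌉ : ℝ) - 1) * Ce i := by
    intro i hi
    have hTne : T i ≠ 0 := ne_of_gt (hT1 i hi).1
    rw [hτi, hU i hi]
    field_simp
  -- demand simplification for 0 < t ≤ D
  have hdemand : ∀ t : ℝ, 0 < t → t ≤ D →
      C + (∑ i ∈ Finset.Icc 1 N, (⌈t / T i⌉ : ℝ) * Ce i)
        = C' + ∑ i ∈ Finset.Icc 1 n, (⌈t / T i⌉ : ℝ) * Ce i := by
    intro t ht0 htD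
    have hs := hsplit (fun i => (⌈t / T i⌉ : ℝ) * Ce i) (n+1) N (by omega) (by omega)
    simp only [Nat.add_sub_cancel] at hs
    rw [← hs, hC']
    have : ∀ j ∈ Finset.Icc (n+1) N, (⌈t / T j⌉ : ℝ) * Ce j = Ce j := by
      intro j hj
      have hTj : D ≤ T j := hT2 j hj
      have hTj0 : 0 < T j := lt_of_lt_of_le hD hTj
      have hceil : ⌈t / T j⌉ = 1 := by
        rw [Int.ceil_eq_iff]
        constructor
        · push_cast
          simpa using div_pos ht0 hTj0
        · push_cast
          rw [div_le_one hTj0]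
          linarith
      rw [hceil]; norm_num
    rw [Finset.sum_congr rfl this]
    ring
  -- conversion of hcond and hsumC
  have hSCD : SC ≤ D := by
    rw [← Finset.sum_div] at hsumC
    rw [← div_le_one hD]
    exact hsumC
  have hCle : C' ≤ D - D * V - SC + Q := by
    rw [div_le_iff₀ hD] at hcond
    calc C' ≤ (1 - V - SC / D + Q / D) * D := hcond
      _ = D - D * V - SC + Q := by field_simp
  have hC'pos : 0 < C' := by
    have h0 : 0 ≤ ∑ j ∈ Finset.Icc (n+1) N, Ce j := by
      apply Finset.sum_nonneg
      intro j hj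
      apply hCe
      simp only [Finset.mem_Icc] at hj ⊢; omega
    rw [hC']; linarith
  -- case 1 : test passes at D
  by_cases hcase1 : C' + X + SC ≤ D
  · refine ⟨D, hD, le_refl D, ?_⟩
    rw [hdemand D hD (le_refl D)]
    have hsum : ∑ i ∈ Finset.Icc 1 n, (⌈D / T i⌉ : ℝ) * Ce i = X + SC := by
      rw [hXdef, hSCdef, ← Finset.sum_add_distrib]
      apply Finset.sum_congr rfl
      intro i hi
      rw [hUt i hi]
      ring
    rw [hsum]; linarith
  · -- case 2 : test passes at some τ k
    by_cases hcase2 : ∃ k ∈ Finset.Icc 1 n,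
        C' + X + (∑ i ∈ Finset.Icc 1 (k-1), Ce i) ≤ τ k
    · obtain ⟨k, hk, hkle⟩ := hcase2
      have hk' := Finset.mem_Icc.1 hk
      refine ⟨τ k, hτpos k hk, hτleD k hk, ?_⟩
      rw [hdemand (τ k) (hτpos k hk) (hτleD k hk)]
      have hb : ∑ i ∈ Finset.Icc 1 n, (⌈τ k / T i⌉ : ℝ) * Ce i
          ≤ X + ∑ i ∈ Finset.Icc 1 (k-1), Ce i := by
        rw [← hsplit (fun i => (⌈τ k / T i⌉ : ℝ) * Ce i) k n hk'.1 (by omega)]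
        have hXsplit : X = (∑ i ∈ Finset.Icc 1 (k-1), U i * τ i)
            + ∑ i ∈ Finset.Icc k n, U i * τ i := by
          rw [hXdef, hsplit (fun i => U i * τ i) k n hk'.1 (by omega)]
        rw [hXsplit]
        have hpart1 : ∑ i ∈ Finset.Icc 1 (k-1), (⌈τ k / T i⌉ : ℝ) * Ce i
            ≤ (∑ i ∈ Finset.Icc 1 (k-1), U i * τ i)
              + ∑ i ∈ Finset.Icc 1 (k-1), Ce i := by
          rw [← Finset.sum_add_distrib]
          apply Finset.sum_le_sum
          intro i hi
          have hi' : i ∈ Finset.Icc 1 n := by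
            simp only [Finset.mem_Icc] at hi ⊢; omega
          have hTi : 0 < T i := (hT1 i hi').1
          have hcc : (⌈τ k / T i⌉ : ℝ) ≤ (⌈D / T i⌉ : ℝ) := by
            have hdd : τ k / T i ≤ D / T i :=
              div_le_div_of_nonneg_right (hτleD k hk) hTi.le
            have hzz : ⌈τ k / T i⌉ ≤ ⌈D / T i⌉ := Int.ceil_le_ceil hdd
            exact_mod_cast hzz
          calc (⌈τ k / T i⌉ : ℝ) * Ce i ≤ (⌈D / T i⌉ : ℝ) * Ce i :=
                mul_le_mul_of_nonneg_right hcc (hCe1 i hi')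
            _ = U i * τ i + Ce i := by rw [hUt i hi']; ring
        have hpart2 : ∑ i ∈ Finset.Icc k n, (⌈τ k / T i⌉ : ℝ) * Ce i
            ≤ ∑ i ∈ Finset.Icc k n, U i * τ i := by
          apply Finset.sum_le_sum
          intro i hi
          have hi'' := Finset.mem_Icc.1 hi
          have hi' : i ∈ Finset.Icc 1 n := by
            simp only [Finset.mem_Icc]; omega
          have hTi : 0 < T i := (hT1 i hi').1
          have hττ : τ k ≤ τ i := hsort k i hk'.1 hi''.1 hi''.2
          have hceq : τ i / T i = (⌈D / T i⌉ : ℝ) - 1 := by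
            rw [hτi]; field_simp
          have hle2 : ⌈τ k / T i⌉ ≤ ⌈D / T i⌉ - 1 := by
            apply Int.ceil_le.2
            push_cast
            rw [← hceq]
            exact div_le_div_of_nonneg_right hττ hTi.le
          have hle3 : (⌈τ k / T i⌉ : ℝ) ≤ (⌈D / T i⌉ : ℝ) - 1 := by
            exact_mod_cast hle2
          calc (⌈τ k / T i⌉ : ℝ) * Ce i ≤ ((⌈D / T i⌉ : ℝ) - 1) * Ce i :=
                mul_le_mul_of_nonneg_right hle3 (hCe1 i hi')
            _ = U i * τ i := (hUt i hi').symm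
        linarith
      linarith
    · -- contradiction case
      exfalso
      push_neg at hcase1 hcase2
      -- key quantities
      set R : ℝ := ∑ i ∈ Finset.Icc 1 n, U i * ∑ ℓ ∈ Finset.Icc 1 (i-1), Ce ℓ
        with hRdef
      have hQR : Q + R = V * SC := by
        rw [hQdef, hRdef, ← Finset.sum_add_distrib, hV, Finset.sum_mul]
        apply Finset.sum_congr rfl
        intro i hi
        have hi' := Finset.mem_Icc.1 hi
        rw [← mul_add, hSCdef]
        congr 1
        rw [add_comm]
        exact hsplit Ce i n hi'.1 (by omega)
      have hQleVSC : Q ≤ V * SC := by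
        have hRnn : 0 ≤ R := by
          apply Finset.sum_nonneg
          intro i hi
          have hi' := Finset.mem_Icc.1 hi
          apply mul_nonneg (hUnn i hi)
          apply Finset.sum_nonneg
          intro ℓ hℓ
          have hℓ' := Finset.mem_Icc.1 hℓ
          exact hCe1 ℓ (Finset.mem_Icc.2 ⟨hℓ'.1, by omega⟩)
        linarith
      have hV1 : V < 1 := by
        by_contra h
        push_neg at h
        have prod : 0 ≤ (V - 1) * (D - SC) :=
          mul_nonneg (by linarith) (by linarith)
        nlinarith
      have hfailD : D < C' + X + SC := hcase1
      have hX1 : D * V - Q < X := by linarith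
      have hX2 : X ≤ V * C' + V * X + R := by
        have h1 : X ≤ ∑ i ∈ Finset.Icc 1 n,
            U i * (C' + X + ∑ ℓ ∈ Finset.Icc 1 (i-1), Ce ℓ) := by
          rw [hXdef]
          apply Finset.sum_le_sum
          intro i hi
          exact mul_le_mul_of_nonneg_left (hcase2 i hi).le (hUnn i hi)
        have h2 : ∑ i ∈ Finset.Icc 1 n,
            U i * (C' + X + ∑ ℓ ∈ Finset.Icc 1 (i-1), Ce ℓ)
            = V * (C' + X) + R := by
          rw [hV, hRdef, Finset.sum_mul, ← Finset.sum_add_distrib]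
          apply Finset.sum_congr rfl
          intro i hi
          ring
        calc X ≤ V * (C' + X) + R := h1.trans_eq h2
          _ = V * C' + V * X + R := by ring
      have hVC' : V * C' ≤ V * (D - D * V - SC + Q) :=
        mul_le_mul_of_nonneg_left hCle hVnn
      have key2 : X * (1 - V) ≤ V * D * (1 - V) + V * Q - Q := by nlinarith
      have h1V : (0:ℝ) < 1 - V := by linarith
      have key1 : (D * V - Q) * (1 - V) < X * (1 - V) :=
        mul_lt_mul_of_pos_right hX1 h1V
      nlinarith
end

section
/- Let T > 0, C > 0, and D > 0 be reals (D may exceed T), and let the higher-priority tasks be indexed i = 1,…,n with periods T_i > 0, execution times C_i ≥ 0, and utilizations U_i = C_i/T_i. Let H1 = { i : T_i < D } and H2 = { i : T_i ≥ D }, and set C' = ⌈D/T⌉·C + Σ_{i∈H2} C_i. If (C'/D + 1)·∏_{i∈H1} (U_i + 1) ≤ 2, then there exists a real t with 0 < t ≤ D such that ⌈t/T⌉·C + Σ_{i=1}^{n} ⌈t/T_i⌉·C_i ≤ t. -/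
open Finset

private lemma ceil_le_two' {x a : ℝ} (ha : 0 < a) (h : x ≤ 2 * a) :
    ((⌈x / a⌉ : ℤ) : ℝ) ≤ 2 := by
  have h1 : x / a ≤ ((2 : ℤ) : ℝ) := by
    rw [div_le_iff₀ ha]; push_cast; linarith
  exact_mod_cast Int.ceil_le.2 h1

private lemma telescope (a e : ℕ → ℝ) :
    ∀ (N : ℕ) (S : Finset ℕ) (c : ℝ), S.card ≤ N → 0 < c →
    (∀ i ∈ S, 0 < a i) → (∀ i ∈ S, 0 ≤ e i) →
    (∀ i ∈ S, a i < c + (∑ j ∈ S, e j) +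
      ∑ j ∈ S.filter (fun j => a j < a i), e j) →
    (c + 2 * ∑ j ∈ S, e j) / (c + ∑ j ∈ S, e j) ≤ ∏ i ∈ S, (1 + e i / a i) := by
  intro N
  induction N with
  | zero =>
    intro S c hcard hc ha he hcon
    have hS : S = ∅ := Finset.card_eq_zero.1 (Nat.le_zero.1 hcard)
    subst hS
    simp [div_self (ne_of_gt hc)]
  | succ N ih =>
    intro S c hcard hc ha he hcon
    rcases S.eq_empty_or_nonempty with hS | hS
    · subst hS; simp [div_self (ne_of_gt hc)]
    obtain ⟨i₀, hi₀S, hmin⟩ := S.exists_min_image a hS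
    set E := ∑ j ∈ S, e j with hEdef
    have hE0 : 0 ≤ E := Finset.sum_nonneg he
    have he₀ : 0 ≤ e i₀ := he i₀ hi₀S
    have ha₀ : 0 < a i₀ := ha i₀ hi₀S
    -- the filter for i₀ is empty
    have hfilt : S.filter (fun j => a j < a i₀) = ∅ := by
      apply Finset.filter_eq_empty_iff.2
      intro j hj
      exact not_lt.2 (hmin j hj)
    have h₀ : a i₀ < c + E := by
      have := hcon i₀ hi₀S
      rw [hfilt] at this
      simpa using this
    set S' := S.erase i₀ with hS'def
    have hcard' : S'.card ≤ N := by
      have h1 : S'.card = S.card - 1 := by rw [hS'def]; exact Finset.card_erase_of_mem hi₀S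
      have h2 : 0 < S.card := Finset.card_pos.2 hS
      omega
    have hsumerase : ∑ j ∈ S', e j + e i₀ = E := Finset.sum_erase_add S e hi₀S
    have hc' : 0 < c + 2 * e i₀ := by linarith
    have ha' : ∀ i ∈ S', 0 < a i := fun i hi => ha i (Finset.mem_of_mem_erase hi)
    have he' : ∀ i ∈ S', 0 ≤ e i := fun i hi => he i (Finset.mem_of_mem_erase hi)
    have hcon' : ∀ i ∈ S', a i < (c + 2 * e i₀) + (∑ j ∈ S', e j) +
        ∑ j ∈ S'.filter (fun j => a j < a i), e j := by
      intro i hi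
      have hiS : i ∈ S := Finset.mem_of_mem_erase hi
      have h1 := hcon i hiS
      have hsub : S.filter (fun j => a j < a i) ⊆
          insert i₀ (S'.filter (fun j => a j < a i)) := by
        intro j hj
        rw [Finset.mem_filter] at hj
        by_cases hji : j = i₀
        · subst hji; exact Finset.mem_insert_self _ _
        · exact Finset.mem_insert_of_mem
            (Finset.mem_filter.2 ⟨Finset.mem_erase.2 ⟨hji, hj.1⟩, hj.2⟩)
      have hnn : ∀ j ∈ insert i₀ (S'.filter (fun j => a j < a i)), 0 ≤ e j := by
        intro j hj
        rcases Finset.mem_insert.1 hj with h | h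
        · subst h; exact he₀
        · exact he j (Finset.mem_of_mem_erase (Finset.mem_filter.1 h).1)
      have h2 : ∑ j ∈ S.filter (fun j => a j < a i), e j ≤
          ∑ j ∈ insert i₀ (S'.filter (fun j => a j < a i)), e j :=
        Finset.sum_le_sum_of_subset_of_nonneg hsub (fun j hj _ => hnn j hj)
      have hnotmem : i₀ ∉ S'.filter (fun j => a j < a i) := by
        intro hmem
        exact (Finset.notMem_erase i₀ S) (Finset.mem_filter.1 hmem).1
      rw [Finset.sum_insert hnotmem] at h2
      linarith
    have hIH := ih S' (c + 2 * e i₀) hcard' hc' ha' he' hcon'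
    -- rewrite the IH values
    have hE' : ∑ j ∈ S', e j = E - e i₀ := by linarith
    rw [hE'] at hIH
    have hIH2 : (c + 2 * E) / (c + E + e i₀) ≤ ∏ i ∈ S', (1 + e i / a i) := by
      have e1 : c + 2 * e i₀ + 2 * (E - e i₀) = c + 2 * E := by ring
      have e2 : c + 2 * e i₀ + (E - e i₀) = c + E + e i₀ := by ring
      rwa [e1, e2] at hIH
    -- factor bound
    have hcE : 0 < c + E := by linarith
    have hfac : (c + E + e i₀) / (c + E) ≤ 1 + e i₀ / a i₀ := by
      have h1 : e i₀ / (c + E) ≤ e i₀ / a i₀ := by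
        gcongr
      have h2 : (c + E + e i₀) / (c + E) = 1 + e i₀ / (c + E) := by
        rw [add_div, div_self (ne_of_gt hcE)]
      linarith
    -- combine
    have hprodsplit : (1 + e i₀ / a i₀) * ∏ i ∈ S', (1 + e i / a i) =
        ∏ i ∈ S, (1 + e i / a i) := by
      rw [hS'def]; exact Finset.mul_prod_erase S (fun i => 1 + e i / a i) hi₀S
    have hpos1 : 0 ≤ (c + 2 * E) / (c + E + e i₀) := by positivity
    have hpos2 : 0 ≤ 1 + e i₀ / a i₀ := by positivity
    have hmul : ((c + E + e i₀) / (c + E)) * ((c + 2 * E) / (c + E + e i₀)) ≤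
        (1 + e i₀ / a i₀) * ∏ i ∈ S', (1 + e i / a i) :=
      mul_le_mul hfac hIH2 hpos1 hpos2
    have hid : ((c + E + e i₀) / (c + E)) * ((c + 2 * E) / (c + E + e i₀)) =
        (c + 2 * E) / (c + E) := by
      have hp : (0:ℝ) < c + E + e i₀ := by linarith
      field_simp
    rw [hid, hprodsplit] at hmul
    exact hmul

private lemma core (D : ℝ) (hD : 0 < D) (S : Finset ℕ) (a e : ℕ → ℝ) (c : ℝ) (hc : 0 < c)
    (ha : ∀ i ∈ S, 0 < a i) (haD : ∀ i ∈ S, a i ≤ D) (h2a : ∀ i ∈ S, D ≤ 2 * a i)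
    (he : ∀ i ∈ S, 0 ≤ e i)
    (hcond : (c / D + 1) * ∏ i ∈ S, (1 + e i / a i) ≤ 2) :
    ∃ t, 0 < t ∧ t ≤ D ∧ c + ∑ i ∈ S, (⌈t / a i⌉ : ℝ) * e i ≤ t := by
  classical
  set E := ∑ i ∈ S, e i with hEdef
  have hE0 : 0 ≤ E := Finset.sum_nonneg he
  by_cases hcase : c + 2 * E ≤ D
  · refine ⟨D, hD, le_refl D, ?_⟩
    have h1 : ∑ i ∈ S, (⌈D / a i⌉ : ℝ) * e i ≤ ∑ i ∈ S, 2 * e i := by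
      apply Finset.sum_le_sum
      intro i hi
      exact mul_le_mul_of_nonneg_right (ceil_le_two' (ha i hi) (h2a i hi)) (he i hi)
    have h2 : ∑ i ∈ S, 2 * e i = 2 * E := by rw [← Finset.mul_sum]
    linarith
  · push_neg at hcase
    by_cases hpt : ∃ i ∈ S, c + ∑ j ∈ S, (⌈a i / a j⌉ : ℝ) * e j ≤ a i
    · obtain ⟨i, hiS, hle⟩ := hpt
      exact ⟨a i, ha i hiS, haD i hiS, hle⟩
    · push_neg at hpt
      exfalso
      have hcon : ∀ i ∈ S, a i < c + E + ∑ j ∈ S.filter (fun j => a j < a i), e j := by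
        intro i hi
        have h1 := hpt i hi
        have h2 : ∑ j ∈ S, (⌈a i / a j⌉ : ℝ) * e j ≤
            E + ∑ j ∈ S.filter (fun j => a j < a i), e j := by
          rw [Finset.sum_filter, hEdef, ← Finset.sum_add_distrib]
          apply Finset.sum_le_sum
          intro j hj
          by_cases hlt : a j < a i
          · rw [if_pos hlt]
            have hb : ((⌈a i / a j⌉ : ℤ) : ℝ) ≤ 2 :=
              ceil_le_two' (ha j hj) (le_trans (haD i hi) (h2a j hj))
            nlinarith [he j hj]
          · rw [if_neg hlt]
            push_neg at hlt
            have hdiv : a i / a j ≤ ((1 : ℤ) : ℝ) := by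
              rw [div_le_iff₀ (ha j hj)]; push_cast; linarith
            have hb : ((⌈a i / a j⌉ : ℤ) : ℝ) ≤ 1 := by
              exact_mod_cast Int.ceil_le.2 hdiv
            nlinarith [he j hj]
        linarith
      have htel := telescope a e S.card S c (le_refl _) hc ha he hcon
      rw [← hEdef] at htel
      have hcE : 0 < c + E := by linarith
      have hc2E : 0 < c + 2 * E := by linarith
      have hQpos : 0 < (c + 2 * E) / (c + E) := div_pos hc2E hcE
      have h1 : c / (c + 2 * E) + 1 < c / D + 1 := by
        have := div_lt_div_of_pos_left hc hD hcase
        linarith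
      have hstep1 : (c / (c + 2 * E) + 1) * ((c + 2 * E) / (c + E)) <
          (c / D + 1) * ((c + 2 * E) / (c + E)) :=
        mul_lt_mul_of_pos_right h1 hQpos
      have hstep2 : (c / D + 1) * ((c + 2 * E) / (c + E)) ≤
          (c / D + 1) * ∏ i ∈ S, (1 + e i / a i) := by
        apply mul_le_mul_of_nonneg_left htel
        positivity
      have hid : (c / (c + 2 * E) + 1) * ((c + 2 * E) / (c + E)) = 2 := by
        field_simp
        ring
      linarith

/-- Theorem 3: hyperbolic-bound busy-window test for arbitrary-deadline
sporadic tasks on a uniprocessor. -/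
theorem uniprocessor_hyperbolic_arbitrary (T C D : ℝ)
    (hT : 0 < T) (hC : 0 < C) (hD : 0 < D)
    (n : ℕ) (Tp Ce U : ℕ → ℝ)
    (hTp : ∀ i ∈ Finset.Icc 1 n, 0 < Tp i)
    (hCe : ∀ i ∈ Finset.Icc 1 n, 0 ≤ Ce i)
    (hU : ∀ i ∈ Finset.Icc 1 n, U i = Ce i / Tp i)
    (C' : ℝ)
    (hC' : C' = (⌈D / T⌉ : ℝ) * C
      + ∑ i ∈ (Finset.Icc 1 n).filter (fun i => D ≤ Tp i), Ce i)
    (hcond : (C' / D + 1) *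
      (∏ i ∈ (Finset.Icc 1 n).filter (fun i => Tp i < D), (U i + 1)) ≤ 2) :
    ∃ t : ℝ, 0 < t ∧ t ≤ D ∧
      (⌈t / T⌉ : ℝ) * C + (∑ i ∈ Finset.Icc 1 n, (⌈t / Tp i⌉ : ℝ) * Ce i) ≤ t := by
  classical
  set F1 := (Finset.Icc 1 n).filter (fun i => Tp i < D) with hF1def
  set a : ℕ → ℝ := fun i => ((⌈D / Tp i⌉ : ℝ) - 1) * Tp i with hadef
  set e : ℕ → ℝ := fun i => ((⌈D / Tp i⌉ : ℝ) - 1) * Ce i with hedef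
  -- basic facts for i ∈ F1
  have hmemF1 : ∀ i ∈ F1, i ∈ Finset.Icc 1 n ∧ Tp i < D := by
    intro i hi
    exact Finset.mem_filter.1 hi
  have hm2 : ∀ i ∈ F1, (2 : ℝ) ≤ (⌈D / Tp i⌉ : ℝ) := by
    intro i hi
    obtain ⟨hiIcc, hTpD⟩ := hmemF1 i hi
    have h1 : (1 : ℝ) < D / Tp i := (one_lt_div (hTp i hiIcc)).2 hTpD
    have h2 : (1 : ℤ) < ⌈D / Tp i⌉ := Int.lt_ceil.2 (by exact_mod_cast h1)
    exact_mod_cast h2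
  have ha_pos : ∀ i ∈ F1, 0 < a i := by
    intro i hi
    have := hm2 i hi
    have := hTp i (hmemF1 i hi).1
    rw [hadef]
    dsimp only
    nlinarith
  have haD : ∀ i ∈ F1, a i ≤ D := by
    intro i hi
    obtain ⟨hiIcc, hTpD⟩ := hmemF1 i hi
    have hTpi := hTp i hiIcc
    have h1 : (⌈D / Tp i⌉ : ℝ) < D / Tp i + 1 := Int.ceil_lt_add_one _
    rw [hadef]; dsimp only
    rw [← sub_nonneg]
    have h2 : ((⌈D / Tp i⌉ : ℝ) - 1) * Tp i < (D / Tp i) * Tp i := by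
      apply mul_lt_mul_of_pos_right _ hTpi
      linarith
    rw [div_mul_cancel₀ D (ne_of_gt hTpi)] at h2
    linarith
  have h2a : ∀ i ∈ F1, D ≤ 2 * a i := by
    intro i hi
    obtain ⟨hiIcc, hTpD⟩ := hmemF1 i hi
    have hTpi := hTp i hiIcc
    have hm := hm2 i hi
    have h1 : D / Tp i ≤ (⌈D / Tp i⌉ : ℝ) := Int.le_ceil _
    have h2 : D ≤ (⌈D / Tp i⌉ : ℝ) * Tp i := by
      have h3 := mul_le_mul_of_nonneg_right h1 (le_of_lt hTpi)
      rwa [div_mul_cancel₀ D (ne_of_gt hTpi)] at h3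
    rw [hadef]; dsimp only
    nlinarith
  have he_nn : ∀ i ∈ F1, 0 ≤ e i := by
    intro i hi
    have := hm2 i hi
    have := hCe i (hmemF1 i hi).1
    rw [hedef]; dsimp only
    nlinarith
  -- factor equality
  have hfac : ∀ i ∈ F1, 1 + e i / a i = U i + 1 := by
    intro i hi
    obtain ⟨hiIcc, hTpD⟩ := hmemF1 i hi
    have hm := hm2 i hi
    have hne : (⌈D / Tp i⌉ : ℝ) - 1 ≠ 0 := by linarith
    rw [hadef, hedef]; dsimp only
    rw [mul_div_mul_left _ _ hne, hU i hiIcc]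
    ring
  have hcond' : (C' / D + 1) * ∏ i ∈ F1, (1 + e i / a i) ≤ 2 := by
    rwa [Finset.prod_congr rfl hfac]
  -- C' > 0
  have hC'pos : 0 < C' := by
    have h1 : (1 : ℝ) ≤ (⌈D / T⌉ : ℝ) := by
      have : (0 : ℤ) < ⌈D / T⌉ := Int.ceil_pos.2 (div_pos hD hT)
      exact_mod_cast this
    have h2 : C ≤ (⌈D / T⌉ : ℝ) * C := le_mul_of_one_le_left (le_of_lt hC) h1
    have h3 : 0 ≤ ∑ i ∈ (Finset.Icc 1 n).filter (fun i => D ≤ Tp i), Ce i :=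
      Finset.sum_nonneg (fun i hi => hCe i (Finset.mem_filter.1 hi).1)
    rw [hC']
    linarith
  obtain ⟨t, ht0, htD, hle⟩ := core D hD F1 a e C' hC'pos ha_pos haD h2a he_nn hcond'
  refine ⟨t, ht0, htD, ?_⟩
  -- main task term
  have hmain : (⌈t / T⌉ : ℝ) * C ≤ (⌈D / T⌉ : ℝ) * C := by
    apply mul_le_mul_of_nonneg_right _ (le_of_lt hC)
    have : ⌈t / T⌉ ≤ ⌈D / T⌉ := Int.ceil_le_ceil (by gcongr)
    exact_mod_cast this
  -- split the sum
  have hsplit : ∑ i ∈ Finset.Icc 1 n, (⌈t / Tp i⌉ : ℝ) * Ce i =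
      (∑ i ∈ F1, (⌈t / Tp i⌉ : ℝ) * Ce i) +
      ∑ i ∈ (Finset.Icc 1 n).filter (fun i => ¬ Tp i < D), (⌈t / Tp i⌉ : ℝ) * Ce i := by
    rw [hF1def]
    exact (Finset.sum_filter_add_sum_filter_not _ _ _).symm
  -- terms in F1 dominated by transformed demand
  have hF1bound : ∑ i ∈ F1, (⌈t / Tp i⌉ : ℝ) * Ce i ≤
      ∑ i ∈ F1, (⌈t / a i⌉ : ℝ) * e i := by
    apply Finset.sum_le_sum
    intro i hi
    obtain ⟨hiIcc, hTpD⟩ := hmemF1 i hi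
    have hTpi := hTp i hiIcc
    have hCei := hCe i hiIcc
    have hm := hm2 i hi
    have hapos := ha_pos i hi
    have henn := he_nn i hi
    have hr1 : (1 : ℤ) ≤ ⌈t / a i⌉ := Int.ceil_pos.2 (div_pos ht0 hapos)
    by_cases hr : (⌈t / a i⌉ : ℤ) ≤ 1
    · -- then t ≤ a i
      have hta : t / a i ≤ 1 := by
        calc t / a i ≤ (⌈t / a i⌉ : ℝ) := Int.le_ceil _
        _ ≤ 1 := by exact_mod_cast hr
      have hta2 : t ≤ a i := by
        rw [div_le_one hapos] at hta
        exact hta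
      have hceil : (⌈t / Tp i⌉ : ℝ) ≤ (⌈D / Tp i⌉ : ℝ) - 1 := by
        have h1 : t / Tp i ≤ ((⌈D / Tp i⌉ - 1 : ℤ) : ℝ) := by
          rw [div_le_iff₀ hTpi]
          push_cast
          rw [hadef] at hta2; dsimp only at hta2
          linarith
        have h2 : ⌈t / Tp i⌉ ≤ ⌈D / Tp i⌉ - 1 := Int.ceil_le.2 h1
        exact_mod_cast h2
      have hceilpos : (0 : ℝ) ≤ (⌈t / Tp i⌉ : ℝ) := by
        have : (0 : ℤ) < ⌈t / Tp i⌉ := Int.ceil_pos.2 (div_pos ht0 hTpi)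
        exact_mod_cast le_of_lt this
      have hl : (⌈t / Tp i⌉ : ℝ) * Ce i ≤ e i := by
        rw [hedef]; dsimp only
        exact mul_le_mul_of_nonneg_right hceil hCei
      have hrr : e i ≤ (⌈t / a i⌉ : ℝ) * e i := by
        apply le_mul_of_one_le_left henn
        exact_mod_cast hr1
      linarith
    · push_neg at hr
      have hr2 : (2 : ℝ) ≤ (⌈t / a i⌉ : ℝ) := by exact_mod_cast hr
      have hceil : (⌈t / Tp i⌉ : ℝ) ≤ (⌈D / Tp i⌉ : ℝ) := by
        have : ⌈t / Tp i⌉ ≤ ⌈D / Tp i⌉ := Int.ceil_le_ceil (by gcongr)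
        exact_mod_cast this
      have hl : (⌈t / Tp i⌉ : ℝ) * Ce i ≤ (⌈D / Tp i⌉ : ℝ) * Ce i :=
        mul_le_mul_of_nonneg_right hceil hCei
      have h2e : (⌈D / Tp i⌉ : ℝ) * Ce i ≤ 2 * e i := by
        rw [hedef]; dsimp only
        nlinarith
      have hrr : 2 * e i ≤ (⌈t / a i⌉ : ℝ) * e i :=
        mul_le_mul_of_nonneg_right hr2 henn
      linarith
  -- terms with D ≤ Tp i : ceiling is 1
  have hF2bound : ∑ i ∈ (Finset.Icc 1 n).filter (fun i => ¬ Tp i < D), (⌈t / Tp i⌉ : ℝ) * Ce i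
      = ∑ i ∈ (Finset.Icc 1 n).filter (fun i => D ≤ Tp i), Ce i := by
    have hset : (Finset.Icc 1 n).filter (fun i => ¬ Tp i < D)
        = (Finset.Icc 1 n).filter (fun i => D ≤ Tp i) := by
      apply Finset.filter_congr
      intro i _
      simp [not_lt]
    rw [hset]
    apply Finset.sum_congr rfl
    intro i hi
    obtain ⟨hiIcc, hDTp⟩ := Finset.mem_filter.1 hi
    have hTpi := hTp i hiIcc
    have hceil : ⌈t / Tp i⌉ = 1 := by
      apply le_antisymm
      · apply Int.ceil_le.2
        push_cast
        rw [div_le_one hTpi]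
        linarith
      · exact Int.ceil_pos.2 (div_pos ht0 hTpi)
    rw [hceil]
    push_cast
    ring
  rw [hsplit, hF2bound]
  rw [hC'] at hle
  linarith
end

section
/- Let M ≥ 1 and k > M be integers, let T_k > 0 and C_k > 0 be reals, and let the higher-priority tasks i = 1,…,k−1 have periods T_i with 0 < T_i ≤ T_k, execution times C_i ≥ 0, and utilizations U_i = C_i/T_i. Let T' ⊆ {1,…,k−1} be a set of M−1 indices with the largest execution times (i.e., |T'| = M−1 and C_i ≥ C_j whenever i ∈ T' and j ∉ T'), and set C' = C_k + (1/M)·Σ_{i∈T'} C_i. If (C'/T_k + 1)·∏_{i=1}^{k−1} (U_i/M + 1) ≤ 2, or if Σ_{i=1}^{k−1} U_i/M ≤ ln( 2/(C'/T_k + 1) ), then there exists a real t with 0 < t ≤ T_k such that for every subset S ⊆ {1,…,k−1} with |S| = M−1: C_k + ( Σ_{i∈S} C_i + Σ_{i=1}^{k−1} ⌈t/T_i⌉·C_i )/M ≤ t. -/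
lemma ceil_le_nat_mul_ceil (m : ℕ) (hm : 1 ≤ m) (a : ℝ) :
    (⌈a⌉ : ℤ) ≤ (m : ℤ) * ⌈a / (m : ℝ)⌉ := by
  have hm0 : (0:ℝ) < (m:ℝ) := by exact_mod_cast hm
  rw [Int.ceil_le]
  push_cast
  calc a = (m : ℝ) * (a / m) := by field_simp
  _ ≤ (m : ℝ) * ⌈a / (m:ℝ)⌉ := by
      have := Int.le_ceil (a / (m:ℝ))
      nlinarith

lemma prod_claim (y d : ℕ → ℝ) (A : ℝ) (hA : 0 < A) (I : Finset ℕ) :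
    (∀ i ∈ I, 0 < y i) → (∀ i ∈ I, 0 ≤ d i) →
    (∀ i ∈ I, y i < A + ∑ j ∈ I.filter (fun j => y j < y i), d j) →
    (A + ∑ i ∈ I, d i) / A ≤ ∏ i ∈ I, (1 + d i / y i) := by
  induction I using Finset.strongInduction with
  | _ I ih =>
    intro hy hd hlt
    rcases I.eq_empty_or_nonempty with rfl | hne
    · simp [div_self (ne_of_gt hA)]
    obtain ⟨i0, hi0, hmax⟩ := I.exists_max_image y hne
    set I' := I.erase i0 with hI'def
    have hss : I' ⊂ I := Finset.erase_ssubset hi0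
    have hsub : I' ⊆ I := Finset.erase_subset _ _
    have hfilter_eq : ∀ i ∈ I', I'.filter (fun j => y j < y i) = I.filter (fun j => y j < y i) := by
      intro i hi
      rw [hI'def, Finset.filter_erase]
      apply Finset.erase_eq_of_notMem
      simp only [Finset.mem_filter, not_and]
      intro _
      exact not_lt.mpr (hmax i (hsub hi))
    have key := ih I' hss (fun i hi => hy i (hsub hi)) (fun i hi => hd i (hsub hi))
      (fun i hi => by rw [hfilter_eq i hi]; exact hlt i (hsub hi))
    have hS'sum : ∑ i ∈ I', d i + d i0 = ∑ i ∈ I, d i := Finset.sum_erase_add I d hi0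
    have hprod : (1 + d i0 / y i0) * ∏ i ∈ I', (1 + d i / y i) = ∏ i ∈ I, (1 + d i / y i) := by
      rw [hI'def]; exact Finset.mul_prod_erase I (fun i => 1 + d i / y i) hi0
    set S' := ∑ i ∈ I', d i with hS'
    have hS'nonneg : 0 ≤ S' := Finset.sum_nonneg (fun i hi => hd i (hsub hi))
    have hB : ∑ j ∈ I.filter (fun j => y j < y i0), d j ≤ S' := by
      apply Finset.sum_le_sum_of_subset_of_nonneg
      · intro j hj
        simp only [Finset.mem_filter] at hj
        rw [hI'def, Finset.mem_erase]
        exact ⟨by rintro rfl; exact lt_irrefl _ hj.2, hj.1⟩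
      · intro j hj _; exact hd j (hsub hj)
    have hy0 : 0 < y i0 := hy i0 hi0
    have hd0 : 0 ≤ d i0 := hd i0 hi0
    have hy0lt : y i0 < A + S' := lt_of_lt_of_le (hlt i0 hi0) (by linarith)
    have hAS' : (0:ℝ) < A + S' := by linarith
    have hfac : (A + S' + d i0) / (A + S') ≤ 1 + d i0 / y i0 := by
      have h1 : d i0 / (A + S') ≤ d i0 / y i0 := by gcongr
      have h2 : (A + S' + d i0) / (A + S') = 1 + d i0 / (A + S') := by field_simp
      linarith
    have hfin : (A + (S' + d i0)) / A ≤ ∏ i ∈ I, (1 + d i / y i) := by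
      rw [← hprod]
      calc (A + (S' + d i0)) / A = ((A + S' + d i0) / (A + S')) * ((A + S') / A) := by
            field_simp; ring
      _ ≤ (1 + d i0 / y i0) * ((A + S') / A) := by
            apply mul_le_mul_of_nonneg_right hfac (by positivity)
      _ ≤ (1 + d i0 / y i0) * ∏ i ∈ I', (1 + d i / y i) := by
            apply mul_le_mul_of_nonneg_left key
            have := div_nonneg hd0 (le_of_lt hy0)
            linarith
    rw [← hS'sum]
    linarith [hfin]




/-- Theorem 8: hyperbolic-bound bounded carry-in test for implicit-deadline
sporadic tasks under global RM on M identical processors. -/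
theorem global_rm_bounded_carry_in (M k : ℕ) (hM : 1 ≤ M) (hk : M < k)
    (Tk Ck : ℝ) (hTk : 0 < Tk) (hCk : 0 < Ck)
    (T C U : ℕ → ℝ)
    (hT : ∀ i ∈ Finset.Icc 1 (k - 1), 0 < T i ∧ T i ≤ Tk)
    (hC : ∀ i ∈ Finset.Icc 1 (k - 1), 0 ≤ C i)
    (hU : ∀ i ∈ Finset.Icc 1 (k - 1), U i = C i / T i)
    (T' : Finset ℕ) (hT'sub : T' ⊆ Finset.Icc 1 (k - 1))
    (hT'card : T'.card = M - 1)
    (hT'max : ∀ i ∈ T', ∀ j ∈ Finset.Icc 1 (k - 1), j ∉ T' → C j ≤ C i)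
    (C' : ℝ) (hC' : C' = Ck + (1 / (M : ℝ)) * ∑ i ∈ T', C i)
    (hcond : (C' / Tk + 1) * (∏ i ∈ Finset.Icc 1 (k - 1), (U i / (M : ℝ) + 1)) ≤ 2 ∨
      (∑ i ∈ Finset.Icc 1 (k - 1), U i / (M : ℝ)) ≤ Real.log (2 / (C' / Tk + 1))) :
    ∃ t : ℝ, 0 < t ∧ t ≤ Tk ∧
      ∀ S ⊆ Finset.Icc 1 (k - 1), S.card = M - 1 →
        Ck + ((∑ i ∈ S, C i)
          + ∑ i ∈ Finset.Icc 1 (k - 1), (⌈t / T i⌉ : ℝ) * C i) / (M : ℝ) ≤ t := by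
  classical
  set I := Finset.Icc 1 (k - 1) with hI
  have hM0 : (0:ℝ) < (M:ℝ) := by exact_mod_cast hM
  have hsumT'nn : 0 ≤ ∑ i ∈ T', C i := Finset.sum_nonneg (fun i hi => hC i (hT'sub hi))
  have hC'pos : 0 < C' := by
    rw [hC']
    have : 0 ≤ (1 / (M:ℝ)) * ∑ i ∈ T', C i := mul_nonneg (by positivity) hsumT'nn
    linarith
  have hUnn : ∀ i ∈ I, 0 ≤ U i / (M:ℝ) := by
    intro i hi
    rw [hU i hi]
    have h1 := (hT i hi).1
    have h2 := hC i hi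
    positivity
  -- reduce to hyperbolic condition
  have hhyp : (C' / Tk + 1) * (∏ i ∈ I, (U i / (M : ℝ) + 1)) ≤ 2 := by
    rcases hcond with h | h
    · exact h
    · have hden : 0 < C' / Tk + 1 := by positivity
      have h2pos : 0 < 2 / (C' / Tk + 1) := by positivity
      have hexp : ∏ i ∈ I, (U i / (M:ℝ) + 1) ≤ Real.exp (∑ i ∈ I, U i / (M:ℝ)) := by
        rw [Real.exp_sum]
        apply Finset.prod_le_prod
        · intro i hi; have := hUnn i hi; linarith
        · intro i hi
          have := Real.add_one_le_exp (U i / (M:ℝ))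
          linarith
      have hexple : Real.exp (∑ i ∈ I, U i / (M:ℝ)) ≤ 2 / (C' / Tk + 1) := by
        calc Real.exp (∑ i ∈ I, U i / (M:ℝ)) ≤ Real.exp (Real.log (2 / (C' / Tk + 1))) :=
              Real.exp_le_exp.mpr h
        _ = 2 / (C' / Tk + 1) := Real.exp_log h2pos
      calc (C' / Tk + 1) * (∏ i ∈ I, (U i / (M:ℝ) + 1))
          ≤ (C' / Tk + 1) * (2 / (C' / Tk + 1)) :=
            mul_le_mul_of_nonneg_left (hexp.trans hexple) (le_of_lt hden)
      _ = 2 := by field_simp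
  -- transformed periods
  set m : ℕ → ℕ := fun i => ⌊Tk / T i⌋₊ with hmdef
  set y : ℕ → ℝ := fun i => (m i : ℝ) * T i with hydef
  set d : ℕ → ℝ := fun i => (m i : ℝ) * (C i / (M:ℝ)) with hddef
  have hmi : ∀ i ∈ I, 1 ≤ m i := by
    intro i hi
    apply Nat.le_floor
    rw [Nat.cast_one]
    exact (one_le_div (hT i hi).1).mpr (hT i hi).2
  have hmiR : ∀ i ∈ I, (1:ℝ) ≤ (m i : ℝ) := by
    intro i hi; exact_mod_cast hmi i hi
  have hypos : ∀ i ∈ I, 0 < y i := by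
    intro i hi
    exact mul_pos (lt_of_lt_of_le one_pos (hmiR i hi)) (hT i hi).1
  have hyle : ∀ i ∈ I, y i ≤ Tk := by
    intro i hi
    have h2 := (hT i hi).1
    have h1 : (m i : ℝ) ≤ Tk / T i := Nat.floor_le (by positivity)
    calc y i = (m i : ℝ) * T i := rfl
    _ ≤ (Tk / T i) * T i := mul_le_mul_of_nonneg_right h1 (le_of_lt h2)
    _ = Tk := by field_simp
  have hygt : ∀ i ∈ I, Tk < 2 * y i := by
    intro i hi
    have h1 : Tk / T i < (m i : ℝ) + 1 := Nat.lt_floor_add_one _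
    have h2 := (hT i hi).1
    have h3 := hmiR i hi
    have h4 : Tk < ((m i : ℝ) + 1) * T i := by
      calc Tk = (Tk / T i) * T i := by field_simp
      _ < ((m i : ℝ) + 1) * T i := mul_lt_mul_of_pos_right h1 h2
    calc Tk < ((m i : ℝ) + 1) * T i := h4
    _ ≤ (2 * (m i : ℝ)) * T i := mul_le_mul_of_nonneg_right (by linarith) (le_of_lt h2)
    _ = 2 * y i := by rw [hydef]; ring
  have hdnn : ∀ i ∈ I, 0 ≤ d i := by
    intro i hi
    have h1 := hC i hi
    have h2 : (0:ℝ) ≤ (m i : ℝ) := by positivity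
    exact mul_nonneg h2 (by positivity)
  -- key existence of good point
  have key : ∃ x : ℝ, 0 < x ∧ x ≤ Tk ∧
      C' + (∑ i ∈ I, (⌈x / T i⌉ : ℝ) * C i) / (M:ℝ) ≤ x := by
    by_contra hcon
    push_neg at hcon
    -- demand bound at candidates
    have hbound : ∀ x : ℝ, 0 < x → x ≤ Tk →
        (∑ i ∈ I, (⌈x / T i⌉ : ℝ) * C i) / (M:ℝ)
          ≤ (∑ i ∈ I, d i) + ∑ i ∈ I.filter (fun j => y j < x), d i := by
      intro x hx hxle
      have step : ∀ i ∈ I, (⌈x / T i⌉ : ℝ) * C i / (M:ℝ)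
          ≤ d i + (if y i < x then d i else 0) := by
        intro i hi
        have hTi := (hT i hi).1
        have hCi := hC i hi
        have hmi' := hmi i hi
        have hmiR' := hmiR i hi
        have hyipos := hypos i hi
        have hCM : (0:ℝ) ≤ C i / (M:ℝ) := by positivity
        have hxy : x / T i / (m i : ℝ) = x / y i := by
          rw [div_div, hydef]
          ring_nf
        have hceil : (⌈x / T i⌉ : ℤ) ≤ (m i : ℤ) * ⌈x / y i⌉ := by
          have := ceil_le_nat_mul_ceil (m i) hmi' (x / T i)
          rwa [hxy] at this
        by_cases hc : y i < x
        · have hw : (⌈x / y i⌉ : ℤ) ≤ 2 := by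
            rw [Int.ceil_le]
            push_cast
            rw [div_le_iff₀ hyipos]
            have := hygt i hi
            linarith
          have hcR : (⌈x / T i⌉ : ℝ) ≤ (m i : ℝ) * 2 := by
            have h5 : (⌈x / T i⌉ : ℤ) ≤ (m i : ℤ) * 2 :=
              le_trans hceil (mul_le_mul_of_nonneg_left hw (Int.ofNat_nonneg _))
            exact_mod_cast h5
          simp only [hc, if_true]
          have := mul_le_mul_of_nonneg_right hcR hCM
          rw [hddef]
          calc (⌈x / T i⌉ : ℝ) * C i / (M:ℝ) = (⌈x / T i⌉ : ℝ) * (C i / (M:ℝ)) := by ring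
          _ ≤ ((m i : ℝ) * 2) * (C i / (M:ℝ)) := this
          _ = (m i : ℝ) * (C i / (M:ℝ)) + (m i : ℝ) * (C i / (M:ℝ)) := by ring
        · have hw : (⌈x / y i⌉ : ℤ) ≤ 1 := by
            rw [Int.ceil_le]
            push_cast
            rw [div_le_one hyipos]
            exact not_lt.mp hc
          have hcR : (⌈x / T i⌉ : ℝ) ≤ (m i : ℝ) * 1 := by
            have h5 : (⌈x / T i⌉ : ℤ) ≤ (m i : ℤ) * 1 :=
              le_trans hceil (mul_le_mul_of_nonneg_left hw (Int.ofNat_nonneg _))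
            exact_mod_cast h5
          simp only [hc, if_false]
          have := mul_le_mul_of_nonneg_right hcR hCM
          rw [hddef]
          calc (⌈x / T i⌉ : ℝ) * C i / (M:ℝ) = (⌈x / T i⌉ : ℝ) * (C i / (M:ℝ)) := by ring
          _ ≤ ((m i : ℝ) * 1) * (C i / (M:ℝ)) := this
          _ = (m i : ℝ) * (C i / (M:ℝ)) + 0 := by ring
      calc (∑ i ∈ I, (⌈x / T i⌉ : ℝ) * C i) / (M:ℝ)
          = ∑ i ∈ I, (⌈x / T i⌉ : ℝ) * C i / (M:ℝ) := by rw [Finset.sum_div]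
      _ ≤ ∑ i ∈ I, (d i + (if y i < x then d i else 0)) := Finset.sum_le_sum step
      _ = (∑ i ∈ I, d i) + ∑ i ∈ I, (if y i < x then d i else 0) := Finset.sum_add_distrib
      _ = (∑ i ∈ I, d i) + ∑ i ∈ I.filter (fun j => y j < x), d i := by
            rw [Finset.sum_filter]
    set A : ℝ := C' + ∑ i ∈ I, d i with hA
    have hSnn : 0 ≤ ∑ i ∈ I, d i := Finset.sum_nonneg hdnn
    have hApos : 0 < A := by rw [hA]; linarith
    have hlt : ∀ i ∈ I, y i < A + ∑ j ∈ I.filter (fun j => y j < y i), d j := by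
      intro i hi
      have h1 := hcon (y i) (hypos i hi) (hyle i hi)
      have h2 := hbound (y i) (hypos i hi) (hyle i hi)
      rw [hA]
      linarith
    have hclaim := prod_claim y d A hApos I hypos hdnn hlt
    have hpeq : ∏ i ∈ I, (1 + d i / y i) = ∏ i ∈ I, (U i / (M:ℝ) + 1) := by
      apply Finset.prod_congr rfl
      intro i hi
      have hTi := (hT i hi).1
      have hmne : (m i : ℝ) ≠ 0 := by
        have := hmiR i hi; linarith
      rw [hU i hi, hddef, hydef]
      simp only
      rw [mul_div_mul_left _ _ hmne]
      ring
    have hP1 : (A + ∑ i ∈ I, d i) / A ≤ ∏ i ∈ I, (U i / (M:ℝ) + 1) := by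
      rw [← hpeq]; exact hclaim
    have hTklt : Tk < A + ∑ i ∈ I, d i := by
      have h1 := hcon Tk hTk le_rfl
      have h2 := hbound Tk hTk le_rfl
      have h3 : ∑ i ∈ I.filter (fun j => y j < Tk), d i ≤ ∑ i ∈ I, d i :=
        Finset.sum_le_sum_of_subset_of_nonneg (Finset.filter_subset _ _)
          (fun i hi _ => hdnn i hi)
      rw [hA]
      linarith
    set Ssum : ℝ := ∑ i ∈ I, d i with hSsum
    have hASpos : 0 < A + Ssum := by linarith
    have hc1 : C' / (A + Ssum) < C' / Tk := div_lt_div_of_pos_left hC'pos hTk hTklt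
    have hx1 : (C' / Tk + 1) * ((A + Ssum) / A) ≤ (C' / Tk + 1) * ∏ i ∈ I, (U i / (M:ℝ) + 1) :=
      mul_le_mul_of_nonneg_left hP1 (by positivity)
    have hx2 : (C' / Tk + 1) * ((A + Ssum) / A) ≤ 2 := le_trans hx1 hhyp
    have hx3 : (C' / (A + Ssum) + 1) * ((A + Ssum) / A) < (C' / Tk + 1) * ((A + Ssum) / A) :=
      mul_lt_mul_of_pos_right (by linarith) (by positivity)
    have hx4 : (C' / (A + Ssum) + 1) * ((A + Ssum) / A) = 2 := by
      have hANe : A ≠ 0 := ne_of_gt hApos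
      have hASne : A + Ssum ≠ 0 := ne_of_gt hASpos
      have hval : A = C' + Ssum := hA
      field_simp
      linarith [hval]
    linarith
  obtain ⟨x, hx0, hxle, hxkey⟩ := key
  refine ⟨x, hx0, hxle, ?_⟩
  intro S hSsub hScard
  -- sum domination
  have hsumS : ∑ i ∈ S, C i ≤ ∑ i ∈ T', C i := by
    have hcards : (S \ T').card = (T' \ S).card := by
      have h1 := Finset.card_inter_add_card_sdiff S T'
      have h2 := Finset.card_inter_add_card_sdiff T' S
      rw [Finset.inter_comm] at h2
      have : S.card = T'.card := by rw [hScard, hT'card]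
      omega
    have hdiff : ∑ i ∈ S \ T', C i ≤ ∑ i ∈ T' \ S, C i := by
      rcases (T' \ S).eq_empty_or_nonempty with he | hne
      · have hSe : (S \ T') = ∅ := Finset.card_eq_zero.mp (by rw [hcards, he]; simp)
        rw [hSe, he]
      · obtain ⟨i0, hi0, hmin⟩ := (T' \ S).exists_min_image C hne
        have hi0T' : i0 ∈ T' := (Finset.mem_sdiff.mp hi0).1
        calc ∑ i ∈ S \ T', C i ≤ (S \ T').card • C i0 := by
              apply Finset.sum_le_card_nsmul
              intro j hj
              have hj' := Finset.mem_sdiff.mp hj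
              exact hT'max i0 hi0T' j (hSsub hj'.1) hj'.2
        _ = (T' \ S).card • C i0 := by rw [hcards]
        _ ≤ ∑ i ∈ T' \ S, C i := Finset.card_nsmul_le_sum _ _ _ hmin
    have e1 : ∑ i ∈ S ∩ T', C i + ∑ i ∈ S \ T', C i = ∑ i ∈ S, C i :=
      Finset.sum_inter_add_sum_sdiff S T' C
    have e2 : ∑ i ∈ T' ∩ S, C i + ∑ i ∈ T' \ S, C i = ∑ i ∈ T', C i :=
      Finset.sum_inter_add_sum_sdiff T' S C
    rw [Finset.inter_comm] at e2
    linarith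
  have hMne : (M:ℝ) ≠ 0 := ne_of_gt hM0
  have h1 : (∑ i ∈ S, C i + ∑ i ∈ I, (⌈x / T i⌉ : ℝ) * C i) / (M:ℝ)
      ≤ (∑ i ∈ T', C i + ∑ i ∈ I, (⌈x / T i⌉ : ℝ) * C i) / (M:ℝ) := by
    gcongr
  have h2 : Ck + (∑ i ∈ T', C i + ∑ i ∈ I, (⌈x / T i⌉ : ℝ) * C i) / (M:ℝ)
      = C' + (∑ i ∈ I, (⌈x / T i⌉ : ℝ) * C i) / (M:ℝ) := by
    rw [hC']
    field_simp
    ring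
  linarith
end

section
/- Let M ≥ 1 and k ≥ 2 be integers, let T_k > 0 and C_k > 0 be reals with U_k = C_k/T_k, and let the higher-priority tasks i = 1,…,k−1 have periods T_i with 0 < T_i ≤ T_k, execution times C_i ≥ 0, and utilizations U_i = C_i/T_i. Let b = (3 + √7)/2. If U_j ≤ 1/b for every j = 1,…,k and Σ_{j=1}^{k} U_j ≤ M/b, then the forced-forward condition holds: for every real y ≥ 0 and every choice of reals ω_1,…,ω_{k−1} with 0 ≤ ω_i ≤ T_i, there exists a real t with 0 < t ≤ T_k + y such that (max_{j=1,…,k} U_j)·(T_k + y) + (1/M)·Σ_{i=1}^{k−1} ( ω_i·U_i + ⌈(t − ω_i)/T_i⌉·C_i ) ≤ t. -/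
set_option maxHeartbeats 1000000


/-- Corollary 5: capacity augmentation factor (3+√7)/2 of global RM for
implicit-deadline sporadic task systems. -/
theorem global_rm_capacity_augmentation (M k : ℕ) (hM : 1 ≤ M) (hk : 2 ≤ k)
    (T C U : ℕ → ℝ)
    (hTk : 0 < T k) (hCk : 0 < C k)
    (hT : ∀ i ∈ Finset.Icc 1 (k - 1), 0 < T i ∧ T i ≤ T k)
    (hC : ∀ i ∈ Finset.Icc 1 (k - 1), 0 ≤ C i)
    (hU : ∀ i ∈ Finset.Icc 1 k, U i = C i / T i)
    (b : ℝ) (hb : b = (3 + Real.sqrt 7) / 2)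
    (hper : ∀ j ∈ Finset.Icc 1 k, U j ≤ 1 / b)
    (htot : ∑ j ∈ Finset.Icc 1 k, U j ≤ (M : ℝ) / b) :
    ∀ y : ℝ, 0 ≤ y → ∀ ω : ℕ → ℝ,
      (∀ i ∈ Finset.Icc 1 (k - 1), 0 ≤ ω i ∧ ω i ≤ T i) →
      ∃ t : ℝ, 0 < t ∧ t ≤ T k + y ∧
        ((Finset.Icc 1 k).sup' (Finset.nonempty_Icc.mpr (by omega)) U) * (T k + y)
          + (1 / (M : ℝ)) *
            (∑ i ∈ Finset.Icc 1 (k - 1),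
              (ω i * U i + (⌈(t - ω i) / T i⌉ : ℝ) * C i)) ≤ t := by
  intro y hy ω hω
  by_contra hcon
  push_neg at hcon
  -- basic facts
  have h7 : Real.sqrt 7 ^ 2 = 7 := Real.sq_sqrt (by norm_num)
  have h7nn : (0:ℝ) ≤ Real.sqrt 7 := Real.sqrt_nonneg 7
  have h7gt : (2:ℝ) < Real.sqrt 7 := by nlinarith
  have h7lt : Real.sqrt 7 < 3 := by nlinarith
  have hbpos : 0 < b := by rw [hb]; nlinarith
  have hbinv : 1 / b = 3 - Real.sqrt 7 := by
    rw [hb, one_div_div, div_eq_iff (by nlinarith : (3:ℝ) + Real.sqrt 7 ≠ 0)]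
    nlinarith
  have hMpos : (0:ℝ) < (M:ℝ) := by exact_mod_cast Nat.pos_of_ne_zero (by omega)
  have hkk : k ∈ Finset.Icc 1 k := by simp [Finset.mem_Icc]; omega
  -- name things
  obtain ⟨I, hI⟩ : ∃ I : Finset ℕ, Finset.Icc 1 (k - 1) = I := ⟨_, rfl⟩
  obtain ⟨D, hD⟩ : ∃ D : ℝ, T k + y = D := ⟨_, rfl⟩
  rw [hI, hD] at hcon
  rw [hI] at hT hC hω
  have hD0 : 0 < D := by rw [← hD]; linarith
  obtain ⟨A, hA⟩ : ∃ A : ℝ,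
      (Finset.Icc 1 k).sup' (Finset.nonempty_Icc.mpr (by omega)) U = A := ⟨_, rfl⟩
  rw [hA] at hcon
  have hApos : 0 < A := by
    have h1 : U k = C k / T k := hU k hkk
    have h2 : 0 < U k := by rw [h1]; exact div_pos hCk hTk
    have h3 : U k ≤ A := by rw [← hA]; exact Finset.le_sup' U hkk
    linarith
  have hAl : A ≤ 3 - Real.sqrt 7 := by
    rw [← hA, ← hbinv]
    exact Finset.sup'_le _ _ fun j hj => hper j hj
  -- per-task facts
  have hIk : ∀ i ∈ I, i ∈ Finset.Icc 1 k := by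
    intro i hi
    rw [← hI] at hi
    simp only [Finset.mem_Icc] at *
    omega
  have hU0 : ∀ i ∈ I, 0 ≤ U i := by
    intro i hi
    rw [hU i (hIk i hi)]
    exact div_nonneg (hC i hi) (hT i hi).1.le
  have hCU : ∀ i ∈ I, C i = U i * T i := by
    intro i hi
    rw [hU i (hIk i hi), div_mul_cancel₀ _ (hT i hi).1.ne']
  have hTD : ∀ i ∈ I, T i ≤ D := fun i hi => by
    have := (hT i hi).2; rw [← hD]; linarith
  -- the failure hypothesis, cleaned up (multiplied through by M)
  have Hf : ∀ t : ℝ, 0 < t → t ≤ D →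
      (M:ℝ) * t < M * (A * D) + ∑ i ∈ I, U i * (ω i + T i * (⌈(t - ω i) / T i⌉ : ℝ)) := by
    intro t ht htD
    have h1 := hcon t ht htD
    have h2 : ∑ i ∈ I, (ω i * U i + (⌈(t - ω i) / T i⌉ : ℝ) * C i)
        = ∑ i ∈ I, U i * (ω i + T i * (⌈(t - ω i) / T i⌉ : ℝ)) := by
      refine Finset.sum_congr rfl fun i hi => ?_
      rw [hCU i hi]; ring
    rw [h2] at h1
    have h3 := mul_lt_mul_of_pos_left h1 hMpos
    have h4 : (M:ℝ) * (A * D + 1 / (M:ℝ) * ∑ i ∈ I, U i * (ω i + T i * (⌈(t - ω i) / T i⌉ : ℝ)))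
        = M * (A * D) + ∑ i ∈ I, U i * (ω i + T i * (⌈(t - ω i) / T i⌉ : ℝ)) := by
      rw [mul_add]
      congr 1
      rw [← mul_assoc, mul_one_div_cancel hMpos.ne', one_mul]
    rw [h4] at h3
    exact h3
  -- definitions of N and x
  obtain ⟨N, hN⟩ : ∃ N : ℕ → ℤ, ∀ i, N i = ⌈(D - ω i) / T i⌉ := ⟨_, fun _ => rfl⟩
  obtain ⟨x, hx⟩ : ∃ x : ℕ → ℝ, ∀ i, x i = ω i + ((N i : ℝ) - 1) * T i := ⟨_, fun _ => rfl⟩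
  have hceilD : ∀ i ∈ I, D - ω i ≤ (N i : ℝ) * T i := by
    intro i hi
    have h1 : (D - ω i) / T i ≤ (N i : ℝ) := by rw [hN]; exact Int.le_ceil _
    calc D - ω i = (D - ω i) / T i * T i := by
          rw [div_mul_cancel₀ _ (hT i hi).1.ne']
    _ ≤ (N i : ℝ) * T i := mul_le_mul_of_nonneg_right h1 (hT i hi).1.le
  have hx0 : ∀ i ∈ I, 0 ≤ x i := by
    intro i hi
    have h1 := hceilD i hi
    have h2 := hTD i hi
    rw [hx]
    linarith [(hω i hi).1]
  have hxD : ∀ i ∈ I, x i < D := by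
    intro i hi
    have hTi := (hT i hi).1
    have h1 : (N i : ℝ) < (D - ω i) / T i + 1 := by rw [hN]; exact Int.ceil_lt_add_one _
    have h2 : (N i : ℝ) * T i < ((D - ω i) / T i + 1) * T i :=
      mul_lt_mul_of_pos_right h1 hTi
    rw [add_mul, div_mul_cancel₀ _ hTi.ne'] at h2
    rw [hx]
    linarith
  -- K2 : t ≤ D → ρ i t ≤ x i + T i
  have hK2 : ∀ i ∈ I, ∀ t : ℝ, t ≤ D →
      ω i + T i * (⌈(t - ω i) / T i⌉ : ℝ) ≤ x i + T i := by
    intro i hi t htD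
    have hTi := (hT i hi).1
    have h1 : ⌈(t - ω i) / T i⌉ ≤ N i := by
      rw [Int.ceil_le, div_le_iff₀ hTi]
      have h0 := hceilD i hi
      linarith
    have h2 : ((⌈(t - ω i) / T i⌉ : ℤ) : ℝ) ≤ (N i : ℝ) := by exact_mod_cast h1
    have h3 : T i * ((⌈(t - ω i) / T i⌉ : ℤ) : ℝ) ≤ T i * (N i : ℝ) :=
      mul_le_mul_of_nonneg_left h2 hTi.le
    rw [hx]
    linarith
  -- K1 : t ≤ x i → ρ i t ≤ x i
  have hK1 : ∀ i ∈ I, ∀ t : ℝ, t ≤ x i →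
      ω i + T i * (⌈(t - ω i) / T i⌉ : ℝ) ≤ x i := by
    intro i hi t htx
    have hTi := (hT i hi).1
    have h1 : ⌈(t - ω i) / T i⌉ ≤ N i - 1 := by
      rw [Int.ceil_le]
      push_cast
      rw [div_le_iff₀ hTi]
      rw [hx] at htx
      linarith
    have h2 : ((⌈(t - ω i) / T i⌉ : ℤ) : ℝ) ≤ (N i : ℝ) - 1 := by exact_mod_cast h1
    have h3 : T i * ((⌈(t - ω i) / T i⌉ : ℤ) : ℝ) ≤ T i * ((N i : ℝ) - 1) :=
      mul_le_mul_of_nonneg_left h2 hTi.le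
    rw [hx]
    linarith
  -- sums
  obtain ⟨SU, hSU⟩ : ∃ SU : ℝ, ∑ i ∈ I, U i = SU := ⟨_, rfl⟩
  obtain ⟨Om, hOm⟩ : ∃ Om : ℝ, ∑ i ∈ I, U i * x i = Om := ⟨_, rfl⟩
  have hSU0 : 0 ≤ SU := hSU ▸ Finset.sum_nonneg hU0
  -- bound on SU
  have hSUl : SU ≤ (M:ℝ) * (3 - Real.sqrt 7) := by
    have hsplit : Finset.Icc 1 k = insert k I := by
      rw [← hI]; ext a; simp [Finset.mem_Icc, Finset.mem_insert]; omega
    have hknotin : k ∉ I := by rw [← hI]; simp [Finset.mem_Icc]; omega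
    have h1 : ∑ j ∈ Finset.Icc 1 k, U j = U k + SU := by
      rw [hsplit, Finset.sum_insert hknotin, hSU]
    have h2 : 0 < U k := by rw [hU k hkk]; exact div_pos hCk hTk
    have h3 : (M:ℝ) / b = (M:ℝ) * (3 - Real.sqrt 7) := by
      rw [div_eq_mul_one_div, hbinv]
    rw [h1, h3] at htot
    linarith
  -- E1 : failure at t = D
  have E1 : (M:ℝ) * D < M * (A * D) + Om + SU * D := by
    have h1 := Hf D hD0 le_rfl
    have h2 : ∑ i ∈ I, U i * (ω i + T i * (⌈(D - ω i) / T i⌉ : ℝ))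
        ≤ Om + SU * D := by
      rw [← hOm, ← hSU, Finset.sum_mul, ← Finset.sum_add_distrib]
      refine Finset.sum_le_sum fun i hi => ?_
      have hb1 := hK2 i hi D le_rfl
      have hb2 := hTD i hi
      have hb3 := hU0 i hi
      linarith [mul_le_mul_of_nonneg_left hb1 hb3, mul_le_mul_of_nonneg_left hb2 hb3]
    linarith
  -- per-j inequality (failure at t = x j, or trivial if x j = 0)
  have hj : ∀ j ∈ I, (M:ℝ) * x j ≤ M * (A * D) + Om
      + ∑ i ∈ I, U i * (if x i < x j then T i else 0) := by
    intro j hjI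
    have hsumx : ∀ t : ℝ, t ≤ D →
        ∑ i ∈ I, U i * (ω i + T i * (⌈(t - ω i) / T i⌉ : ℝ))
          ≤ Om + ∑ i ∈ I, U i * (if x i < t then T i else 0) := by
      intro t htD
      rw [← hOm, ← Finset.sum_add_distrib]
      refine Finset.sum_le_sum fun i hi => ?_
      have hb3 := hU0 i hi
      by_cases hlt : x i < t
      · rw [if_pos hlt]
        have h5 := hK2 i hi t htD
        linarith [mul_le_mul_of_nonneg_left h5 hb3]
      · rw [if_neg hlt]
        have h5 := hK1 i hi t (le_of_not_gt hlt)
        linarith [mul_le_mul_of_nonneg_left h5 hb3]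
    rcases eq_or_lt_of_le (hx0 j hjI) with h0 | hpos
    · -- x j = 0 : RHS nonneg
      have h1 : 0 ≤ Om := hOm ▸ Finset.sum_nonneg fun i hi =>
        mul_nonneg (hU0 i hi) (hx0 i hi)
      have h2 : 0 ≤ ∑ i ∈ I, U i * (if x i < x j then T i else 0) := by
        refine Finset.sum_nonneg fun i hi => ?_
        refine mul_nonneg (hU0 i hi) ?_
        split
        · exact (hT i hi).1.le
        · exact le_rfl
      have h00 : (M:ℝ) * x j = 0 := by rw [← h0, mul_zero]
      have h01 : 0 < (M:ℝ) * (A * D) := mul_pos hMpos (mul_pos hApos hD0)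
      linarith
    · have h1 := Hf (x j) hpos (hxD j hjI).le
      have h2 := hsumx (x j) (hxD j hjI).le
      linarith
  -- double sum bound
  have hPP : ∑ j ∈ I, ∑ i ∈ I, U j * (U i * (if x i < x j then T i else 0))
      ≤ D * SU * SU / 2 := by
    have hsw : ∑ j ∈ I, ∑ i ∈ I, U j * (U i * (if x i < x j then T i else 0))
        = ∑ j ∈ I, ∑ i ∈ I, U i * (U j * (if x j < x i then T j else 0)) :=
      Finset.sum_comm
    have hterm : ∀ j ∈ I, ∀ i ∈ I,
        U j * (U i * (if x i < x j then T i else 0))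
          + U i * (U j * (if x j < x i then T j else 0)) ≤ U j * U i * D := by
      intro j hjI i hiI
      have h1 := hU0 j hjI
      have h2 := hU0 i hiI
      have h3 := hTD i hiI
      have h4 := hTD j hjI
      have h5 := (hT i hiI).1
      have h6 := (hT j hjI).1
      rcases lt_trichotomy (x i) (x j) with h | h | h
      · rw [if_pos h, if_neg (lt_asymm h)]
        linarith [mul_nonneg (mul_nonneg h1 h2) (sub_nonneg.mpr h3)]
      · rw [if_neg (by rw [h]; exact lt_irrefl _), if_neg (by rw [h]; exact lt_irrefl _)]
        linarith [mul_nonneg (mul_nonneg h1 h2) hD0.le]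
      · rw [if_neg (lt_asymm h), if_pos h]
        linarith [mul_nonneg (mul_nonneg h1 h2) (sub_nonneg.mpr h4)]
    have hdbl : (∑ j ∈ I, ∑ i ∈ I, U j * (U i * (if x i < x j then T i else 0)))
          + (∑ j ∈ I, ∑ i ∈ I, U j * (U i * (if x i < x j then T i else 0)))
        ≤ ∑ j ∈ I, ∑ i ∈ I, U j * U i * D := by
      nth_rewrite 2 [hsw]
      rw [← Finset.sum_add_distrib]
      refine Finset.sum_le_sum fun j hjI => ?_
      rw [← Finset.sum_add_distrib]
      exact Finset.sum_le_sum fun i hiI => hterm j hjI i hiI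
    have hUU : ∑ j ∈ I, ∑ i ∈ I, U j * U i * D = SU * SU * D := by
      rw [← hSU, Finset.sum_mul_sum, Finset.sum_mul]
      refine Finset.sum_congr rfl fun j _ => ?_
      rw [Finset.sum_mul]
    rw [hUU] at hdbl
    linarith
  -- E2 : weighted sum of per-j inequalities
  have E2 : (M:ℝ) * Om ≤ SU * (M * (A * D) + Om)
      + ∑ j ∈ I, ∑ i ∈ I, U j * (U i * (if x i < x j then T i else 0)) := by
    have h1 : ∀ j ∈ I, U j * ((M:ℝ) * x j)
        ≤ U j * (M * (A * D) + Om)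
          + ∑ i ∈ I, U j * (U i * (if x i < x j then T i else 0)) := by
      intro j hjI
      have h2 := mul_le_mul_of_nonneg_left (hj j hjI) (hU0 j hjI)
      have h3 : U j * (M * (A * D) + Om + ∑ i ∈ I, U i * (if x i < x j then T i else 0))
          = U j * (M * (A * D) + Om)
            + ∑ i ∈ I, U j * (U i * (if x i < x j then T i else 0)) := by
        rw [mul_add, Finset.mul_sum]
      rw [h3] at h2
      exact h2
    have h4 : ∑ j ∈ I, U j * ((M:ℝ) * x j)
        ≤ ∑ j ∈ I, (U j * (M * (A * D) + Om)
          + ∑ i ∈ I, U j * (U i * (if x i < x j then T i else 0))) :=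
      Finset.sum_le_sum h1
    have h5 : ∑ j ∈ I, U j * ((M:ℝ) * x j) = (M:ℝ) * Om := by
      rw [← hOm, Finset.mul_sum]
      exact Finset.sum_congr rfl fun j _ => by ring
    have h6 : ∑ j ∈ I, (U j * (M * (A * D) + Om)
          + ∑ i ∈ I, U j * (U i * (if x i < x j then T i else 0)))
        = SU * (M * (A * D) + Om)
          + ∑ j ∈ I, ∑ i ∈ I, U j * (U i * (if x i < x j then T i else 0)) := by
      rw [Finset.sum_add_distrib, ← hSU, Finset.sum_mul]
    rw [h5, h6] at h4
    exact h4
  -- combine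
  have hMSU : 0 < (M:ℝ) - SU := by nlinarith
  have key1 : Om * ((M:ℝ) - SU) ≤ M * (A * D) * SU + D * SU * SU / 2 := by
    nlinarith [E2, hPP]
  have key2 : D * ((M:ℝ) - M * A - SU) < Om := by nlinarith [E1]
  have key3 : D * (((M:ℝ) - M * A - SU) * (M - SU)) < D * (M * A * SU + SU * SU / 2) := by
    calc D * (((M:ℝ) - M * A - SU) * (M - SU))
        = (D * ((M:ℝ) - M * A - SU)) * (M - SU) := by ring
      _ < Om * (M - SU) := mul_lt_mul_of_pos_right key2 hMSU
      _ ≤ M * (A * D) * SU + D * SU * SU / 2 := key1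
      _ = D * (M * A * SU + SU * SU / 2) := by ring
  have key4 : ((M:ℝ) - M * A - SU) * (M - SU) < M * A * SU + SU * SU / 2 :=
    (mul_lt_mul_iff_right₀ hD0).mp key3
  -- final contradiction
  have hprod : 0 ≤ ((M:ℝ) * (3 - Real.sqrt 7) - SU)
      * (4 * M - M * (3 - Real.sqrt 7) - SU) := by
    apply mul_nonneg
    · linarith
    · nlinarith
  nlinarith [key4, hprod, mul_nonneg (mul_nonneg hMpos.le hMpos.le)
    (sub_nonneg.mpr hAl), hApos, hSU0, hMpos]
end
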